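/- arXiv:2412.21017 — 12 statements merged into one kernel-verified Lean document; each statement's English description precedes it below -/
import Mathlib

section
/- Let b : ℤ → ℝ with b(y) ∈ [0,8) for every y ∈ ℤ, and let R = ⋃_{x,y ∈ ℤ} S_{x,y} be the union of all reference squares. Then for every point p = (p₁, p₂) ∈ ℝ², the 2-dimensional Lebesgue measure of ([p₁, p₁+8] × [p₂, p₂+8]) ∩ R equals 16. In particular, every axis-aligned closed square of side length 8, regardless of its position, intersects the reference-square pattern in area exactly 16. -/
open MeasureTheory

/-- The reference square `S_{x,y}` for offsets `b : ℤ → ℝ`. -/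
def refSq (b : ℤ → ℝ) (p : ℤ × ℤ) : Set (ℝ × ℝ) :=
  Set.Icc (8 * (p.1 : ℝ) + b p.2) (8 * (p.1 : ℝ) + b p.2 + 4) ×ˢ
    Set.Icc (8 * (p.2 : ℝ)) (8 * (p.2 : ℝ) + 4)

/-- Any interval of length 8 meets the 8-periodic union of length-4 intervals in measure 4. -/
lemma oneD (c a : ℝ) :
    volume (Set.Icc a (a+8) ∩ ⋃ x : ℤ, Set.Icc (8*(x:ℝ) + c) (8*(x:ℝ) + c + 4)) = 4 := by
  set n : ℤ := ⌊(a - c)/8⌋ with hn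
  have h1 : (8:ℝ)*n ≤ a - c := by
    have := Int.floor_le ((a-c)/8); rw [← hn] at this; linarith
  have h2 : a - c < 8*n + 8 := by
    have := Int.lt_floor_add_one ((a-c)/8); rw [← hn] at this; linarith
  have hset : Set.Icc a (a+8) ∩ ⋃ x : ℤ, Set.Icc (8*(x:ℝ) + c) (8*(x:ℝ) + c + 4)
      = (Set.Icc a (a+8) ∩ Set.Icc (8*(n:ℝ) + c) (8*(n:ℝ) + c + 4)) ∪
        (Set.Icc a (a+8) ∩ Set.Icc (8*(n:ℝ) + c + 8) (8*(n:ℝ) + c + 12)) := by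
    ext t
    simp only [Set.mem_inter_iff, Set.mem_iUnion, Set.mem_Icc, Set.mem_union]
    constructor
    · rintro ⟨⟨hta, htb⟩, x, hx1, hx2⟩
      have hxu : (x:ℝ) < n + 2 := by linarith
      have hxl : (n:ℝ) - 1 < x := by linarith
      have hxu' : x < n + 2 := by exact_mod_cast hxu
      have hxl' : n - 1 < x := by exact_mod_cast hxl
      have : x = n ∨ x = n + 1 := by omega
      rcases this with rfl | rfl
      · exact Or.inl ⟨⟨hta, htb⟩, hx1, hx2⟩
      · refine Or.inr ⟨⟨hta, htb⟩, ?_, ?_⟩ <;> push_cast at hx1 hx2 ⊢ <;> linarith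
    · rintro (⟨h, h1, h2⟩ | ⟨h, h1, h2⟩)
      · exact ⟨h, n, h1, h2⟩
      · exact ⟨h, n + 1, by push_cast; constructor <;> linarith⟩
  have hdisj : Disjoint (Set.Icc a (a+8) ∩ Set.Icc (8*(n:ℝ) + c) (8*(n:ℝ) + c + 4))
      (Set.Icc a (a+8) ∩ Set.Icc (8*(n:ℝ) + c + 8) (8*(n:ℝ) + c + 12)) := by
    apply Set.disjoint_left.mpr
    rintro t ⟨_, _, ht1⟩ ⟨_, ht2, _⟩
    linarith
  rw [hset, measure_union hdisj (measurableSet_Icc.inter measurableSet_Icc),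
    Set.Icc_inter_Icc, Set.Icc_inter_Icc, Real.volume_Icc, Real.volume_Icc]
  have hmax1 : a ⊔ (8*(n:ℝ) + c) = a := max_eq_left (by linarith)
  have hmin1 : (a+8) ⊓ (8*(n:ℝ) + c + 4) = 8*(n:ℝ) + c + 4 := min_eq_right (by linarith)
  have hmax2 : a ⊔ (8*(n:ℝ) + c + 8) = 8*(n:ℝ) + c + 8 := max_eq_right (by linarith)
  rw [hmax1, hmin1, hmax2]
  rcases le_or_gt (a - c - 8*n) 4 with hs | hs
  · have hmin2 : (a+8) ⊓ (8*(n:ℝ) + c + 12) = a + 8 := min_eq_left (by linarith)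
    rw [hmin2, ← ENNReal.ofReal_add (by linarith) (by linarith)]
    norm_num
  · have hmin2 : (a+8) ⊓ (8*(n:ℝ) + c + 12) = 8*(n:ℝ) + c + 12 := min_eq_right (by linarith)
    rw [hmin2, ENNReal.ofReal_of_nonpos (by linarith), zero_add]
    norm_num

theorem stmt_1 (b : ℤ → ℝ) (hb : ∀ y : ℤ, b y ∈ Set.Ico (0 : ℝ) 8) (p : ℝ × ℝ) :
    volume ((Set.Icc p.1 (p.1 + 8) ×ˢ Set.Icc p.2 (p.2 + 8)) ∩ ⋃ q : ℤ × ℤ, refSq b q) = 16 := by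
  obtain ⟨p₁, p₂⟩ := p
  have hset : (Set.Icc p₁ (p₁+8) ×ˢ Set.Icc p₂ (p₂+8)) ∩ ⋃ q : ℤ × ℤ, refSq b q
      = ⋃ y : ℤ, ((Set.Icc p₁ (p₁+8) ∩
            ⋃ x : ℤ, Set.Icc (8*(x:ℝ) + b y) (8*(x:ℝ) + b y + 4)) ×ˢ
          (Set.Icc p₂ (p₂+8) ∩ Set.Icc (8*(y:ℝ)) (8*(y:ℝ)+4))) := by
    ext ⟨t₁, t₂⟩
    simp only [refSq, Set.mem_inter_iff, Set.mem_iUnion, Set.mem_prod, Set.mem_Icc]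
    constructor
    · rintro ⟨⟨h1, h2⟩, ⟨x, y⟩, ⟨hx1, hx2⟩, hy⟩
      exact ⟨y, ⟨h1, x, hx1, hx2⟩, h2, hy⟩
    · rintro ⟨y, ⟨h1, x, hx⟩, h2, hy⟩
      exact ⟨⟨h1, h2⟩, ⟨x, y⟩, hx, hy⟩
  have hJdisj : Pairwise (Function.onFun Disjoint
      (fun y : ℤ => Set.Icc p₂ (p₂+8) ∩ Set.Icc (8*(y:ℝ)) (8*(y:ℝ)+4))) := by
    intro y y' hne
    apply Set.disjoint_left.mpr
    rintro t ⟨_, ht1, ht2⟩ ⟨_, ht1', ht2'⟩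
    rcases lt_or_gt_of_ne hne with h | h
    · have : (y:ℝ) + 1 ≤ y' := by exact_mod_cast h
      linarith
    · have : (y':ℝ) + 1 ≤ y := by exact_mod_cast h
      linarith
  have hdisj : Pairwise (Function.onFun Disjoint
      (fun y : ℤ => (Set.Icc p₁ (p₁+8) ∩
            ⋃ x : ℤ, Set.Icc (8*(x:ℝ) + b y) (8*(x:ℝ) + b y + 4)) ×ˢ
          (Set.Icc p₂ (p₂+8) ∩ Set.Icc (8*(y:ℝ)) (8*(y:ℝ)+4)))) := by
    intro y y' hne
    exact Set.disjoint_left.mpr (by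
      rintro ⟨t₁, t₂⟩ ht ht'
      exact Set.disjoint_left.mp (hJdisj hne) ht.2 ht'.2)
  have hUmeas : ∀ y : ℤ, MeasurableSet (Set.Icc p₁ (p₁+8) ∩
      ⋃ x : ℤ, Set.Icc (8*(x:ℝ) + b y) (8*(x:ℝ) + b y + 4)) :=
    fun y => measurableSet_Icc.inter (MeasurableSet.iUnion fun _ => measurableSet_Icc)
  have hmeas : ∀ y : ℤ, MeasurableSet ((Set.Icc p₁ (p₁+8) ∩
            ⋃ x : ℤ, Set.Icc (8*(x:ℝ) + b y) (8*(x:ℝ) + b y + 4)) ×ˢ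
          (Set.Icc p₂ (p₂+8) ∩ Set.Icc (8*(y:ℝ)) (8*(y:ℝ)+4))) :=
    fun y => (hUmeas y).prod (measurableSet_Icc.inter measurableSet_Icc)
  rw [hset, measure_iUnion hdisj hmeas]
  have hprod : ∑' y : ℤ, volume ((Set.Icc p₁ (p₁+8) ∩
            ⋃ x : ℤ, Set.Icc (8*(x:ℝ) + b y) (8*(x:ℝ) + b y + 4)) ×ˢ
          (Set.Icc p₂ (p₂+8) ∩ Set.Icc (8*(y:ℝ)) (8*(y:ℝ)+4)))
      = ∑' y : ℤ, 4 * volume (Set.Icc p₂ (p₂+8) ∩ Set.Icc (8*(y:ℝ)) (8*(y:ℝ)+4)) :=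
    tsum_congr fun y => by
      rw [MeasureTheory.Measure.volume_eq_prod, Measure.prod_prod, oneD (b y) p₁]
  rw [hprod, ENNReal.tsum_mul_left]
  have hsum : ∑' y : ℤ, volume (Set.Icc p₂ (p₂+8) ∩ Set.Icc (8*(y:ℝ)) (8*(y:ℝ)+4)) = 4 := by
    rw [← measure_iUnion hJdisj
      (fun y => measurableSet_Icc.inter measurableSet_Icc), ← Set.inter_iUnion]
    have := oneD 0 p₂
    simpa using this
  rw [hsum]
  norm_num
end

section
/- Let P ⊆ ℝ² have reference centers, and let S be an axis-aligned closed square of side length 8 with S ⊆ P. Then the 2-dimensional Lebesgue measure of the intersection of S with the union of the reference centers of P equals 16. -/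
open MeasureTheory

/-- `P` has reference centers: each reference square is contained in `P`
or its interior is disjoint from `P`. -/
def HasRefCenters (b : ℤ → ℝ) (P : Set (ℝ × ℝ)) : Prop :=
  ∀ p : ℤ × ℤ, refSq b p ⊆ P ∨ interior (refSq b p) ∩ P = ∅

/-- An axis-aligned closed square of side length `8` with lower-left corner `a`. -/
def sq8 (a : ℝ × ℝ) : Set (ℝ × ℝ) :=
  Set.Icc a.1 (a.1 + 8) ×ˢ Set.Icc a.2 (a.2 + 8)

lemma interRect (b : ℤ → ℝ) (a : ℝ × ℝ) (p : ℤ × ℤ) :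
    sq8 a ∩ refSq b p =
      Set.Icc (max a.1 (8 * (p.1 : ℝ) + b p.2)) (min (a.1 + 8) (8 * (p.1 : ℝ) + b p.2 + 4)) ×ˢ
      Set.Icc (max a.2 (8 * (p.2 : ℝ))) (min (a.2 + 8) (8 * (p.2 : ℝ) + 4)) := by
  rw [sq8, refSq, Set.prod_inter_prod, Set.Icc_inter_Icc, Set.Icc_inter_Icc]

lemma volInter (b : ℤ → ℝ) (a : ℝ × ℝ) (p : ℤ × ℤ) :
    volume (sq8 a ∩ refSq b p) =
      ENNReal.ofReal (min (a.1 + 8) (8 * (p.1 : ℝ) + b p.2 + 4) - max a.1 (8 * (p.1 : ℝ) + b p.2)) *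
      ENNReal.ofReal (min (a.2 + 8) (8 * (p.2 : ℝ) + 4) - max a.2 (8 * (p.2 : ℝ))) := by
  rw [interRect, Measure.volume_eq_prod _ _, Measure.prod_prod, Real.volume_Icc, Real.volume_Icc]

lemma volInter' (b : ℤ → ℝ) (a : ℝ × ℝ) (x y : ℤ) :
    volume (sq8 a ∩ refSq b (x, y)) =
      ENNReal.ofReal (min (a.1 + 8) (8 * (x : ℝ) + b y + 4) - max a.1 (8 * (x : ℝ) + b y)) *
      ENNReal.ofReal (min (a.2 + 8) (8 * (y : ℝ) + 4) - max a.2 (8 * (y : ℝ))) := by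
  simpa using volInter b a (x, y)

lemma lenNonpos {c d : ℝ} (h : d + 4 ≤ c ∨ c + 8 ≤ d) :
    min (c + 8) (d + 4) - max c d ≤ 0 := by
  rcases h with h | h
  · have h1 := le_max_left c d; have h2 := min_le_right (c + 8) (d + 4); linarith
  · have h1 := le_max_right c d; have h2 := min_le_left (c + 8) (d + 4); linarith

lemma pairSum {c d : ℝ} (h1 : d ≤ c) (h2 : c < d + 8) :
    ENNReal.ofReal (min (c + 8) (d + 4) - max c d)
      + ENNReal.ofReal (min (c + 8) (d + 8 + 4) - max c (d + 8)) = ENNReal.ofReal 4 := by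
  rw [max_eq_left h1, max_eq_right h2.le, min_eq_right (by linarith : d + 4 ≤ c + 8)]
  rcases le_or_gt c (d + 4) with h | h
  · rw [min_eq_left (by linarith : c + 8 ≤ d + 8 + 4),
      ← ENNReal.ofReal_add (by linarith) (by linarith)]
    norm_num
  · rw [min_eq_right (by linarith : d + 8 + 4 ≤ c + 8),
      ENNReal.ofReal_eq_zero.mpr (by linarith : d + 4 - c ≤ 0), zero_add]
    norm_num

lemma badInt {c : ℝ} {q y : ℤ} (h1 : 8 * (q : ℝ) ≤ c) (h2 : c < 8 * q + 8)
    (hy : y ≠ q) (hy' : y ≠ q + 1) : 8 * (y : ℝ) + 4 ≤ c ∨ c + 8 ≤ 8 * (y : ℝ) := by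
  rcases lt_or_ge y q with h | h
  · left
    have : (y : ℝ) ≤ (q : ℝ) - 1 := by exact_mod_cast Int.le_sub_one_of_lt h
    linarith
  · right
    have hq2 : q + 2 ≤ y := by omega
    have : (q : ℝ) + 2 ≤ (y : ℝ) := by exact_mod_cast hq2
    linarith

lemma floorBounds (c : ℝ) : 8 * ((⌊c / 8⌋ : ℤ) : ℝ) ≤ c ∧ c < 8 * (⌊c / 8⌋ : ℤ) + 8 := by
  constructor
  · have := Int.floor_le (c / 8); linarith
  · have := Int.lt_floor_add_one (c / 8); linarith

lemma refDisjX (b : ℤ → ℝ) {x x' y y' : ℤ} (h : x < x') (hy : y = y') :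
    Disjoint (refSq b (x, y)) (refSq b (x', y')) := by
  rw [Set.disjoint_left]
  rintro z hz1 hz2
  subst hy
  simp only [refSq, Set.mem_prod, Set.mem_Icc] at hz1 hz2
  have hx : (x : ℝ) + 1 ≤ (x' : ℝ) := by exact_mod_cast h
  have h1 := hz1.1.2
  have h2 := hz2.1.1
  linarith

lemma refDisjY (b : ℤ → ℝ) {x x' y y' : ℤ} (h : y < y') :
    Disjoint (refSq b (x, y)) (refSq b (x', y')) := by
  rw [Set.disjoint_left]
  rintro z hz1 hz2
  simp only [refSq, Set.mem_prod, Set.mem_Icc] at hz1 hz2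
  have hy : (y : ℝ) + 1 ≤ (y' : ℝ) := by exact_mod_cast h
  have h1 := hz1.2.2
  have h2 := hz2.2.1
  linarith

theorem stmt_2 (b : ℤ → ℝ) (hb : ∀ y : ℤ, b y ∈ Set.Ico (0 : ℝ) 8) (P : Set (ℝ × ℝ))
    (hP : HasRefCenters b P) (a : ℝ × ℝ) (hS : sq8 a ⊆ P) :
    volume (sq8 a ∩ ⋃ p ∈ {p : ℤ × ℤ | refSq b p ⊆ P}, refSq b p) = 16 := by
  obtain ⟨hq1, hq2⟩ := floorBounds a.2
  set y0 : ℤ := ⌊a.2 / 8⌋ with hy0def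
  set X : ℤ → ℤ := fun y => ⌊(a.1 - b y) / 8⌋ with hXdef
  have hX1 : ∀ y : ℤ, 8 * (X y : ℝ) + b y ≤ a.1 := by
    intro y
    have h := (floorBounds (a.1 - b y)).1
    simp only [hXdef]
    linarith
  have hX2 : ∀ y : ℤ, a.1 < 8 * (X y : ℝ) + b y + 8 := by
    intro y
    have h := (floorBounds (a.1 - b y)).2
    simp only [hXdef]
    linarith
  set p1 : ℤ × ℤ := (X y0, y0) with hp1
  set p2 : ℤ × ℤ := (X y0 + 1, y0) with hp2
  set p3 : ℤ × ℤ := (X (y0 + 1), y0 + 1) with hp3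
  set p4 : ℤ × ℤ := (X (y0 + 1) + 1, y0 + 1) with hp4
  -- row sums
  have rowSum : ∀ y : ℤ,
      ENNReal.ofReal (min (a.1 + 8) (8 * ((X y : ℤ) : ℝ) + b y + 4) - max a.1 (8 * (X y : ℝ) + b y))
      + ENNReal.ofReal (min (a.1 + 8) (8 * ((X y + 1 : ℤ) : ℝ) + b y + 4)
          - max a.1 (8 * ((X y + 1 : ℤ) : ℝ) + b y)) = ENNReal.ofReal 4 := by
    intro y
    have e1 : 8 * ((X y + 1 : ℤ) : ℝ) + b y = 8 * (X y : ℝ) + b y + 8 := by push_cast; ring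
    rw [e1]
    exact pairSum (hX1 y) (hX2 y)
  have colSum :
      ENNReal.ofReal (min (a.2 + 8) (8 * (y0 : ℝ) + 4) - max a.2 (8 * (y0 : ℝ)))
      + ENNReal.ofReal (min (a.2 + 8) (8 * ((y0 + 1 : ℤ) : ℝ) + 4)
          - max a.2 (8 * ((y0 + 1 : ℤ) : ℝ))) = ENNReal.ofReal 4 := by
    have e1 : 8 * ((y0 + 1 : ℤ) : ℝ) = 8 * (y0 : ℝ) + 8 := by push_cast; ring
    rw [e1]
    exact pairSum hq1 hq2
  have hsum : volume (sq8 a ∩ refSq b p1) + volume (sq8 a ∩ refSq b p2)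
      + volume (sq8 a ∩ refSq b p3) + volume (sq8 a ∩ refSq b p4) = 16 := by
    have grouping :
        ∀ A B C D E F : ENNReal, A * E + B * E + C * F + D * F = (A + B) * E + (C + D) * F := by
      intro A B C D E F; ring
    rw [hp1, hp2, hp3, hp4, volInter', volInter', volInter', volInter']
    rw [grouping, rowSum y0, rowSum (y0 + 1), ← mul_add, colSum,
      ← ENNReal.ofReal_mul (by norm_num : (0:ℝ) ≤ 4)]
    norm_num
  -- squares other than p1..p4 meet sq8 a in a null set
  have badVol : ∀ p : ℤ × ℤ, p ≠ p1 → p ≠ p2 → p ≠ p3 → p ≠ p4 →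
      volume (sq8 a ∩ refSq b p) = 0 := by
    intro p h1 h2 h3 h4
    rw [volInter]
    by_cases hy : p.2 = y0 ∨ p.2 = y0 + 1
    · -- bad x
      have hx1 : p.1 ≠ X p.2 := by
        intro hx
        rcases hy with hy | hy
        · exact h1 (Prod.ext_iff.mpr ⟨by rw [hx, hy], hy⟩)
        · exact h3 (Prod.ext_iff.mpr ⟨by rw [hx, hy], hy⟩)
      have hx2 : p.1 ≠ X p.2 + 1 := by
        intro hx
        rcases hy with hy | hy
        · exact h2 (Prod.ext_iff.mpr ⟨by rw [hx, hy], hy⟩)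
        · exact h4 (Prod.ext_iff.mpr ⟨by rw [hx, hy], hy⟩)
      have hbad := badInt (c := a.1 - b p.2) (q := X p.2) (y := p.1)
        (by have := hX1 p.2; linarith) (by have := hX2 p.2; linarith) hx1 hx2
      have hlen : min (a.1 + 8) (8 * (p.1 : ℝ) + b p.2 + 4) -
          max a.1 (8 * (p.1 : ℝ) + b p.2) ≤ 0 := by
        apply lenNonpos
        rcases hbad with h | h
        · left; linarith
        · right; linarith
      rw [ENNReal.ofReal_eq_zero.mpr hlen, zero_mul]
    · push_neg at hy
      have hbad := badInt (c := a.2) (q := y0) (y := p.2) hq1 hq2 hy.1 hy.2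
      have hlen : min (a.2 + 8) (8 * (p.2 : ℝ) + 4) - max a.2 (8 * (p.2 : ℝ)) ≤ 0 := by
        apply lenNonpos
        rcases hbad with h | h
        · left; linarith
        · right; linarith
      rw [ENNReal.ofReal_eq_zero.mpr hlen, mul_zero]
  -- a square either meets sq8 a in a null set or is a reference center
  have centerOrNull : ∀ p : ℤ × ℤ, volume (sq8 a ∩ refSq b p) = 0 ∨ refSq b p ⊆ P := by
    intro p
    rcases hP p with h | h
    · exact Or.inr h
    left
    rw [volInter]
    by_contra hne
    set lo1 := max a.1 (8 * (p.1 : ℝ) + b p.2) with hlo1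
    set hi1 := min (a.1 + 8) (8 * (p.1 : ℝ) + b p.2 + 4) with hhi1
    set lo2 := max a.2 (8 * (p.2 : ℝ)) with hlo2
    set hi2 := min (a.2 + 8) (8 * (p.2 : ℝ) + 4) with hhi2
    rcases mul_ne_zero_iff.mp hne with ⟨hne1, hne2⟩
    have hH : lo1 < hi1 := by
      by_contra hle
      exact hne1 (ENNReal.ofReal_eq_zero.mpr (by push_neg at hle; linarith))
    have hV : lo2 < hi2 := by
      by_contra hle
      exact hne2 (ENNReal.ofReal_eq_zero.mpr (by push_neg at hle; linarith))
    set m : ℝ × ℝ := ((lo1 + hi1) / 2, (lo2 + hi2) / 2) with hm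
    have hma : a.1 ≤ lo1 := le_max_left _ _
    have hmb : hi1 ≤ a.1 + 8 := min_le_left _ _
    have hmc : 8 * (p.1 : ℝ) + b p.2 ≤ lo1 := le_max_right _ _
    have hmd : hi1 ≤ 8 * (p.1 : ℝ) + b p.2 + 4 := min_le_right _ _
    have hma' : a.2 ≤ lo2 := le_max_left _ _
    have hmb' : hi2 ≤ a.2 + 8 := min_le_left _ _
    have hmc' : 8 * (p.2 : ℝ) ≤ lo2 := le_max_right _ _
    have hmd' : hi2 ≤ 8 * (p.2 : ℝ) + 4 := min_le_right _ _
    have hmint : m ∈ interior (refSq b p) := by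
      rw [refSq, interior_prod_eq, interior_Icc, interior_Icc]
      constructor
      · simp only [hm, Set.mem_Ioo]; exact ⟨by linarith, by linarith⟩
      · simp only [hm, Set.mem_Ioo]; exact ⟨by linarith, by linarith⟩
    have hmP : m ∈ P := by
      apply hS
      rw [sq8]
      constructor
      · simp only [hm, Set.mem_Icc]; exact ⟨by linarith, by linarith⟩
      · simp only [hm, Set.mem_Icc]; exact ⟨by linarith, by linarith⟩
    have : m ∈ interior (refSq b p) ∩ P := ⟨hmint, hmP⟩
    rw [h] at this
    exact this
  -- upper bound
  have hN : volume (⋃ p ∈ {p : ℤ × ℤ | p ≠ p1 ∧ p ≠ p2 ∧ p ≠ p3 ∧ p ≠ p4},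
      sq8 a ∩ refSq b p) = 0 := by
    rw [measure_biUnion_null_iff (Set.to_countable _)]
    rintro p ⟨h1, h2, h3, h4⟩
    exact badVol p h1 h2 h3 h4
  have hcover : sq8 a ∩ ⋃ p ∈ {p : ℤ × ℤ | refSq b p ⊆ P}, refSq b p ⊆
      (sq8 a ∩ refSq b p1 ∪ sq8 a ∩ refSq b p2 ∪ sq8 a ∩ refSq b p3 ∪ sq8 a ∩ refSq b p4) ∪
      ⋃ p ∈ {p : ℤ × ℤ | p ≠ p1 ∧ p ≠ p2 ∧ p ≠ p3 ∧ p ≠ p4}, sq8 a ∩ refSq b p := by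
    rintro z ⟨hz1, hz2⟩
    simp only [Set.mem_iUnion, Set.mem_setOf_eq] at hz2
    obtain ⟨p, _, hzp⟩ := hz2
    by_cases e1 : p = p1
    · exact Or.inl (Or.inl (Or.inl (Or.inl ⟨hz1, e1 ▸ hzp⟩)))
    by_cases e2 : p = p2
    · exact Or.inl (Or.inl (Or.inl (Or.inr ⟨hz1, e2 ▸ hzp⟩)))
    by_cases e3 : p = p3
    · exact Or.inl (Or.inl (Or.inr ⟨hz1, e3 ▸ hzp⟩))
    by_cases e4 : p = p4
    · exact Or.inl (Or.inr ⟨hz1, e4 ▸ hzp⟩)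
    · right
      simp only [Set.mem_iUnion, Set.mem_setOf_eq]
      exact ⟨p, ⟨e1, e2, e3, e4⟩, hz1, hzp⟩
  have upper : volume (sq8 a ∩ ⋃ p ∈ {p : ℤ × ℤ | refSq b p ⊆ P}, refSq b p) ≤ 16 := by
    calc volume (sq8 a ∩ ⋃ p ∈ {p : ℤ × ℤ | refSq b p ⊆ P}, refSq b p)
        ≤ volume ((sq8 a ∩ refSq b p1 ∪ sq8 a ∩ refSq b p2 ∪ sq8 a ∩ refSq b p3 ∪
            sq8 a ∩ refSq b p4) ∪
            ⋃ p ∈ {p : ℤ × ℤ | p ≠ p1 ∧ p ≠ p2 ∧ p ≠ p3 ∧ p ≠ p4}, sq8 a ∩ refSq b p) :=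
          measure_mono hcover
      _ ≤ volume (sq8 a ∩ refSq b p1 ∪ sq8 a ∩ refSq b p2 ∪ sq8 a ∩ refSq b p3 ∪
            sq8 a ∩ refSq b p4) +
            volume (⋃ p ∈ {p : ℤ × ℤ | p ≠ p1 ∧ p ≠ p2 ∧ p ≠ p3 ∧ p ≠ p4},
              sq8 a ∩ refSq b p) := measure_union_le _ _
      _ = volume (sq8 a ∩ refSq b p1 ∪ sq8 a ∩ refSq b p2 ∪ sq8 a ∩ refSq b p3 ∪
            sq8 a ∩ refSq b p4) := by rw [hN, add_zero]
      _ ≤ volume (sq8 a ∩ refSq b p1 ∪ sq8 a ∩ refSq b p2 ∪ sq8 a ∩ refSq b p3) +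
            volume (sq8 a ∩ refSq b p4) := measure_union_le _ _
      _ ≤ (volume (sq8 a ∩ refSq b p1 ∪ sq8 a ∩ refSq b p2) +
            volume (sq8 a ∩ refSq b p3)) + volume (sq8 a ∩ refSq b p4) := by
          gcongr; exact measure_union_le _ _
      _ ≤ ((volume (sq8 a ∩ refSq b p1) + volume (sq8 a ∩ refSq b p2)) +
            volume (sq8 a ∩ refSq b p3)) + volume (sq8 a ∩ refSq b p4) := by
          gcongr; exact measure_union_le _ _
      _ = 16 := hsum
  -- lower bound
  have key : ∀ p : ℤ × ℤ, ∃ T : Set (ℝ × ℝ),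
      T ⊆ sq8 a ∩ ⋃ q ∈ {q : ℤ × ℤ | refSq b q ⊆ P}, refSq b q ∧
      T ⊆ sq8 a ∩ refSq b p ∧ MeasurableSet T ∧ volume T = volume (sq8 a ∩ refSq b p) := by
    intro p
    rcases centerOrNull p with h0 | hc
    · exact ⟨∅, Set.empty_subset _, Set.empty_subset _, MeasurableSet.empty,
        by rw [h0, measure_empty]⟩
    · refine ⟨sq8 a ∩ refSq b p, ?_, subset_rfl, ?_, rfl⟩
      · rintro z ⟨hz1, hz2⟩
        refine ⟨hz1, ?_⟩
        simp only [Set.mem_iUnion, Set.mem_setOf_eq]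
        exact ⟨p, hc, hz2⟩
      · rw [interRect]
        exact (measurableSet_Icc.prod measurableSet_Icc)
  obtain ⟨T1, hT1s, hT1r, hT1m, hT1v⟩ := key p1
  obtain ⟨T2, hT2s, hT2r, hT2m, hT2v⟩ := key p2
  obtain ⟨T3, hT3s, hT3r, hT3m, hT3v⟩ := key p3
  obtain ⟨T4, hT4s, hT4r, hT4m, hT4v⟩ := key p4
  have hd12 : Disjoint T1 T2 :=
    Disjoint.mono (hT1r.trans Set.inter_subset_right) (hT2r.trans Set.inter_subset_right)
      (refDisjX b (by omega) rfl)
  have hd13 : Disjoint T1 T3 :=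
    Disjoint.mono (hT1r.trans Set.inter_subset_right) (hT3r.trans Set.inter_subset_right)
      (refDisjY b (by omega))
  have hd14 : Disjoint T1 T4 :=
    Disjoint.mono (hT1r.trans Set.inter_subset_right) (hT4r.trans Set.inter_subset_right)
      (refDisjY b (by omega))
  have hd23 : Disjoint T2 T3 :=
    Disjoint.mono (hT2r.trans Set.inter_subset_right) (hT3r.trans Set.inter_subset_right)
      (refDisjY b (by omega))
  have hd24 : Disjoint T2 T4 :=
    Disjoint.mono (hT2r.trans Set.inter_subset_right) (hT4r.trans Set.inter_subset_right)
      (refDisjY b (by omega))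
  have hd34 : Disjoint T3 T4 :=
    Disjoint.mono (hT3r.trans Set.inter_subset_right) (hT4r.trans Set.inter_subset_right)
      (refDisjX b (by omega) rfl)
  have hvolU : volume (T1 ∪ T2 ∪ T3 ∪ T4) = 16 := by
    rw [measure_union (Disjoint.union_left (Disjoint.union_left hd14 hd24) hd34) hT4m,
      measure_union (Disjoint.union_left hd13 hd23) hT3m,
      measure_union hd12 hT2m, hT1v, hT2v, hT3v, hT4v]
    exact hsum
  have lower : (16 : ENNReal) ≤
      volume (sq8 a ∩ ⋃ p ∈ {p : ℤ × ℤ | refSq b p ⊆ P}, refSq b p) := by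
    rw [← hvolU]
    apply measure_mono
    intro z hz
    rcases hz with (((h | h) | h) | h)
    · exact hT1s h
    · exact hT2s h
    · exact hT3s h
    · exact hT4s h
  exact le_antisymm upper lower
end

section
/- Let P ⊆ ℝ² have reference centers with exactly k of them (k finite), and consider a perfect configuration of k axis-aligned 8×8 squares in P. Then every square of the configuration contains exactly one reference center of P, and its interior is disjoint from the interiors of all other reference centers of P. -/
open MeasureTheory

/-- The index set of reference centers of `P`. -/
def refCenters (b : ℤ → ℝ) (P : Set (ℝ × ℝ)) : Set (ℤ × ℤ) :=
  {p : ℤ × ℤ | refSq b p ⊆ P}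

/-- A configuration of `k` axis-aligned `8 × 8` squares in `P`: all squares are
contained in `P` and have pairwise disjoint interiors. -/
def IsConfig {k : ℕ} (P : Set (ℝ × ℝ)) (c : Fin k → ℝ × ℝ) : Prop :=
  (∀ i, sq8 (c i) ⊆ P) ∧
    ∀ i j, i ≠ j → interior (sq8 (c i)) ∩ interior (sq8 (c j)) = ∅

namespace Stmt3Aux

open Set

/-- Midpoint of a reference square. -/
def mid (b : ℤ → ℝ) (p : ℤ × ℤ) : ℝ × ℝ :=
  (8 * (p.1 : ℝ) + b p.2 + 2, 8 * (p.2 : ℝ) + 2)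

/-- `z` lies in the half-open square with lower-left corner `a`. -/
def Ho (a z : ℝ × ℝ) : Prop :=
  a.1 ≤ z.1 ∧ z.1 < a.1 + 8 ∧ a.2 ≤ z.2 ∧ z.2 < a.2 + 8

lemma vol_prod (s t : Set ℝ) : (volume : Measure (ℝ × ℝ)) (s ×ˢ t) = volume s * volume t := by
  rw [MeasureTheory.Measure.volume_eq_prod, Measure.prod_prod]

lemma mid_fst (b : ℤ → ℝ) (p : ℤ × ℤ) : (mid b p).1 = 8 * (p.1 : ℝ) + b p.2 + 2 := rfl
lemma mid_snd (b : ℤ → ℝ) (p : ℤ × ℤ) : (mid b p).2 = 8 * (p.2 : ℝ) + 2 := rfl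

lemma interior_refSq (b : ℤ → ℝ) (p : ℤ × ℤ) :
    interior (refSq b p) =
      Ioo (8 * (p.1 : ℝ) + b p.2) (8 * (p.1 : ℝ) + b p.2 + 4) ×ˢ
        Ioo (8 * (p.2 : ℝ)) (8 * (p.2 : ℝ) + 4) := by
  rw [refSq, interior_prod_eq, interior_Icc, interior_Icc]

lemma interior_sq8 (a : ℝ × ℝ) :
    interior (sq8 a) = Ioo a.1 (a.1 + 8) ×ˢ Ioo a.2 (a.2 + 8) := by
  rw [sq8, interior_prod_eq, interior_Icc, interior_Icc]

lemma sq8_frontier_null (a : ℝ × ℝ) : volume (sq8 a \ interior (sq8 a)) = 0 := by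
  have h1 : sq8 a \ interior (sq8 a) ⊆
      (({a.1, a.1+8} : Set ℝ) ×ˢ Icc a.2 (a.2+8)) ∪ (Icc a.1 (a.1+8) ×ˢ ({a.2, a.2+8} : Set ℝ)) := by
    rw [sq8, interior_prod_eq, interior_Icc, interior_Icc]
    rintro ⟨z1, z2⟩ ⟨⟨hz1, hz2⟩, hz⟩
    simp only [mem_prod, mem_Ioo, not_and_or, not_and, not_lt] at hz
    simp only [mem_union, mem_prod, mem_insert_iff, mem_singleton_iff, mem_Icc] at *
    rcases hz with (h | h) | (h | h)
    · exact Or.inl ⟨Or.inl (le_antisymm h hz1.1), hz2⟩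
    · exact Or.inl ⟨Or.inr (le_antisymm hz1.2 h), hz2⟩
    · exact Or.inr ⟨hz1, Or.inl (le_antisymm h hz2.1)⟩
    · exact Or.inr ⟨hz1, Or.inr (le_antisymm hz2.2 h)⟩
  refine measure_mono_null h1 (measure_union_null ?_ ?_) <;> rw [vol_prod] <;>
    simp [(Set.to_countable _).measure_zero volume]

lemma exists_pat (u t : ℝ) : ∃ n : ℤ, u ≤ 8 * n + t ∧ 8 * n + t < u + 8 := by
  refine ⟨⌈(u - t) / 8⌉, ?_, ?_⟩
  · have := Int.le_ceil ((u - t) / 8); nlinarith [this]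
  · have := Int.ceil_lt_add_one ((u - t) / 8); nlinarith [this]

/-- every half-open 8×8 square contains a pattern midpoint -/
lemma ho_exists (b : ℤ → ℝ) (a : ℝ × ℝ) : ∃ p : ℤ × ℤ, Ho a (mid b p) := by
  obtain ⟨y, hy1, hy2⟩ := exists_pat (a.2 - 2) (0 : ℝ)
  obtain ⟨x, hx1, hx2⟩ := exists_pat (a.1 - 2) (b y)
  refine ⟨(x, y), ?_, ?_, ?_, ?_⟩ <;> simp only [Ho, mid_fst, mid_snd] <;> linarith

/-- uniqueness of the pattern midpoint in a half-open square -/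
lemma ho_unique (b : ℤ → ℝ) (a : ℝ × ℝ) {p q : ℤ × ℤ}
    (hp : Ho a (mid b p)) (hq : Ho a (mid b q)) : p = q := by
  obtain ⟨hp1, hp2, hp3, hp4⟩ := hp
  obtain ⟨hq1, hq2, hq3, hq4⟩ := hq
  simp only [mid_fst, mid_snd] at *
  have hy : p.2 = q.2 := by
    have h1 : (p.2 : ℝ) < (q.2 : ℝ) + 1 := by linarith
    have h2 : (q.2 : ℝ) < (p.2 : ℝ) + 1 := by linarith
    have h1' : p.2 < q.2 + 1 := by exact_mod_cast h1
    have h2' : q.2 < p.2 + 1 := by exact_mod_cast h2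
    omega
  have hbb : b p.2 = b q.2 := by rw [hy]
  have hx : p.1 = q.1 := by
    have h1 : (p.1 : ℝ) < (q.1 : ℝ) + 1 := by linarith
    have h2 : (q.1 : ℝ) < (p.1 : ℝ) + 1 := by linarith
    have h1' : p.1 < q.1 + 1 := by exact_mod_cast h1
    have h2' : q.1 < p.1 + 1 := by exact_mod_cast h2
    omega
  exact Prod.ext hx hy

lemma mid_mem_interior (b : ℤ → ℝ) (p : ℤ × ℤ) : mid b p ∈ interior (refSq b p) := by
  rw [interior_refSq]
  refine ⟨?_, ?_⟩ <;> simp only [mid_fst, mid_snd, mem_Ioo] <;> constructor <;> linarith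

lemma ho_mem_sq8 {a z : ℝ × ℝ} (h : Ho a z) : z ∈ sq8 a := by
  obtain ⟨h1, h2, h3, h4⟩ := h
  exact ⟨⟨h1, le_of_lt h2⟩, ⟨h3, le_of_lt h4⟩⟩

lemma center_of_mem {b : ℤ → ℝ} {P : Set (ℝ × ℝ)} (hP : HasRefCenters b P) {p : ℤ × ℤ}
    {z : ℝ × ℝ} (hz : z ∈ interior (refSq b p)) (hzP : z ∈ P) : p ∈ refCenters b P := by
  rcases hP p with h | h
  · exact h
  · exact absurd (Set.mem_inter hz hzP) (by rw [h]; exact notMem_empty z)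

lemma refSq_subset_sq8_iff {b : ℤ → ℝ} {p : ℤ × ℤ} {a : ℝ × ℝ} :
    refSq b p ⊆ sq8 a ↔
      a.1 ≤ 8 * (p.1 : ℝ) + b p.2 ∧ 8 * (p.1 : ℝ) + b p.2 + 4 ≤ a.1 + 8 ∧
        a.2 ≤ 8 * (p.2 : ℝ) ∧ 8 * (p.2 : ℝ) + 4 ≤ a.2 + 8 := by
  constructor
  · intro h
    have hA : ((8 * (p.1 : ℝ) + b p.2, 8 * (p.2 : ℝ)) : ℝ × ℝ) ∈ refSq b p :=
      by refine ⟨⟨?_, ?_⟩, ?_, ?_⟩ <;> dsimp only <;> linarith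
    have hB : ((8 * (p.1 : ℝ) + b p.2 + 4, 8 * (p.2 : ℝ) + 4) : ℝ × ℝ) ∈ refSq b p :=
      by refine ⟨⟨?_, ?_⟩, ?_, ?_⟩ <;> dsimp only <;> linarith
    have hA' := h hA
    have hB' := h hB
    exact ⟨hA'.1.1, hB'.1.2, hA'.2.1, hB'.2.2⟩
  · rintro ⟨h1, h2, h3, h4⟩ ⟨z1, z2⟩ ⟨⟨ha1, ha2⟩, ha3, ha4⟩
    exact ⟨⟨by dsimp at *; linarith, by dsimp at *; linarith⟩,
      by dsimp at *; linarith, by dsimp at *; linarith⟩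

/-- distinct half-open squares of the configuration are disjoint -/
lemma ho_disjoint {k : ℕ} {P : Set (ℝ × ℝ)} {c : Fin k → ℝ × ℝ} (hc : IsConfig P c)
    {i j : Fin k} (hij : i ≠ j) {z : ℝ × ℝ} (hi : Ho (c i) z) (hj : Ho (c j) z) : False := by
  obtain ⟨hi1, hi2, hi3, hi4⟩ := hi
  obtain ⟨hj1, hj2, hj3, hj4⟩ := hj
  set ε := min (min ((c i).1 + 8 - z.1) ((c i).2 + 8 - z.2))
      (min ((c j).1 + 8 - z.1) ((c j).2 + 8 - z.2)) with hεdef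
  have hε0 : 0 < ε := lt_min (lt_min (by linarith) (by linarith)) (lt_min (by linarith) (by linarith))
  have k1 : ε ≤ (c i).1 + 8 - z.1 := le_trans (min_le_left _ _) (min_le_left _ _)
  have k2 : ε ≤ (c i).2 + 8 - z.2 := le_trans (min_le_left _ _) (min_le_right _ _)
  have k3 : ε ≤ (c j).1 + 8 - z.1 := le_trans (min_le_right _ _) (min_le_left _ _)
  have k4 : ε ≤ (c j).2 + 8 - z.2 := le_trans (min_le_right _ _) (min_le_right _ _)
  have hwi : ((z.1 + ε / 2, z.2 + ε / 2) : ℝ × ℝ) ∈ interior (sq8 (c i)) := by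
    rw [interior_sq8]
    exact ⟨⟨by dsimp; linarith, by dsimp; linarith⟩, by dsimp; linarith, by dsimp; linarith⟩
  have hwj : ((z.1 + ε / 2, z.2 + ε / 2) : ℝ × ℝ) ∈ interior (sq8 (c j)) := by
    rw [interior_sq8]
    exact ⟨⟨by dsimp; linarith, by dsimp; linarith⟩, by dsimp; linarith, by dsimp; linarith⟩
  have := hc.2 i j hij
  exact absurd (Set.mem_inter hwi hwj) (by rw [this]; exact notMem_empty _)

/-- a square fully containing a reference square meets no other reference square's interior -/
lemma aligned_isolated {b : ℤ → ℝ} {p : ℤ × ℤ} {a : ℝ × ℝ} (h : refSq b p ⊆ sq8 a)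
    {q : ℤ × ℤ} (hq : q ≠ p) : interior (sq8 a) ∩ interior (refSq b q) = ∅ := by
  obtain ⟨h1, h2, h3, h4⟩ := refSq_subset_sq8_iff.mp h
  rw [eq_empty_iff_forall_notMem]
  rintro ⟨z1, z2⟩ ⟨hz1, hz2⟩
  rw [interior_sq8] at hz1
  rw [interior_refSq] at hz2
  obtain ⟨⟨ha1, ha2⟩, ha3, ha4⟩ := hz1
  obtain ⟨⟨hb1, hb2⟩, hb3, hb4⟩ := hz2
  dsimp at ha1 ha2 ha3 ha4 hb1 hb2 hb3 hb4
  rcases lt_trichotomy q.2 p.2 with hY | hY | hY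
  · have hcast : (q.2 : ℝ) + 1 ≤ (p.2 : ℝ) := by exact_mod_cast Int.add_one_le_iff.mpr hY
    linarith
  · have hbb : b q.2 = b p.2 := by rw [hY]
    rcases lt_trichotomy q.1 p.1 with hX | hX | hX
    · have hcast : (q.1 : ℝ) + 1 ≤ (p.1 : ℝ) := by exact_mod_cast Int.add_one_le_iff.mpr hX
      linarith
    · exact hq (Prod.ext hX hY)
    · have hcast : (p.1 : ℝ) + 1 ≤ (q.1 : ℝ) := by exact_mod_cast Int.add_one_le_iff.mpr hX
      linarith
  · have hcast : (p.2 : ℝ) + 1 ≤ (q.2 : ℝ) := by exact_mod_cast Int.add_one_le_iff.mpr hY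
    linarith

/-- 1D splitting of an 8-interval along the 4-in-8 pattern -/
lemma split1d (u t : ℝ) :
    ∃ (n₁ n₂ : ℤ) (s₁ e₁ s₂ e₂ : ℝ), s₁ ≤ e₁ ∧ e₁ ≤ s₂ ∧ s₂ ≤ e₂ ∧
      (e₁ - s₁) + (e₂ - s₂) = 4 ∧
      Ioo s₁ e₁ ⊆ Ioo u (u + 8) ∧ Ioo s₁ e₁ ⊆ Ioo (8 * n₁ + t) (8 * n₁ + t + 4) ∧
      Ioo s₂ e₂ ⊆ Ioo u (u + 8) ∧ Ioo s₂ e₂ ⊆ Ioo (8 * n₂ + t) (8 * n₂ + t + 4) := by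
  obtain ⟨n, hn1, hn2⟩ := exists_pat u t
  rcases le_or_gt (8 * (n : ℝ) + t) (u + 4) with hcase | hcase
  · refine ⟨n, n, 8 * n + t, 8 * n + t + 4, u + 8, u + 8, by linarith, by linarith, le_rfl,
      by ring, Ioo_subset_Ioo (by linarith) (by linarith), subset_rfl, ?_, ?_⟩
    · rw [Ioo_self]; exact empty_subset _
    · rw [Ioo_self]; exact empty_subset _
  · refine ⟨n - 1, n, u, 8 * n + t - 4, 8 * n + t, u + 8, by linarith, by linarith, by linarith,
      by ring, Ioo_subset_Ioo le_rfl (by linarith), ?_,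
      Ioo_subset_Ioo (by linarith) le_rfl, Ioo_subset_Ioo le_rfl (by linarith)⟩
    have hc : (((n - 1 : ℤ)) : ℝ) = (n : ℝ) - 1 := by push_cast; ring
    rw [hc]
    exact Ioo_subset_Ioo (by linarith) (by linarith)

lemma vol_refSq (b : ℤ → ℝ) (q : ℤ × ℤ) : volume (refSq b q) = 16 := by
  rw [refSq, vol_prod, Real.volume_Icc, Real.volume_Icc]
  have h1 : 8 * (q.1 : ℝ) + b q.2 + 4 - (8 * (q.1 : ℝ) + b q.2) = 4 := by ring
  have h2 : 8 * (q.2 : ℝ) + 4 - 8 * (q.2 : ℝ) = 4 := by ring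
  rw [h1, h2, ← ENNReal.ofReal_mul (by norm_num)]
  norm_num

section Main

variable {b : ℤ → ℝ} {P : Set (ℝ × ℝ)} {k : ℕ} {c : Fin k → ℝ × ℝ}

lemma box_sub (hP : HasRefCenters b P) (hc : IsConfig P c) (i : Fin k) (x y : ℤ)
    {s e sy ey : ℝ}
    (h1 : Ioo s e ⊆ Ioo (c i).1 ((c i).1 + 8))
    (h2 : Ioo s e ⊆ Ioo (8 * (x : ℝ) + b y) (8 * (x : ℝ) + b y + 4))
    (h3 : Ioo sy ey ⊆ Ioo (c i).2 ((c i).2 + 8))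
    (h4 : Ioo sy ey ⊆ Ioo (8 * (y : ℝ)) (8 * (y : ℝ) + 4)) :
    Ioo s e ×ˢ Ioo sy ey ⊆ (⋃ q ∈ refCenters b P, refSq b q) ∩ interior (sq8 (c i)) := by
  rintro ⟨z1, z2⟩ ⟨hz1, hz2⟩
  have hzi : (z1, z2) ∈ interior (sq8 (c i)) := by
    rw [interior_sq8]; exact ⟨h1 hz1, h3 hz2⟩
  have hzr : (z1, z2) ∈ interior (refSq b (x, y)) := by
    rw [interior_refSq]; exact ⟨h2 hz1, h4 hz2⟩
  have hcen : (x, y) ∈ refCenters b P := center_of_mem hP hzr (hc.1 i (interior_subset hzi))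
  exact ⟨mem_biUnion hcen (interior_subset hzr), hzi⟩

lemma sixteen_le (hP : HasRefCenters b P) (hc : IsConfig P c) (i : Fin k) :
    (16 : ENNReal) ≤ volume ((⋃ q ∈ refCenters b P, refSq b q) ∩ interior (sq8 (c i))) := by
  obtain ⟨y₁, y₂, sy₁, ey₁, sy₂, ey₂, hy1, hy2, hy3, hy4, hy5, hy6, hy7, hy8⟩ :=
    split1d (c i).2 0
  simp only [add_zero] at hy6 hy8
  obtain ⟨x₁₁, x₁₂, a₁₁, e₁₁, a₁₂, e₁₂, hA1, hA2, hA3, hA4, hA5, hA6, hA7, hA8⟩ :=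
    split1d (c i).1 (b y₁)
  obtain ⟨x₂₁, x₂₂, a₂₁, e₂₁, a₂₂, e₂₂, hB1, hB2, hB3, hB4, hB5, hB6, hB7, hB8⟩ :=
    split1d (c i).1 (b y₂)
  have hb11 := box_sub hP hc i x₁₁ y₁ hA5 hA6 hy5 hy6
  have hb12 := box_sub hP hc i x₁₂ y₁ hA7 hA8 hy5 hy6
  have hb21 := box_sub hP hc i x₂₁ y₂ hB5 hB6 hy7 hy8
  have hb22 := box_sub hP hc i x₂₂ y₂ hB7 hB8 hy7 hy8
  have hmeas : ∀ (s e sy ey : ℝ),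
      volume (Ioo s e ×ˢ Ioo sy ey) = ENNReal.ofReal (e - s) * ENNReal.ofReal (ey - sy) := by
    intro s e sy ey; rw [vol_prod, Real.volume_Ioo, Real.volume_Ioo]
  have hd1 : Disjoint (Ioo a₁₁ e₁₁ ×ˢ Ioo sy₁ ey₁) (Ioo a₁₂ e₁₂ ×ˢ Ioo sy₁ ey₁) := by
    rw [Set.disjoint_left]
    rintro z ⟨hz1, _⟩ ⟨hw1, _⟩
    rw [mem_Ioo] at hz1 hw1; linarith [hz1.2, hw1.1]
  have hd2 : Disjoint (Ioo a₂₁ e₂₁ ×ˢ Ioo sy₂ ey₂) (Ioo a₂₂ e₂₂ ×ˢ Ioo sy₂ ey₂) := by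
    rw [Set.disjoint_left]
    rintro z ⟨hz1, _⟩ ⟨hw1, _⟩
    rw [mem_Ioo] at hz1 hw1; linarith [hz1.2, hw1.1]
  have hdrow : Disjoint
      ((Ioo a₁₁ e₁₁ ×ˢ Ioo sy₁ ey₁) ∪ (Ioo a₁₂ e₁₂ ×ˢ Ioo sy₁ ey₁))
      ((Ioo a₂₁ e₂₁ ×ˢ Ioo sy₂ ey₂) ∪ (Ioo a₂₂ e₂₂ ×ˢ Ioo sy₂ ey₂)) := by
    rw [Set.disjoint_left]
    rintro z (⟨_, hz2⟩ | ⟨_, hz2⟩) (⟨_, hw2⟩ | ⟨_, hw2⟩) <;>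
      rw [mem_Ioo] at hz2 hw2 <;> linarith [hz2.2, hw2.1]
  have hmIoo : ∀ (s e sy ey : ℝ), MeasurableSet (Ioo s e ×ˢ Ioo sy ey) :=
    fun _ _ _ _ => measurableSet_Ioo.prod measurableSet_Ioo
  have hvol : volume (((Ioo a₁₁ e₁₁ ×ˢ Ioo sy₁ ey₁) ∪ (Ioo a₁₂ e₁₂ ×ˢ Ioo sy₁ ey₁)) ∪
      ((Ioo a₂₁ e₂₁ ×ˢ Ioo sy₂ ey₂) ∪ (Ioo a₂₂ e₂₂ ×ˢ Ioo sy₂ ey₂))) = 16 := by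
    rw [measure_union hdrow ((hmIoo _ _ _ _).union (hmIoo _ _ _ _)),
      measure_union hd1 (hmIoo _ _ _ _), measure_union hd2 (hmIoo _ _ _ _),
      hmeas, hmeas, hmeas, hmeas,
      ← ENNReal.ofReal_mul (by linarith), ← ENNReal.ofReal_mul (by linarith),
      ← ENNReal.ofReal_mul (by linarith), ← ENNReal.ofReal_mul (by linarith),
      ← ENNReal.ofReal_add (by nlinarith) (by nlinarith),
      ← ENNReal.ofReal_add (by nlinarith) (by nlinarith),
      ← ENNReal.ofReal_add (by nlinarith) (by nlinarith)]
    have hval : (e₁₁ - a₁₁) * (ey₁ - sy₁) + (e₁₂ - a₁₂) * (ey₁ - sy₁) +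
        ((e₂₁ - a₂₁) * (ey₂ - sy₂) + (e₂₂ - a₂₂) * (ey₂ - sy₂)) = 16 := by
      have e1 : (e₁₁ - a₁₁) + (e₁₂ - a₁₂) = 4 := hA4
      have e2 : (e₂₁ - a₂₁) + (e₂₂ - a₂₂) = 4 := hB4
      have e3 : (ey₁ - sy₁) + (ey₂ - sy₂) = 4 := hy4
      nlinarith [e1, e2, e3]
    rw [hval]; norm_num
  calc (16 : ENNReal)
      = volume (((Ioo a₁₁ e₁₁ ×ˢ Ioo sy₁ ey₁) ∪ (Ioo a₁₂ e₁₂ ×ˢ Ioo sy₁ ey₁)) ∪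
        ((Ioo a₂₁ e₂₁ ×ˢ Ioo sy₂ ey₂) ∪ (Ioo a₂₂ e₂₂ ×ˢ Ioo sy₂ ey₂))) := hvol.symm
    _ ≤ volume ((⋃ q ∈ refCenters b P, refSq b q) ∩ interior (sq8 (c i))) :=
        measure_mono (union_subset (union_subset hb11 hb12) (union_subset hb21 hb22))

/-- Key measure-theoretic lemma: every reference center is covered by the squares
of a perfect configuration. -/
lemma coverage (hP : HasRefCenters b P) (hfin : (refCenters b P).Finite)
    (hcard : (refCenters b P).ncard = k) (hc : IsConfig P c)
    {p : ℤ × ℤ} (hp : p ∈ refCenters b P) : refSq b p ⊆ ⋃ i, sq8 (c i) := by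
  classical
  set U : Set (ℝ × ℝ) := ⋃ q ∈ refCenters b P, refSq b q with hUdef
  set V : Set (ℝ × ℝ) := ⋃ i, sq8 (c i) with hVdef
  have hUm : MeasurableSet U :=
    hfin.measurableSet_biUnion (fun q _ => measurableSet_Icc.prod measurableSet_Icc)
  have hVm : MeasurableSet V :=
    MeasurableSet.iUnion (fun i => measurableSet_Icc.prod measurableSet_Icc)
  have hVc : IsClosed V := isClosed_iUnion_of_finite (fun i => isClosed_Icc.prod isClosed_Icc)
  have hUle : volume U ≤ 16 * k := by
    have hUeq : U = ⋃ q ∈ hfin.toFinset, refSq b q := by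
      ext z; simp only [hUdef, mem_iUnion, Set.Finite.mem_toFinset, exists_prop]
    calc volume U ≤ ∑ q ∈ hfin.toFinset, volume (refSq b q) := by
          rw [hUeq]; exact measure_biUnion_finset_le _ _
      _ = 16 * k := by
          simp only [vol_refSq, Finset.sum_const, nsmul_eq_mul]
          rw [← Set.ncard_eq_toFinset_card _ hfin, hcard, mul_comm]
  have hlow : (16 : ENNReal) * k ≤ volume (U ∩ V) := by
    have hdisj : Pairwise (Function.onFun Disjoint (fun i => U ∩ interior (sq8 (c i)))) := by
      intro i j hij
      have hij2 := hc.2 i j hij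
      rw [Function.onFun, Set.disjoint_iff_inter_eq_empty]
      apply Set.eq_empty_of_subset_empty
      intro z hz
      rw [← hij2]; exact ⟨hz.1.2, hz.2.2⟩
    have hiU : volume (⋃ i, U ∩ interior (sq8 (c i))) = ∑' i, volume (U ∩ interior (sq8 (c i))) :=
      measure_iUnion hdisj (fun i => hUm.inter isOpen_interior.measurableSet)
    calc (16 : ENNReal) * k = ∑ _i : Fin k, (16 : ENNReal) := by
          simp [Finset.sum_const, nsmul_eq_mul, mul_comm]
      _ ≤ ∑ i, volume (U ∩ interior (sq8 (c i))) :=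
          Finset.sum_le_sum (fun i _ => sixteen_le hP hc i)
      _ = ∑' i, volume (U ∩ interior (sq8 (c i))) := (tsum_fintype _).symm
      _ = volume (⋃ i, U ∩ interior (sq8 (c i))) := hiU.symm
      _ ≤ volume (U ∩ V) := by
          refine measure_mono ?_
          intro z hz
          obtain ⟨i, hzU, hzi⟩ := mem_iUnion.mp hz
          exact ⟨hzU, mem_iUnion.mpr ⟨i, interior_subset hzi⟩⟩
  have hnull : volume (U \ V) = 0 := by
    have h1 : volume (U ∩ V) + volume (U \ V) = volume U := measure_inter_add_diff U hVm
    have h2 : volume (U ∩ V) ≠ ⊤ := by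
      have hle : volume (U ∩ V) ≤ 16 * k :=
        le_trans (measure_mono (fun z hz => hz.1)) hUle
      exact ne_top_of_le_ne_top (ENNReal.mul_ne_top (by norm_num) (ENNReal.natCast_ne_top k)) hle
    have h3 : volume (U ∩ V) + volume (U \ V) ≤ volume (U ∩ V) + 0 := by
      rw [h1, add_zero]; exact le_trans hUle hlow
    simpa using (ENNReal.add_le_add_iff_left h2).mp h3
  intro z hz
  by_contra hzV
  obtain ⟨ε, hε0, hball⟩ := Metric.mem_nhds_iff.mp (hVc.isOpen_compl.mem_nhds hzV)
  have hzcl : z ∈ closure (interior (refSq b p)) := by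
    rw [interior_refSq, closure_prod_eq, closure_Ioo (ne_of_lt (by linarith)),
      closure_Ioo (ne_of_lt (by linarith))]
    exact hz
  obtain ⟨w, hw⟩ := mem_closure_iff.mp hzcl (Metric.ball z ε) Metric.isOpen_ball
    (Metric.mem_ball_self hε0)
  have hWsub : Metric.ball z ε ∩ interior (refSq b p) ⊆ U \ V := by
    rintro w' ⟨hw1, hw2⟩
    exact ⟨mem_biUnion hp (interior_subset hw2), fun hv => hball hw1 hv⟩
  have hpos : 0 < volume (Metric.ball z ε ∩ interior (refSq b p)) :=
    (Metric.isOpen_ball.inter isOpen_interior).measure_pos volume ⟨w, hw⟩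
  exact hpos.ne' (measure_mono_null hWsub hnull)

/-- every center's midpoint lies in some half-open square of the configuration -/
lemma ho_of_center (hP : HasRefCenters b P) (hfin : (refCenters b P).Finite)
    (hcard : (refCenters b P).ncard = k) (hc : IsConfig P c)
    {p : ℤ × ℤ} (hp : p ∈ refCenters b P) : ∃ j, Ho (c j) (mid b p) := by
  have hcov := coverage hP hfin hcard hc hp
  set m := mid b p with hm
  have hIoc : Ioc (0 : ℝ) 1 ⊆
      ⋃ j, {ε : ℝ | ε ∈ Ioc (0 : ℝ) 1 ∧ ((m.1 + ε, m.2 + ε) : ℝ × ℝ) ∈ sq8 (c j)} := by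
    intro ε hε
    rw [mem_Ioc] at hε
    have hmem : ((m.1 + ε, m.2 + ε) : ℝ × ℝ) ∈ refSq b p := by
      refine ⟨⟨?_, ?_⟩, ?_, ?_⟩ <;> dsimp only <;> rw [hm] <;>
        simp only [mid_fst, mid_snd] <;> linarith [hε.1, hε.2]
    obtain ⟨j, hj⟩ := mem_iUnion.mp (hcov hmem)
    exact mem_iUnion.mpr ⟨j, hε, hj⟩
  have hcl : (0 : ℝ) ∈ closure (Ioc (0 : ℝ) 1) := by
    rw [closure_Ioc (by norm_num : (0 : ℝ) ≠ 1)]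
    exact ⟨le_rfl, by norm_num⟩
  have hmem0 : (0 : ℝ) ∈
      ⋃ j, closure {ε : ℝ | ε ∈ Ioc (0 : ℝ) 1 ∧ ((m.1 + ε, m.2 + ε) : ℝ × ℝ) ∈ sq8 (c j)} := by
    refine closure_minimal (subset_trans hIoc (iUnion_mono fun j => subset_closure))
      (isClosed_iUnion_of_finite fun j => isClosed_closure) hcl
  obtain ⟨j, hj0⟩ := mem_iUnion.mp hmem0
  refine ⟨j, ?_⟩
  have hcont : Continuous (fun ε : ℝ => ((m.1 + ε, m.2 + ε) : ℝ × ℝ)) := by fun_prop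
  have hmemm : m ∈ sq8 (c j) := by
    have hsubset : {ε : ℝ | ε ∈ Ioc (0 : ℝ) 1 ∧ ((m.1 + ε, m.2 + ε) : ℝ × ℝ) ∈ sq8 (c j)} ⊆
        (fun ε : ℝ => ((m.1 + ε, m.2 + ε) : ℝ × ℝ)) ⁻¹' (sq8 (c j)) := fun ε hε => hε.2
    have hclosed : IsClosed ((fun ε : ℝ => ((m.1 + ε, m.2 + ε) : ℝ × ℝ)) ⁻¹' (sq8 (c j))) :=
      (isClosed_Icc.prod isClosed_Icc).preimage hcont
    have h0 : (0 : ℝ) ∈ (fun ε : ℝ => ((m.1 + ε, m.2 + ε) : ℝ × ℝ)) ⁻¹' (sq8 (c j)) :=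
      (IsClosed.closure_subset_iff hclosed).mpr hsubset hj0
    simpa using h0
  have hne : {ε : ℝ | ε ∈ Ioc (0 : ℝ) 1 ∧ ((m.1 + ε, m.2 + ε) : ℝ × ℝ) ∈ sq8 (c j)}.Nonempty := by
    rcases eq_empty_or_nonempty
      {ε : ℝ | ε ∈ Ioc (0 : ℝ) 1 ∧ ((m.1 + ε, m.2 + ε) : ℝ × ℝ) ∈ sq8 (c j)} with he | hne
    · rw [he, closure_empty] at hj0; exact absurd hj0 (notMem_empty _)
    · exact hne
  obtain ⟨ε, hε1, hε2⟩ := hne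
  rw [mem_Ioc] at hε1
  have g1 : (c j).1 ≤ m.1 := hmemm.1.1
  have g3 : (c j).2 ≤ m.2 := hmemm.2.1
  have g2 : m.1 + ε ≤ (c j).1 + 8 := hε2.1.2
  have g4 : m.2 + ε ≤ (c j).2 + 8 := hε2.2.2
  exact ⟨g1, by linarith [hε1.1], g3, by linarith [hε1.1]⟩

lemma exists_interior_pt (hc : IsConfig P c) {O : Set (ℝ × ℝ)} (hO : IsOpen O)
    (hne : O.Nonempty) (hsub : O ⊆ ⋃ i, sq8 (c i)) :
    ∃ j z, z ∈ O ∧ z ∈ interior (sq8 (c j)) := by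
  by_contra h
  push_neg at h
  have hz : ∀ j, volume (O ∩ sq8 (c j)) = 0 := by
    intro j
    refine measure_mono_null ?_ (sq8_frontier_null (c j))
    rintro z ⟨hz1, hz2⟩
    exact ⟨hz2, fun hint => h j z hz1 hint⟩
  have h0 : volume O = 0 := by
    refine measure_mono_null (fun z hzO => ?_) (measure_iUnion_null hz)
    obtain ⟨j, hj⟩ := mem_iUnion.mp (hsub hzO)
    exact mem_iUnion.mpr ⟨j, hzO, hj⟩
  exact (hO.measure_pos volume hne).ne' h0

lemma aligned_core (hP : HasRefCenters b P) (hfin : (refCenters b P).Finite)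
    (hcard : (refCenters b P).ncard = k) (hc : IsConfig P c)
    (p : ℤ × ℤ) (hp : p ∈ refCenters b P) (i : Fin k) (hHo : Ho (c i) (mid b p))
    (IH : ∀ r ∈ refCenters b P, (p.2 < r.2 ∨ (p.2 = r.2 ∧ p.1 < r.1)) →
      ∀ j, Ho (c j) (mid b r) → refSq b r ⊆ sq8 (c j)) :
    refSq b p ⊆ sq8 (c i) := by
  have hcov := coverage hP hfin hcard hc hp
  obtain ⟨h1, h2, h3, h4⟩ := hHo
  rw [mid_fst] at h1 h2
  rw [mid_snd] at h3 h4
  -- neighbour-center helper for the left/bottom cases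
  have hnbr : ∀ (r : ℤ × ℤ) (z : ℝ × ℝ), z ∈ interior (refSq b r) →
      z ∈ interior (sq8 (c i)) → (p.2 < r.2 ∨ (p.2 = r.2 ∧ p.1 < r.1)) →
      ¬(refSq b r ⊆ sq8 (c i)) → False := by
    intro r z hzr hzi hlex hnsub
    have hrC : r ∈ refCenters b P := center_of_mem hP hzr (hc.1 i (interior_subset hzi))
    obtain ⟨j, hj⟩ := ho_of_center hP hfin hcard hc hrC
    have hsubr := IH r hrC hlex j hj
    by_cases hji : j = i
    · exact hnsub (hji ▸ hsubr)
    · have hij : i ≠ j := fun h => hji h.symm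
      have hdisj := hc.2 i j hij
      exact absurd (Set.mem_inter hzi (interior_mono hsubr hzr))
        (by rw [hdisj]; exact notMem_empty _)
  -- bottom bound
  have hD : (c i).2 + 2 ≤ 8 * (p.2 : ℝ) + 2 := by
    by_contra hlt
    push_neg at hlt
    obtain ⟨x', hx1, hx2⟩ := exists_pat (c i).1 (b (p.2 + 1))
    set t := 8 * (x' : ℝ) + b (p.2 + 1) with ht
    have hm1 : t < min (t + 4) ((c i).1 + 8) := lt_min (by linarith) (by linarith)
    have hm2 : min (t + 4) ((c i).1 + 8) ≤ t + 4 := min_le_left _ _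
    have hm3 : min (t + 4) ((c i).1 + 8) ≤ (c i).1 + 8 := min_le_right _ _
    set z : ℝ × ℝ := ((t + min (t + 4) ((c i).1 + 8)) / 2,
      ((8 * (p.2 : ℝ) + 8) + ((c i).2 + 8)) / 2) with hzdef
    have hzr : z ∈ interior (refSq b (x', p.2 + 1)) := by
      rw [interior_refSq]
      refine ⟨⟨?_, ?_⟩, ?_, ?_⟩ <;> dsimp only [z] <;> push_cast <;> linarith
    have hzi : z ∈ interior (sq8 (c i)) := by
      rw [interior_sq8]
      refine ⟨⟨?_, ?_⟩, ?_, ?_⟩ <;> dsimp only [z] <;> linarith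
    refine hnbr (x', p.2 + 1) z hzr hzi (Or.inl (lt_add_one p.2)) (fun hsub => ?_)
    obtain ⟨_, _, _, hk4⟩ := refSq_subset_sq8_iff.mp hsub
    push_cast at hk4
    linarith
  -- left bound
  have hC : (c i).1 + 2 ≤ 8 * (p.1 : ℝ) + b p.2 + 2 := by
    by_contra hlt
    push_neg at hlt
    have hA1 : 8 * (p.2 : ℝ) ≤ max (8 * (p.2 : ℝ)) ((c i).2) := le_max_left _ _
    have hA2 : (c i).2 ≤ max (8 * (p.2 : ℝ)) ((c i).2) := le_max_right _ _
    have hB1 : min (8 * (p.2 : ℝ) + 4) ((c i).2 + 8) ≤ 8 * (p.2 : ℝ) + 4 := min_le_left _ _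
    have hB2 : min (8 * (p.2 : ℝ) + 4) ((c i).2 + 8) ≤ (c i).2 + 8 := min_le_right _ _
    have hab : max (8 * (p.2 : ℝ)) ((c i).2) < min (8 * (p.2 : ℝ) + 4) ((c i).2 + 8) :=
      max_lt (lt_min (by linarith) (by linarith)) (lt_min (by linarith) (by linarith))
    set z : ℝ × ℝ := (((8 * (p.1 : ℝ) + b p.2 + 8) + ((c i).1 + 8)) / 2,
      (max (8 * (p.2 : ℝ)) ((c i).2) + min (8 * (p.2 : ℝ) + 4) ((c i).2 + 8)) / 2) with hzdef
    have hzr : z ∈ interior (refSq b (p.1 + 1, p.2)) := by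
      rw [interior_refSq]
      refine ⟨⟨?_, ?_⟩, ?_, ?_⟩ <;> dsimp only [z] <;> push_cast <;> linarith
    have hzi : z ∈ interior (sq8 (c i)) := by
      rw [interior_sq8]
      refine ⟨⟨?_, ?_⟩, ?_, ?_⟩ <;> dsimp only [z] <;> linarith
    refine hnbr (p.1 + 1, p.2) z hzr hzi (Or.inr ⟨rfl, lt_add_one p.1⟩) (fun hsub => ?_)
    obtain ⟨_, hk2, _, _⟩ := refSq_subset_sq8_iff.mp hsub
    push_cast at hk2
    linarith
  -- top bound
  have hA : 8 * (p.2 : ℝ) + 4 ≤ (c i).2 + 8 := by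
    by_contra hlt
    push_neg at hlt
    set O : Set (ℝ × ℝ) := Ioo (8 * (p.1 : ℝ) + b p.2 + 2) (8 * (p.1 : ℝ) + b p.2 + 4) ×ˢ
      Ioo ((c i).2 + 8) (8 * (p.2 : ℝ) + 4) with hOdef
    have hOsub : O ⊆ interior (refSq b p) := by
      rw [interior_refSq]
      exact Set.prod_mono (Ioo_subset_Ioo (by linarith) le_rfl)
        (Ioo_subset_Ioo (by linarith) le_rfl)
    have hOopen : IsOpen O := isOpen_Ioo.prod isOpen_Ioo
    have hOne : O.Nonempty := by
      refine ⟨((8 * (p.1 : ℝ) + b p.2 + 2 + (8 * (p.1 : ℝ) + b p.2 + 4)) / 2,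
        ((c i).2 + 8 + (8 * (p.2 : ℝ) + 4)) / 2), ⟨?_, ?_⟩, ?_, ?_⟩ <;> dsimp only <;> linarith
    obtain ⟨j, z, hzO, hzint⟩ := exists_interior_pt hc hOopen hOne
      (subset_trans hOsub (subset_trans interior_subset hcov))
    have hji : j ≠ i := by
      intro h
      subst h
      rw [interior_sq8] at hzint
      obtain ⟨_, _, hzv⟩ := hzint
      obtain ⟨_, hzy⟩ := hzO
      rw [mem_Ioo] at hzy
      linarith [hzy.1]
    obtain ⟨r, hrHo⟩ := ho_exists b (c j)
    have hrC : r ∈ refCenters b P :=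
      center_of_mem hP (mid_mem_interior b r) (hc.1 j (ho_mem_sq8 hrHo))
    obtain ⟨hr1, hr2, hr3, hr4⟩ := hrHo
    rw [mid_fst] at hr1 hr2
    rw [mid_snd] at hr3 hr4
    obtain ⟨hzx, hzy⟩ := hzO
    rw [mem_Ioo] at hzx hzy
    have hzint' := hzint
    rw [interior_sq8] at hzint'
    obtain ⟨⟨hj1, hj2⟩, hj3, hj4⟩ := hzint'
    have hzp : z ∈ interior (refSq b p) := hOsub ⟨by rw [mem_Ioo]; exact hzx, by rw [mem_Ioo]; exact hzy⟩
    rcases lt_trichotomy p.2 r.2 with hY | hY | hY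
    · have hsubr := IH r hrC (Or.inl hY) j ⟨by rw [mid_fst]; exact hr1, by rw [mid_fst]; exact hr2,
        by rw [mid_snd]; exact hr3, by rw [mid_snd]; exact hr4⟩
      have hpr : p ≠ r := fun h => absurd (congrArg Prod.snd h) (ne_of_lt hY)
      exact absurd (Set.mem_inter hzint hzp)
        (by rw [aligned_isolated hsubr hpr]; exact notMem_empty _)
    · rcases lt_trichotomy p.1 r.1 with hX | hX | hX
      · have hsubr := IH r hrC (Or.inr ⟨hY, hX⟩) j ⟨by rw [mid_fst]; exact hr1,
          by rw [mid_fst]; exact hr2, by rw [mid_snd]; exact hr3, by rw [mid_snd]; exact hr4⟩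
        have hpr : p ≠ r := fun h => absurd (congrArg Prod.fst h) (ne_of_lt hX)
        exact absurd (Set.mem_inter hzint hzp)
          (by rw [aligned_isolated hsubr hpr]; exact notMem_empty _)
      · have hrp : r = p := Prod.ext hX.symm hY.symm
        subst hrp
        exact ho_disjoint hc (fun h : i = j => hji h.symm)
          ⟨by rw [mid_fst]; exact h1, by rw [mid_fst]; exact h2,
            by rw [mid_snd]; exact h3, by rw [mid_snd]; exact h4⟩
          ⟨by rw [mid_fst]; exact hr1, by rw [mid_fst]; exact hr2,
            by rw [mid_snd]; exact hr3, by rw [mid_snd]; exact hr4⟩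
      · have hcast : (r.1 : ℝ) + 1 ≤ (p.1 : ℝ) := by exact_mod_cast Int.add_one_le_iff.mpr hX
        have hbeq : b r.2 = b p.2 := by rw [hY]
        rw [hbeq] at hr1
        linarith
    · have hcast : (r.2 : ℝ) + 1 ≤ (p.2 : ℝ) := by exact_mod_cast Int.add_one_le_iff.mpr hY
      linarith
  -- right bound
  have hB : 8 * (p.1 : ℝ) + b p.2 + 4 ≤ (c i).1 + 8 := by
    by_contra hlt
    push_neg at hlt
    set O : Set (ℝ × ℝ) := Ioo ((c i).1 + 8) (8 * (p.1 : ℝ) + b p.2 + 4) ×ˢ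
      Ioo (8 * (p.2 : ℝ) + 2) (8 * (p.2 : ℝ) + 4) with hOdef
    have hOsub : O ⊆ interior (refSq b p) := by
      rw [interior_refSq]
      exact Set.prod_mono (Ioo_subset_Ioo (by linarith) le_rfl)
        (Ioo_subset_Ioo (by linarith) le_rfl)
    have hOopen : IsOpen O := isOpen_Ioo.prod isOpen_Ioo
    have hOne : O.Nonempty := by
      refine ⟨(((c i).1 + 8 + (8 * (p.1 : ℝ) + b p.2 + 4)) / 2,
        (8 * (p.2 : ℝ) + 2 + (8 * (p.2 : ℝ) + 4)) / 2), ⟨?_, ?_⟩, ?_, ?_⟩ <;>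
        dsimp only <;> linarith
    obtain ⟨j, z, hzO, hzint⟩ := exists_interior_pt hc hOopen hOne
      (subset_trans hOsub (subset_trans interior_subset hcov))
    have hji : j ≠ i := by
      intro h
      subst h
      rw [interior_sq8] at hzint
      obtain ⟨⟨_, hzu⟩, _⟩ := hzint
      obtain ⟨hzx, _⟩ := hzO
      rw [mem_Ioo] at hzx
      linarith [hzx.1]
    obtain ⟨r, hrHo⟩ := ho_exists b (c j)
    have hrC : r ∈ refCenters b P :=
      center_of_mem hP (mid_mem_interior b r) (hc.1 j (ho_mem_sq8 hrHo))
    obtain ⟨hr1, hr2, hr3, hr4⟩ := hrHo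
    rw [mid_fst] at hr1 hr2
    rw [mid_snd] at hr3 hr4
    obtain ⟨hzx, hzy⟩ := hzO
    rw [mem_Ioo] at hzx hzy
    have hzint' := hzint
    rw [interior_sq8] at hzint'
    obtain ⟨⟨hj1, hj2⟩, hj3, hj4⟩ := hzint'
    have hzp : z ∈ interior (refSq b p) := hOsub ⟨by rw [mem_Ioo]; exact hzx, by rw [mem_Ioo]; exact hzy⟩
    rcases lt_trichotomy p.2 r.2 with hY | hY | hY
    · have hsubr := IH r hrC (Or.inl hY) j ⟨by rw [mid_fst]; exact hr1, by rw [mid_fst]; exact hr2,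
        by rw [mid_snd]; exact hr3, by rw [mid_snd]; exact hr4⟩
      have hpr : p ≠ r := fun h => absurd (congrArg Prod.snd h) (ne_of_lt hY)
      exact absurd (Set.mem_inter hzint hzp)
        (by rw [aligned_isolated hsubr hpr]; exact notMem_empty _)
    · rcases lt_trichotomy p.1 r.1 with hX | hX | hX
      · have hsubr := IH r hrC (Or.inr ⟨hY, hX⟩) j ⟨by rw [mid_fst]; exact hr1,
          by rw [mid_fst]; exact hr2, by rw [mid_snd]; exact hr3, by rw [mid_snd]; exact hr4⟩
        have hpr : p ≠ r := fun h => absurd (congrArg Prod.fst h) (ne_of_lt hX)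
        exact absurd (Set.mem_inter hzint hzp)
          (by rw [aligned_isolated hsubr hpr]; exact notMem_empty _)
      · have hrp : r = p := Prod.ext hX.symm hY.symm
        subst hrp
        exact ho_disjoint hc (fun h : i = j => hji h.symm)
          ⟨by rw [mid_fst]; exact h1, by rw [mid_fst]; exact h2,
            by rw [mid_snd]; exact h3, by rw [mid_snd]; exact h4⟩
          ⟨by rw [mid_fst]; exact hr1, by rw [mid_fst]; exact hr2,
            by rw [mid_snd]; exact hr3, by rw [mid_snd]; exact hr4⟩
      · have hcast : (r.1 : ℝ) + 1 ≤ (p.1 : ℝ) := by exact_mod_cast Int.add_one_le_iff.mpr hX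
        have hbeq : b r.2 = b p.2 := by rw [hY]
        rw [hbeq] at hr1
        linarith
    · have hcast : (r.2 : ℝ) + 1 ≤ (p.2 : ℝ) := by exact_mod_cast Int.add_one_le_iff.mpr hY
      linarith
  exact refSq_subset_sq8_iff.mpr ⟨by linarith, by linarith, by linarith, by linarith⟩

/-- the alignment lemma: the square whose half-open part contains a center's midpoint
actually contains the whole center -/
lemma aligned (hP : HasRefCenters b P) (hfin : (refCenters b P).Finite)
    (hcard : (refCenters b P).ncard = k) (hc : IsConfig P c) :
    ∀ p ∈ refCenters b P, ∀ i, Ho (c i) (mid b p) → refSq b p ⊆ sq8 (c i) := by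
  have main : ∀ N : ℕ, ∀ p ∈ refCenters b P,
      ({r | r ∈ refCenters b P ∧ (p.2 < r.2 ∨ (p.2 = r.2 ∧ p.1 < r.1))}).ncard ≤ N →
      ∀ i, Ho (c i) (mid b p) → refSq b p ⊆ sq8 (c i) := by
    intro N
    induction N with
    | zero =>
      intro p hp hN i hHo
      refine aligned_core hP hfin hcard hc p hp i hHo ?_
      intro r hr hlex j hj
      exfalso
      have hfinS : ({r | r ∈ refCenters b P ∧ (p.2 < r.2 ∨ (p.2 = r.2 ∧ p.1 < r.1))}).Finite :=
        hfin.subset (fun q hq => hq.1)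
      have hpos : 0 < ({r | r ∈ refCenters b P ∧ (p.2 < r.2 ∨ (p.2 = r.2 ∧ p.1 < r.1))}).ncard :=
        (Set.ncard_pos hfinS).mpr ⟨r, hr, hlex⟩
      omega
    | succ N ih =>
      intro p hp hN i hHo
      refine aligned_core hP hfin hcard hc p hp i hHo ?_
      intro r hr hlex j hj
      refine ih r hr ?_ j hj
      have hsub : {q | q ∈ refCenters b P ∧ (r.2 < q.2 ∨ (r.2 = q.2 ∧ r.1 < q.1))} ⊆
          {q | q ∈ refCenters b P ∧ (p.2 < q.2 ∨ (p.2 = q.2 ∧ p.1 < q.1))} := by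
        rintro q ⟨hq, hlex2⟩
        exact ⟨hq, by omega⟩
      have hssub : {q | q ∈ refCenters b P ∧ (r.2 < q.2 ∨ (r.2 = q.2 ∧ r.1 < q.1))} ⊂
          {q | q ∈ refCenters b P ∧ (p.2 < q.2 ∨ (p.2 = q.2 ∧ p.1 < q.1))} := by
        refine ⟨hsub, fun hctr => ?_⟩
        have : r ∈ {q | q ∈ refCenters b P ∧ (r.2 < q.2 ∨ (r.2 = q.2 ∧ r.1 < q.1))} :=
          hctr ⟨hr, hlex⟩
        obtain ⟨_, hbad⟩ := this
        omega
      have hlt := Set.ncard_lt_ncard hssub (hfin.subset (fun q hq => hq.1))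
      omega
  intro p hp i h
  exact main ({r | r ∈ refCenters b P ∧ (p.2 < r.2 ∨ (p.2 = r.2 ∧ p.1 < r.1))}).ncard p hp
    le_rfl i h

end Main

end Stmt3Aux

theorem stmt_3 (b : ℤ → ℝ) (hb : ∀ y : ℤ, b y ∈ Set.Ico (0 : ℝ) 8) (P : Set (ℝ × ℝ))
    (hP : HasRefCenters b P) (k : ℕ)
    (hfin : (refCenters b P).Finite) (hcard : (refCenters b P).ncard = k)
    (c : Fin k → ℝ × ℝ) (hc : IsConfig P c) :
    ∀ i : Fin k, ∃ p : ℤ × ℤ, p ∈ refCenters b P ∧ refSq b p ⊆ sq8 (c i) ∧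
      (∀ q : ℤ × ℤ, q ∈ refCenters b P → refSq b q ⊆ sq8 (c i) → q = p) ∧
      ∀ q : ℤ × ℤ, q ∈ refCenters b P → q ≠ p →
        interior (sq8 (c i)) ∩ interior (refSq b q) = ∅ := by
  intro i
  obtain ⟨p, hHo⟩ := Stmt3Aux.ho_exists b (c i)
  have hpC : p ∈ refCenters b P :=
    Stmt3Aux.center_of_mem hP (Stmt3Aux.mid_mem_interior b p)
      (hc.1 i (Stmt3Aux.ho_mem_sq8 hHo))
  have hsub : refSq b p ⊆ sq8 (c i) :=
    Stmt3Aux.aligned hP hfin hcard hc p hpC i hHo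
  refine ⟨p, hpC, hsub, ?_, ?_⟩
  · intro q hq hqsub
    have h1 := Stmt3Aux.refSq_subset_sq8_iff.mp hqsub
    refine Stmt3Aux.ho_unique b (c i) ?_ hHo
    refine ⟨?_, ?_, ?_, ?_⟩ <;> simp only [Stmt3Aux.mid_fst, Stmt3Aux.mid_snd] <;>
      [linarith [h1.1]; linarith [h1.2.1]; linarith [h1.2.2.1]; linarith [h1.2.2.2]]
  · intro q hq hqp
    exact Stmt3Aux.aligned_isolated hsub hqp
end

section
/- Let P ⊆ ℝ² have reference centers with exactly k of them (k finite), and consider a perfect configuration of k axis-aligned 8×8 squares in P. Then the map sending each square of the configuration to the unique reference center of P contained in it is a bijection between the squares of the configuration and the reference centers of P; equivalently, every reference center of P is contained in exactly one square of the configuration. -/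
open MeasureTheory

/-- The unique integer `y` with `8*y ∈ [s, s+8)`. -/
noncomputable def pickIco (s : ℝ) : ℤ := ⌈s / 8⌉

/-- The unique integer `y` with `8*y ∈ (s, s+8]`. -/
noncomputable def pickIoc (s : ℝ) : ℤ := ⌊s / 8⌋ + 1

lemma pickIco_mem (s : ℝ) : 8 * (pickIco s : ℝ) ∈ Set.Ico s (s + 8) := by
  unfold pickIco
  constructor
  · have := Int.le_ceil (s / 8); linarith
  · have := Int.ceil_lt_add_one (s / 8); linarith

lemma pickIoc_mem (s : ℝ) : 8 * (pickIoc s : ℝ) ∈ Set.Ioc s (s + 8) := by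
  unfold pickIoc
  constructor
  · have := Int.lt_floor_add_one (s / 8); push_cast; linarith
  · have := Int.floor_le (s / 8); push_cast; linarith

lemma interior_refSq (b : ℤ → ℝ) (p : ℤ × ℤ) :
    interior (refSq b p) =
      Set.Ioo (8 * (p.1 : ℝ) + b p.2) (8 * (p.1 : ℝ) + b p.2 + 4) ×ˢ
        Set.Ioo (8 * (p.2 : ℝ)) (8 * (p.2 : ℝ) + 4) := by
  rw [refSq, interior_prod_eq, interior_Icc, interior_Icc]

lemma interior_sq8 (a : ℝ × ℝ) :
    interior (sq8 a) = Set.Ioo a.1 (a.1 + 8) ×ˢ Set.Ioo a.2 (a.2 + 8) := by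
  rw [sq8, interior_prod_eq, interior_Icc, interior_Icc]

/-- If the bottom-left corner of a reference square lies in the half-open version
of an `8×8` square contained in `P`, that reference square is a center. -/
lemma mem_refCenters_of_bl {b : ℤ → ℝ} {P : Set (ℝ × ℝ)} (hP : HasRefCenters b P)
    {q : ℝ × ℝ} (hQ : sq8 q ⊆ P) {x y : ℤ}
    (hx1 : q.1 ≤ 8 * (x:ℝ) + b y) (hx2 : 8 * (x:ℝ) + b y < q.1 + 8)
    (hy1 : q.2 ≤ 8 * (y:ℝ)) (hy2 : 8 * (y:ℝ) < q.2 + 8) :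
    (x, y) ∈ refCenters b P := by
  rcases hP (x, y) with h | h
  · exact h
  · exfalso
    set a := 8 * (x:ℝ) + b y with ha
    set v := 8 * (y:ℝ) with hv
    set ε : ℝ := min (min (q.1 + 8 - a) (q.2 + 8 - v)) 1 with hε
    have he1 : ε ≤ q.1 + 8 - a := le_trans (min_le_left _ _) (min_le_left _ _)
    have he2 : ε ≤ q.2 + 8 - v := le_trans (min_le_left _ _) (min_le_right _ _)
    have he3 : ε ≤ 1 := min_le_right _ _
    have he0 : 0 < ε := by
      apply lt_min (lt_min (by linarith) (by linarith)) one_pos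
    have hmem : (a + ε/2, v + ε/2) ∈ interior (refSq b (x, y)) ∩ P := by
      constructor
      · rw [interior_refSq]
        exact ⟨⟨by linarith, by linarith⟩, ⟨by linarith, by linarith⟩⟩
      · apply hQ
        exact ⟨⟨by linarith, by linarith⟩, ⟨by linarith, by linarith⟩⟩
    rw [h] at hmem
    exact hmem

/-- If the top-right corner of a reference square lies in the co-half-open version
of an `8×8` square contained in `P`, that reference square is a center. -/
lemma mem_refCenters_of_tr {b : ℤ → ℝ} {P : Set (ℝ × ℝ)} (hP : HasRefCenters b P)
    {q : ℝ × ℝ} (hQ : sq8 q ⊆ P) {x y : ℤ}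
    (hx1 : q.1 < 8 * (x:ℝ) + b y + 4) (hx2 : 8 * (x:ℝ) + b y + 4 ≤ q.1 + 8)
    (hy1 : q.2 < 8 * (y:ℝ) + 4) (hy2 : 8 * (y:ℝ) + 4 ≤ q.2 + 8) :
    (x, y) ∈ refCenters b P := by
  rcases hP (x, y) with h | h
  · exact h
  · exfalso
    set a := 8 * (x:ℝ) + b y with ha
    set v := 8 * (y:ℝ) with hv
    set ε : ℝ := min (min (a + 4 - q.1) (v + 4 - q.2)) 1 with hε
    have he1 : ε ≤ a + 4 - q.1 := le_trans (min_le_left _ _) (min_le_left _ _)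
    have he2 : ε ≤ v + 4 - q.2 := le_trans (min_le_left _ _) (min_le_right _ _)
    have he3 : ε ≤ 1 := min_le_right _ _
    have he0 : 0 < ε := by
      apply lt_min (lt_min (by linarith) (by linarith)) one_pos
    have hmem : (a + 4 - ε/2, v + 4 - ε/2) ∈ interior (refSq b (x, y)) ∩ P := by
      constructor
      · rw [interior_refSq]
        exact ⟨⟨by linarith, by linarith⟩, ⟨by linarith, by linarith⟩⟩
      · apply hQ
        exact ⟨⟨by linarith, by linarith⟩, ⟨by linarith, by linarith⟩⟩
    rw [h] at hmem
    exact hmem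

/-- Two 8×8 squares whose horizontal and vertical extents overlap have
intersecting interiors. -/
lemma interiors_meet {q1 q2 : ℝ × ℝ} (h1 : q1.1 < q2.1 + 8) (h2 : q2.1 < q1.1 + 8)
    (h3 : q1.2 < q2.2 + 8) (h4 : q2.2 < q1.2 + 8) :
    (interior (sq8 q1) ∩ interior (sq8 q2)).Nonempty := by
  refine ⟨((q1.1 + q2.1 + 8)/2, (q1.2 + q2.2 + 8)/2), ?_, ?_⟩ <;>
    rw [interior_sq8] <;>
    exact ⟨⟨by linarith, by linarith⟩, ⟨by linarith, by linarith⟩⟩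

theorem stmt_4 (b : ℤ → ℝ) (hb : ∀ y : ℤ, b y ∈ Set.Ico (0 : ℝ) 8) (P : Set (ℝ × ℝ))
    (hP : HasRefCenters b P) (k : ℕ)
    (hfin : (refCenters b P).Finite) (hcard : (refCenters b P).ncard = k)
    (c : Fin k → ℝ × ℝ) (hc : IsConfig P c) :
    ∀ p : ℤ × ℤ, p ∈ refCenters b P → ∃! i : Fin k, refSq b p ⊆ sq8 (c i) := by
  obtain ⟨hcP, hcdisj⟩ := hc
  classical
  -- bottom-left corner map
  set gy : Fin k → ℤ := fun i => pickIco ((c i).2) with hgy_def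
  set gx : Fin k → ℤ := fun i => pickIco ((c i).1 - b (gy i)) with hgx_def
  set g : Fin k → ℤ × ℤ := fun i => (gx i, gy i) with hg_def
  -- top-right corner map
  set hy : Fin k → ℤ := fun i => pickIoc ((c i).2 - 4) with hhy_def
  set hx : Fin k → ℤ := fun i => pickIoc ((c i).1 - 4 - b (hy i)) with hhx_def
  set h : Fin k → ℤ × ℤ := fun i => (hx i, hy i) with hh_def
  -- basic bounds
  have hgyb : ∀ i, (c i).2 ≤ 8 * (gy i : ℝ) ∧ 8 * (gy i : ℝ) < (c i).2 + 8 :=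
    fun i => pickIco_mem ((c i).2)
  have hgxb : ∀ i, (c i).1 ≤ 8 * (gx i : ℝ) + b (gy i) ∧
      8 * (gx i : ℝ) + b (gy i) < (c i).1 + 8 := by
    intro i
    have := pickIco_mem ((c i).1 - b (gy i))
    exact ⟨by have := this.1; linarith, by have := this.2; linarith⟩
  have hhyb : ∀ i, (c i).2 < 8 * (hy i : ℝ) + 4 ∧ 8 * (hy i : ℝ) + 4 ≤ (c i).2 + 8 := by
    intro i
    have := pickIoc_mem ((c i).2 - 4)
    exact ⟨by have := this.1; linarith, by have := this.2; linarith⟩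
  have hhxb : ∀ i, (c i).1 < 8 * (hx i : ℝ) + b (hy i) + 4 ∧
      8 * (hx i : ℝ) + b (hy i) + 4 ≤ (c i).1 + 8 := by
    intro i
    have := pickIoc_mem ((c i).1 - 4 - b (hy i))
    exact ⟨by have := this.1; linarith, by have := this.2; linarith⟩
  -- membership in centers
  have hg_mem : ∀ i, g i ∈ refCenters b P := fun i =>
    mem_refCenters_of_bl hP (hcP i) (hgxb i).1 (hgxb i).2 (hgyb i).1 (hgyb i).2
  have hh_mem : ∀ i, h i ∈ refCenters b P := fun i =>
    mem_refCenters_of_tr hP (hcP i) (hhxb i).1 (hhxb i).2 (hhyb i).1 (hhyb i).2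
  -- injectivity
  have hg_inj : Function.Injective g := by
    intro i j hij
    by_contra hne
    have h1 : gx i = gx j := congrArg Prod.fst hij
    have h2 : gy i = gy j := congrArg Prod.snd hij
    have hbi := hgxb i; have hbj := hgxb j
    have hyi := hgyb i; have hyj := hgyb j
    rw [h1, h2] at hbi
    rw [h2] at hyi
    obtain ⟨pt, hpt⟩ := interiors_meet (q1 := c i) (q2 := c j)
      (by linarith [hbi.1, hbj.2]) (by linarith [hbj.1, hbi.2])
      (by linarith [hyi.1, hyj.2]) (by linarith [hyj.1, hyi.2])
    have := hcdisj i j hne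
    rw [this] at hpt
    exact hpt
  have hh_inj : Function.Injective h := by
    intro i j hij
    by_contra hne
    have h1 : hx i = hx j := congrArg Prod.fst hij
    have h2 : hy i = hy j := congrArg Prod.snd hij
    have hbi := hhxb i; have hbj := hhxb j
    have hyi := hhyb i; have hyj := hhyb j
    rw [h1, h2] at hbi
    rw [h2] at hyi
    obtain ⟨pt, hpt⟩ := interiors_meet (q1 := c i) (q2 := c j)
      (by linarith [hbi.1, hbj.2]) (by linarith [hbj.1, hbi.2])
      (by linarith [hyi.1, hyj.2]) (by linarith [hyj.1, hyi.2])
    have := hcdisj i j hne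
    rw [this] at hpt
    exact hpt
  -- images are the full set of centers
  have hcardT : hfin.toFinset.card = k := by
    rw [← hcard]
    exact (Set.ncard_eq_toFinset_card _ hfin).symm
  have himage : ∀ (f : Fin k → ℤ × ℤ), Function.Injective f →
      (∀ i, f i ∈ refCenters b P) → Finset.univ.image f = hfin.toFinset := by
    intro f hfinj hfmem
    apply Finset.eq_of_subset_of_card_le
    · intro p hp
      simp only [Finset.mem_image] at hp
      obtain ⟨i, _, rfl⟩ := hp
      simpa using hfmem i
    · rw [Finset.card_image_of_injective _ hfinj, Finset.card_univ, Fintype.card_fin]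
      exact le_of_eq hcardT
  have hsum : ∀ (f : ℤ × ℤ → ℤ), ∑ i, f (g i) = ∑ i, f (h i) := by
    intro f
    have e1 : ∑ i, f (g i) = ∑ p ∈ Finset.univ.image g, f p :=
      (Finset.sum_image (fun x _ y _ hxy => hg_inj hxy)).symm
    have e2 : ∑ i, f (h i) = ∑ p ∈ Finset.univ.image h, f p :=
      (Finset.sum_image (fun x _ y _ hxy => hh_inj hxy)).symm
    rw [e1, e2, himage g hg_inj hg_mem, himage h hh_inj hh_mem]
  -- pointwise inequality on y and equality by summation
  have hy_le : ∀ i, hy i ≤ gy i := by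
    intro i
    have h1 := (hgyb i).1
    have h2 := (hhyb i).2
    have : (hy i : ℝ) < (gy i : ℝ) + 1 := by linarith
    exact_mod_cast Int.lt_add_one_iff.mp (by exact_mod_cast this)
  have hy_eq : ∀ i, hy i = gy i := by
    have hs : ∑ i, (g i).2 = ∑ i, (h i).2 := hsum Prod.snd
    have hzero : ∑ i : Fin k, ((g i).2 - (h i).2) = 0 := by
      rw [Finset.sum_sub_distrib, hs, sub_self]
    have hall := (Finset.sum_eq_zero_iff_of_nonneg
      (fun i _ => sub_nonneg.mpr (show (h i).2 ≤ (g i).2 from hy_le i))).mp hzero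
    intro i
    have hi : gy i - hy i = 0 := hall i (Finset.mem_univ i)
    omega
  -- pointwise inequality on x and equality by summation
  have hx_le : ∀ i, hx i ≤ gx i := by
    intro i
    have h1 := (hgxb i).1
    have h2 := (hhxb i).2
    rw [hy_eq i] at h2
    have : (hx i : ℝ) < (gx i : ℝ) + 1 := by linarith
    exact_mod_cast Int.lt_add_one_iff.mp (by exact_mod_cast this)
  have hx_eq : ∀ i, hx i = gx i := by
    have hs : ∑ i, (g i).1 = ∑ i, (h i).1 := hsum Prod.fst
    have hzero : ∑ i : Fin k, ((g i).1 - (h i).1) = 0 := by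
      rw [Finset.sum_sub_distrib, hs, sub_self]
    have hall := (Finset.sum_eq_zero_iff_of_nonneg
      (fun i _ => sub_nonneg.mpr (show (h i).1 ≤ (g i).1 from hx_le i))).mp hzero
    intro i
    have hi : gx i - hx i = 0 := hall i (Finset.mem_univ i)
    omega
  -- each configuration square contains its center
  have hcont : ∀ i, refSq b (g i) ⊆ sq8 (c i) := by
    intro i
    have hx2 := (hhxb i).2
    rw [hx_eq i, hy_eq i] at hx2
    have hy2 := (hhyb i).2
    rw [hy_eq i] at hy2
    have hx1 := (hgxb i).1
    have hy1 := (hgyb i).1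
    simp only [refSq, sq8, hg_def]
    exact Set.prod_mono (Set.Icc_subset_Icc (by exact hx1) (by linarith))
      (Set.Icc_subset_Icc (by exact hy1) (by linarith))
  -- conclusion
  intro p hp
  have hpT : p ∈ Finset.univ.image g := by
    rw [himage g hg_inj hg_mem]
    simpa using hp
  simp only [Finset.mem_image] at hpT
  obtain ⟨i, _, hgi⟩ := hpT
  refine ⟨i, by rw [← hgi]; exact hcont i, ?_⟩
  intro j hj
  by_contra hne
  have hsub_i : refSq b p ⊆ sq8 (c i) := by rw [← hgi]; exact hcont i
  have hint : (interior (sq8 (c j)) ∩ interior (sq8 (c i))).Nonempty := by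
    have hpt : (8 * (p.1 : ℝ) + b p.2 + 2, 8 * (p.2 : ℝ) + 2) ∈ interior (refSq b p) := by
      rw [interior_refSq]
      simp only [Set.mem_prod, Set.mem_Ioo]
      norm_num
    exact ⟨_, interior_mono hj hpt, interior_mono hsub_i hpt⟩
  obtain ⟨pt, hpt⟩ := hint
  rw [hcdisj j i hne] at hpt
  exact hpt
end

section
/- Let P ⊆ ℝ² have reference centers with exactly k of them (k finite), and consider a perfect configuration of k axis-aligned 8×8 squares in P. Then the union of the k squares covers the union of the reference centers of P up to a Lebesgue-null set, i.e. the Lebesgue measure of (⋃ reference centers of P) \ (⋃ squares of the configuration) is 0. -/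
open MeasureTheory

/-- Auxiliary: the `n`-th translate `(8n+d, 8n+d+4)` (open version)
clipped to `(u, u+8)`. -/
def piece (u d : ℝ) (n : ℤ) : Set ℝ :=
  Set.Ioo (max u (8 * (n : ℝ) + d)) (min (u + 8) (8 * (n : ℝ) + d + 4))

lemma piece_subset_outer (u d : ℝ) (n : ℤ) : piece u d n ⊆ Set.Icc u (u + 8) :=
  Set.Ioo_subset_Icc_self.trans (Set.Icc_subset_Icc (le_max_left _ _) (min_le_left _ _))

lemma piece_subset_inner (u d : ℝ) (n : ℤ) :
    piece u d n ⊆ Set.Ioo (8 * (n : ℝ) + d) (8 * (n : ℝ) + d + 4) :=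
  Set.Ioo_subset_Ioo (le_max_right _ _) (min_le_right _ _)

lemma piece_disjoint (u d : ℝ) {n₁ n₂ : ℤ} (h : n₁ < n₂) :
    Disjoint (piece u d n₁) (piece u d n₂) := by
  refine Set.disjoint_left.2 fun x hx1 hx2 => ?_
  have h1 := (piece_subset_inner u d n₁ hx1).2
  have h2 := (piece_subset_inner u d n₂ hx2).1
  have hn : (n₁ : ℝ) + 1 ≤ n₂ := by exact_mod_cast h
  linarith

lemma exists_piece (u d : ℝ) :
    ∃ n : ℤ, volume (piece u d (n - 1)) + volume (piece u d n) = 4 := by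
  refine ⟨⌈(u - d) / 8⌉, ?_⟩
  set n : ℤ := ⌈(u - d) / 8⌉ with hn
  have h1 : (u - d) / 8 ≤ (n : ℝ) := Int.le_ceil _
  have h2 : (n : ℝ) < (u - d) / 8 + 1 := Int.ceil_lt_add_one _
  have hs0 : 0 ≤ 8 * (n : ℝ) + d - u := by linarith
  have hs8 : 8 * (n : ℝ) + d - u < 8 := by linarith
  have hcast : ((n - 1 : ℤ) : ℝ) = (n : ℝ) - 1 := by push_cast; ring
  rcases le_or_gt (8 * (n : ℝ) + d - u) 4 with h | h
  · -- left piece empty, right piece full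
    have e1 : piece u d (n - 1) = ∅ := by
      apply Set.eq_empty_of_subset_empty
      intro x hx
      have h1 := (piece_subset_inner u d (n - 1) hx).2
      have h2 := (piece_subset_outer u d (n - 1) hx).1
      rw [hcast] at h1
      exfalso; linarith
    have e2 : piece u d n = Set.Ioo (8 * (n : ℝ) + d) (8 * (n : ℝ) + d + 4) := by
      unfold piece
      rw [max_eq_right (by linarith), min_eq_right (by linarith)]
    rw [e1, e2, measure_empty, zero_add, Real.volume_Ioo]
    norm_num
  · have e1 : piece u d (n - 1) = Set.Ioo u (8 * (n : ℝ) + d - 4) := by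
      unfold piece
      rw [hcast, max_eq_left (by linarith), min_eq_right (by linarith)]
      ring_nf
    have e2 : piece u d n = Set.Ioo (8 * (n : ℝ) + d) (u + 8) := by
      unfold piece
      rw [max_eq_right (by linarith), min_eq_left (by linarith)]
    rw [e1, e2, Real.volume_Ioo, Real.volume_Ioo,
      ← ENNReal.ofReal_add (by linarith) (by linarith),
      show (8 * (n : ℝ) + d - 4 - u) + (u + 8 - (8 * (n : ℝ) + d)) = 4 by ring]
    norm_num

lemma rect_subset_centers (b : ℤ → ℝ) (P : Set (ℝ × ℝ)) (hP : HasRefCenters b P)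
    (a : ℝ × ℝ) (hQ : sq8 a ⊆ P) (y n : ℤ) :
    (piece a.1 (b y) n) ×ˢ (piece a.2 0 y) ⊆
      sq8 a ∩ ⋃ p ∈ refCenters b P, refSq b p := by
  set T : Set (ℝ × ℝ) := (piece a.1 (b y) n) ×ˢ (piece a.2 0 y) with hT
  have hTQ : T ⊆ sq8 a :=
    Set.prod_mono (piece_subset_outer _ _ _) (piece_subset_outer _ _ _)
  have hTint : T ⊆ interior (refSq b (n, y)) := by
    have hopen : IsOpen T := IsOpen.prod isOpen_Ioo isOpen_Ioo
    refine hopen.subset_interior_iff.2 ?_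
    refine Set.prod_mono ?_ ?_
    · exact (piece_subset_inner _ _ _).trans
        (Set.Ioo_subset_Icc_self.trans (by simp [refSq]))
    · refine (piece_subset_inner _ _ _).trans (Set.Ioo_subset_Icc_self.trans ?_)
      simp [refSq]
  rcases Set.eq_empty_or_nonempty T with hE | ⟨z, hz⟩
  · rw [hE]; exact Set.empty_subset _
  · have hcen : (n, y) ∈ refCenters b P := by
      rcases hP (n, y) with hg | hbad
      · exact hg
      · exfalso
        have : z ∈ interior (refSq b (n, y)) ∩ P := ⟨hTint hz, hQ (hTQ hz)⟩
        rw [hbad] at this; exact this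
    intro w hw
    exact ⟨hTQ hw, Set.mem_biUnion hcen (interior_subset (hTint hw))⟩

lemma key_bound (b : ℤ → ℝ) (P : Set (ℝ × ℝ)) (hP : HasRefCenters b P)
    (a : ℝ × ℝ) (hQ : sq8 a ⊆ P) :
    16 ≤ volume (sq8 a ∩ ⋃ p ∈ refCenters b P, refSq b p) := by
  obtain ⟨m, hm⟩ := exists_piece a.2 0
  obtain ⟨n₁, hn₁⟩ := exists_piece a.1 (b (m - 1))
  obtain ⟨n₂, hn₂⟩ := exists_piece a.1 (b m)
  set A₁ : Set ℝ := piece a.1 (b (m - 1)) (n₁ - 1) ∪ piece a.1 (b (m - 1)) n₁ with hA₁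
  set A₂ : Set ℝ := piece a.1 (b m) (n₂ - 1) ∪ piece a.1 (b m) n₂ with hA₂
  set J₁ : Set ℝ := piece a.2 0 (m - 1) with hJ₁
  set J₂ : Set ℝ := piece a.2 0 m with hJ₂
  have hsub : A₁ ×ˢ J₁ ∪ A₂ ×ˢ J₂ ⊆ sq8 a ∩ ⋃ p ∈ refCenters b P, refSq b p := by
    rw [hA₁, hA₂, Set.union_prod, Set.union_prod]
    refine Set.union_subset (Set.union_subset ?_ ?_) (Set.union_subset ?_ ?_) <;>
      exact rect_subset_centers b P hP a hQ _ _
  have hdisjJ : Disjoint J₁ J₂ := piece_disjoint _ _ (by omega)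
  have hdisj : Disjoint (A₁ ×ˢ J₁) (A₂ ×ˢ J₂) :=
    Set.disjoint_left.2 fun z hz1 hz2 => Set.disjoint_left.1 hdisjJ hz1.2 hz2.2
  have hmeasA₂ : MeasurableSet A₂ := measurableSet_Ioo.union measurableSet_Ioo
  have hvolA₁ : volume A₁ = 4 := by
    rw [hA₁, measure_union (piece_disjoint _ _ (by omega)) measurableSet_Ioo]
    exact hn₁
  have hvolA₂ : volume A₂ = 4 := by
    rw [hA₂, measure_union (piece_disjoint _ _ (by omega)) measurableSet_Ioo]
    exact hn₂
  have hvol : volume (A₁ ×ˢ J₁ ∪ A₂ ×ˢ J₂) = 16 := by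
    rw [measure_union hdisj (hmeasA₂.prod measurableSet_Ioo),
      Measure.volume_eq_prod, Measure.prod_prod, Measure.prod_prod, hvolA₁, hvolA₂,
      ← mul_add, hm]
    norm_num
  calc (16 : ENNReal) = volume (A₁ ×ˢ J₁ ∪ A₂ ×ˢ J₂) := hvol.symm
    _ ≤ _ := measure_mono hsub

theorem stmt_5 (b : ℤ → ℝ) (hb : ∀ y : ℤ, b y ∈ Set.Ico (0 : ℝ) 8) (P : Set (ℝ × ℝ))
    (hP : HasRefCenters b P) (k : ℕ)
    (hfin : (refCenters b P).Finite) (hcard : (refCenters b P).ncard = k)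
    (c : Fin k → ℝ × ℝ) (hc : IsConfig P c) :
    volume ((⋃ p ∈ refCenters b P, refSq b p) \ ⋃ i : Fin k, sq8 (c i)) = 0 := by
  classical
  set C : Set (ℝ × ℝ) := ⋃ p ∈ refCenters b P, refSq b p with hC
  set U : Set (ℝ × ℝ) := ⋃ i : Fin k, sq8 (c i) with hU
  have hUmeas : MeasurableSet U :=
    MeasurableSet.iUnion fun i => measurableSet_Icc.prod measurableSet_Icc
  have hCmeas : MeasurableSet C :=
    MeasurableSet.biUnion (Set.to_countable _)
      fun p _ => measurableSet_Icc.prod measurableSet_Icc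
  -- upper bound on the volume of C
  have hck : hfin.toFinset.card = k := by
    rw [← hcard, Set.ncard_eq_toFinset_card _ hfin]
  have hCvol : volume C ≤ 16 * k := by
    have hCeq : C = ⋃ p ∈ hfin.toFinset, refSq b p := by
      rw [hC]; congr 1; ext p; simp [Set.Finite.mem_toFinset]
    have hone : ∀ p : ℤ × ℤ, volume (refSq b p) = 16 := by
      intro p
      rw [refSq, Measure.volume_eq_prod, Measure.prod_prod, Real.volume_Icc, Real.volume_Icc,
        show (8 * (p.1:ℝ) + b p.2 + 4) - (8 * (p.1:ℝ) + b p.2) = 4 by ring,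
        show (8 * (p.2:ℝ) + 4) - (8 * (p.2:ℝ)) = 4 by ring,
        ← ENNReal.ofReal_mul (by norm_num)]
      norm_num
    calc volume C ≤ ∑ p ∈ hfin.toFinset, volume (refSq b p) := by
          rw [hCeq]; exact measure_biUnion_finset_le _ _
      _ = ∑ _p ∈ hfin.toFinset, (16 : ENNReal) := Finset.sum_congr rfl fun p _ => hone p
      _ = 16 * k := by rw [Finset.sum_const, hck, nsmul_eq_mul, mul_comm]
  -- lower bound on the covered part
  have hlow : 16 * (k : ENNReal) ≤ volume (C ∩ U) := by
    have hsub : (⋃ i : Fin k, C ∩ interior (sq8 (c i))) ⊆ C ∩ U := by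
      refine Set.iUnion_subset fun i =>
        Set.inter_subset_inter le_rfl (interior_subset.trans ?_)
      rw [hU]; exact Set.subset_iUnion (fun j => sq8 (c j)) i
    have hpd : Pairwise (Function.onFun Disjoint fun i => C ∩ interior (sq8 (c i))) := by
      intro i j hij
      refine Set.disjoint_left.2 fun z hz1 hz2 => ?_
      have hmem : z ∈ interior (sq8 (c i)) ∩ interior (sq8 (c j)) := ⟨hz1.2, hz2.2⟩
      rw [hc.2 i j hij] at hmem; exact hmem
    have hiu : volume (⋃ i, C ∩ interior (sq8 (c i)))
        = ∑' i, volume (C ∩ interior (sq8 (c i))) :=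
      measure_iUnion hpd fun i => hCmeas.inter isOpen_interior.measurableSet
    have hper : ∀ i, 16 ≤ volume (C ∩ interior (sq8 (c i))) := by
      intro i
      have h16 : 16 ≤ volume (sq8 (c i) ∩ C) := key_bound b P hP (c i) (hc.1 i)
      set a : ℝ × ℝ := c i with ha
      have hio : Set.Ioo a.1 (a.1 + 8) ×ˢ Set.Ioo a.2 (a.2 + 8) ⊆ interior (sq8 a) :=
        (isOpen_Ioo.prod isOpen_Ioo).subset_interior_iff.2
          (Set.prod_mono Set.Ioo_subset_Icc_self Set.Ioo_subset_Icc_self)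
      have hnull : volume (sq8 a \ interior (sq8 a)) = 0 := by
        refine measure_mono_null (Set.diff_subset_diff_right hio) ?_
        have hIcc : volume (sq8 a) = ENNReal.ofReal 8 * ENNReal.ofReal 8 := by
          rw [sq8, Measure.volume_eq_prod, Measure.prod_prod, Real.volume_Icc, Real.volume_Icc]
          norm_num
        have hIoo : volume (Set.Ioo a.1 (a.1 + 8) ×ˢ Set.Ioo a.2 (a.2 + 8))
            = ENNReal.ofReal 8 * ENNReal.ofReal 8 := by
          rw [Measure.volume_eq_prod, Measure.prod_prod, Real.volume_Ioo, Real.volume_Ioo]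
          norm_num
        unfold sq8 at hIcc ⊢
        rw [measure_diff
            (Set.prod_mono Set.Ioo_subset_Icc_self Set.Ioo_subset_Icc_self)
            ((measurableSet_Ioo.prod measurableSet_Ioo).nullMeasurableSet)
            (by rw [hIoo]; exact ENNReal.mul_ne_top ENNReal.ofReal_ne_top ENNReal.ofReal_ne_top),
          hIcc, hIoo, tsub_self]
      have hsplit : volume (sq8 a ∩ C)
          ≤ volume (C ∩ interior (sq8 a)) + volume (sq8 a \ interior (sq8 a)) := by
        refine (measure_mono ?_).trans (measure_union_le _ _)
        intro z hz
        by_cases hzi : z ∈ interior (sq8 a)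
        · exact Or.inl ⟨hz.2, hzi⟩
        · exact Or.inr ⟨hz.1, hzi⟩
      rw [hnull, add_zero] at hsplit
      exact h16.trans hsplit
    calc 16 * (k : ENNReal) = ∑' _i : Fin k, (16 : ENNReal) := by
          rw [tsum_fintype, Finset.sum_const, Finset.card_univ, Fintype.card_fin,
            nsmul_eq_mul, mul_comm]
      _ ≤ ∑' i, volume (C ∩ interior (sq8 (c i))) := ENNReal.tsum_le_tsum hper
      _ = volume (⋃ i, C ∩ interior (sq8 (c i))) := hiu.symm
      _ ≤ volume (C ∩ U) := measure_mono hsub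
  -- conclude
  have hkey : volume (C ∩ U) + volume (C \ U) = volume C := measure_inter_add_diff C hUmeas
  have hle : 16 * (k : ENNReal) + volume (C \ U) ≤ 16 * (k : ENNReal) + 0 := by
    rw [add_zero]
    calc 16 * (k : ENNReal) + volume (C \ U)
        ≤ volume (C ∩ U) + volume (C \ U) := add_le_add hlow le_rfl
      _ = volume C := hkey
      _ ≤ 16 * k := hCvol
  have hnt : 16 * (k : ENNReal) ≠ ⊤ :=
    ENNReal.mul_ne_top (by norm_num) (ENNReal.natCast_ne_top k)
  exact le_zero_iff.1 ((ENNReal.add_le_add_iff_left hnt).1 hle)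
end

section
/- Let P ⊆ ℝ² have reference centers with exactly k of them (k finite). Then any family of axis-aligned closed squares of side length 8, each contained in P and with pairwise disjoint interiors, contains at most k squares. -/
open MeasureTheory

open Set ENNReal in
lemma oneD_s6 (t c : ℝ) :
    4 ≤ volume (Icc t (t+8) ∩ ⋃ x : ℤ, Ioo (8*(x:ℝ) + c) (8*(x:ℝ) + c + 4)) := by
  set x0 : ℤ := ⌈(t - c)/8⌉ with hx0
  set u : ℝ := 8*(x0:ℝ) + c with hu
  have h1 : t ≤ u := by
    have : (t - c)/8 ≤ (x0:ℝ) := Int.le_ceil ((t - c)/8)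
    nlinarith
  have h2 : u < t + 8 := by
    have := Int.ceil_lt_add_one ((t - c)/8)
    nlinarith
  rcases le_or_gt u (t+4) with hc | hc
  · calc (4:ℝ≥0∞) = volume (Ioo u (u+4)) := by
          rw [Real.volume_Ioo]; norm_num
      _ ≤ _ := by
          apply measure_mono
          intro z hz
          exact ⟨⟨le_trans h1 hz.1.le, le_trans hz.2.le (by linarith)⟩,
            mem_iUnion.2 ⟨x0, hz⟩⟩
  · have hd : Disjoint (Ioo t (u-4)) (Ioo u (t+8)) := by
      apply Set.disjoint_left.mpr
      intro z hz1 hz2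
      linarith [hz1.2, hz2.1]
    calc (4:ℝ≥0∞) = volume (Ioo t (u-4)) + volume (Ioo u (t+8)) := by
          rw [Real.volume_Ioo, Real.volume_Ioo,
            ← ENNReal.ofReal_add (by linarith) (by linarith)]
          rw [show u - 4 - t + (t + 8 - u) = 4 by ring]
          simp [ENNReal.ofReal_ofNat]
      _ = volume (Ioo t (u-4) ∪ Ioo u (t+8)) :=
          (measure_union hd measurableSet_Ioo).symm
      _ ≤ _ := by
          apply measure_mono
          rintro z (hz | hz)
          · refine ⟨⟨hz.1.le, by linarith [hz.2]⟩, mem_iUnion.2 ⟨x0 - 1, ?_⟩⟩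
            constructor <;> push_cast <;> [linarith [hz.1, h2]; linarith [hz.2]]
          · exact ⟨⟨by linarith [hz.1], hz.2.le⟩,
              mem_iUnion.2 ⟨x0, ⟨hz.1, by linarith [hz.2]⟩⟩⟩

open Set in
lemma hint (b : ℤ → ℝ) (p : ℤ × ℤ) : interior (refSq b p) =
    Ioo (8*(p.1:ℝ) + b p.2) (8*(p.1:ℝ) + b p.2 + 4) ×ˢ
      Ioo (8*(p.2:ℝ)) (8*(p.2:ℝ)+4) := by
  rw [refSq, interior_prod_eq, interior_Icc, interior_Icc]

open Set in
lemma rowdisj : Pairwise (Function.onFun Disjoint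
    (fun y : ℤ => Ioo (8*(y:ℝ)) (8*(y:ℝ)+4))) := by
  intro y y' hne
  apply Set.disjoint_left.mpr
  intro z hz hz'
  rcases hne.lt_or_gt with h | h
  · have : (y:ℝ) + 1 ≤ y' := by exact_mod_cast h
    linarith [hz.2, hz'.1]
  · have : (y':ℝ) + 1 ≤ y := by exact_mod_cast h
    linarith [hz.1, hz'.2]

open Set ENNReal in
lemma twoD (b : ℤ → ℝ) (a : ℝ × ℝ) :
    16 ≤ volume (sq8 a ∩ ⋃ p : ℤ × ℤ, interior (refSq b p)) := by
  set E : ℤ → Set ℝ := fun y =>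
    Icc a.1 (a.1+8) ∩ ⋃ x : ℤ, Ioo (8*(x:ℝ) + b y) (8*(x:ℝ) + b y + 4) with hE
  set F : ℤ → Set ℝ := fun y => Icc a.2 (a.2+8) ∩ Ioo (8*(y:ℝ)) (8*(y:ℝ)+4) with hF
  have hset : sq8 a ∩ ⋃ p : ℤ × ℤ, interior (refSq b p) = ⋃ y : ℤ, E y ×ˢ F y := by
    ext z
    constructor
    · rintro ⟨hz, hu⟩
      obtain ⟨p, hp⟩ := mem_iUnion.1 hu
      rw [hint] at hp
      exact mem_iUnion.2 ⟨p.2, ⟨⟨hz.1, mem_iUnion.2 ⟨p.1, hp.1⟩⟩, hz.2, hp.2⟩⟩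
    · intro h
      obtain ⟨y, ⟨⟨h1, h2⟩, h3, h4⟩⟩ := mem_iUnion.1 h
      obtain ⟨x, hx⟩ := mem_iUnion.1 h2
      exact ⟨⟨h1, h3⟩, mem_iUnion.2 ⟨(x,y), by rw [hint]; exact ⟨hx, h4⟩⟩⟩
  have hm : ∀ y, MeasurableSet (E y ×ˢ F y) := fun y =>
    ((measurableSet_Icc.inter (MeasurableSet.iUnion fun x => measurableSet_Ioo)).prod
      (measurableSet_Icc.inter measurableSet_Ioo))
  have hpd : Pairwise (Function.onFun Disjoint fun y => E y ×ˢ F y) := by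
    intro y y' hne
    apply Set.disjoint_left.mpr
    rintro z ⟨_, hz2⟩ ⟨_, hz2'⟩
    exact Set.disjoint_left.1 (rowdisj hne) hz2.2 hz2'.2
  have hprod : ∀ y, volume (E y ×ˢ F y) = volume (E y) * volume (F y) := by
    intro y
    rw [Measure.volume_eq_prod, Measure.prod_prod]
  have hFsum : 4 ≤ ∑' y : ℤ, volume (F y) := by
    have heq : ⋃ y : ℤ, F y = Icc a.2 (a.2+8) ∩ ⋃ y : ℤ, Ioo (8*(y:ℝ)) (8*(y:ℝ)+4) := by
      rw [hF]; exact (Set.inter_iUnion _ _).symm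
    rw [← measure_iUnion (fun y y' hne =>
        (rowdisj hne).mono inter_subset_right inter_subset_right)
      (fun y => measurableSet_Icc.inter measurableSet_Ioo), heq]
    have := oneD_s6 a.2 0
    simpa using this
  rw [hset, measure_iUnion hpd hm]
  calc (16:ℝ≥0∞) = 4 * 4 := by norm_num
    _ ≤ 4 * ∑' y : ℤ, volume (F y) := mul_le_mul_right hFsum 4
    _ = ∑' y : ℤ, 4 * volume (F y) := ENNReal.tsum_mul_left.symm
    _ ≤ ∑' y : ℤ, volume (E y ×ˢ F y) := by
        apply ENNReal.tsum_le_tsum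
        intro y
        rw [hprod y]
        exact mul_le_mul_left (oneD_s6 a.1 (b y)) _

open Set in
lemma volRefInt (b : ℤ → ℝ) (p : ℤ × ℤ) : volume (interior (refSq b p)) = 16 := by
  rw [hint, Measure.volume_eq_prod, Measure.prod_prod, Real.volume_Ioo, Real.volume_Ioo,
    show 8*(p.1:ℝ) + b p.2 + 4 - (8*(p.1:ℝ) + b p.2) = 4 by ring,
    show 8*(p.2:ℝ) + 4 - 8*(p.2:ℝ) = 4 by ring, ← ENNReal.ofReal_mul (by norm_num)]
  norm_num

open Set in
lemma volSqFrontier (a : ℝ × ℝ) : volume (sq8 a \ interior (sq8 a)) = 0 := by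
  have hi : interior (sq8 a) = Ioo a.1 (a.1+8) ×ˢ Ioo a.2 (a.2+8) := by
    rw [sq8, interior_prod_eq, interior_Icc, interior_Icc]
  have h1 : volume (sq8 a) = 64 := by
    rw [sq8, Measure.volume_eq_prod, Measure.prod_prod, Real.volume_Icc, Real.volume_Icc,
      show a.1 + 8 - a.1 = 8 by ring, show a.2 + 8 - a.2 = 8 by ring,
      ← ENNReal.ofReal_mul (by norm_num)]
    norm_num
  have h2 : volume (interior (sq8 a)) = 64 := by
    rw [hi, Measure.volume_eq_prod, Measure.prod_prod, Real.volume_Ioo, Real.volume_Ioo,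
      show a.1 + 8 - a.1 = 8 by ring, show a.2 + 8 - a.2 = 8 by ring,
      ← ENNReal.ofReal_mul (by norm_num)]
    norm_num
  have hsub : Ioo a.1 (a.1+8) ×ˢ Ioo a.2 (a.2+8) ⊆ sq8 a := hi ▸ interior_subset
  have h2' : volume (Ioo a.1 (a.1+8) ×ˢ Ioo a.2 (a.2+8)) = 64 := by rw [← hi]; exact h2
  rw [hi, measure_diff hsub (measurableSet_Ioo.prod measurableSet_Ioo).nullMeasurableSet
    (by rw [h2']; norm_num), h1, h2', tsub_self]

open Set ENNReal

theorem stmt_6 (b : ℤ → ℝ) (hb : ∀ y : ℤ, b y ∈ Set.Ico (0 : ℝ) 8) (P : Set (ℝ × ℝ))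
    (hP : HasRefCenters b P) (k : ℕ)
    (hfin : (refCenters b P).Finite) (hcard : (refCenters b P).ncard = k)
    (s : Finset (ℝ × ℝ)) (hsub : ∀ a ∈ s, sq8 a ⊆ P)
    (hdisj : ∀ a ∈ s, ∀ a' ∈ s, a ≠ a' → interior (sq8 a) ∩ interior (sq8 a') = ∅) :
    s.card ≤ k := by
  classical
  set C : Finset (ℤ × ℤ) := hfin.toFinset with hC
  set W : Set (ℝ × ℝ) := ⋃ p ∈ C, interior (refSq b p) with hW
  have hWmeas : MeasurableSet W :=
    MeasurableSet.biUnion C.countable_toSet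
      (fun p _ => by rw [hint]; exact measurableSet_Ioo.prod measurableSet_Ioo)
  -- step 1: each square meets W in measure ≥ 16
  have key : ∀ a ∈ s, 16 ≤ volume (interior (sq8 a) ∩ W) := by
    intro a ha
    have hcap : sq8 a ∩ ⋃ p : ℤ × ℤ, interior (refSq b p) ⊆ sq8 a ∩ W := by
      rintro z ⟨hz, hu⟩
      obtain ⟨p, hp⟩ := mem_iUnion.1 hu
      refine ⟨hz, mem_iUnion.2 ⟨p, mem_iUnion.2 ⟨?_, hp⟩⟩⟩
      rcases hP p with h | h
      · simpa [hC, refCenters] using h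
      · exact absurd (Set.eq_empty_iff_forall_notMem.1 h z ⟨hp, hsub a ha hz⟩) (by simp)
    have h16 : 16 ≤ volume (sq8 a ∩ W) :=
      le_trans (twoD b a) (measure_mono hcap)
    have hsplit : sq8 a ∩ W ⊆ (interior (sq8 a) ∩ W) ∪ (sq8 a \ interior (sq8 a)) := by
      rintro z ⟨hz, hw⟩
      by_cases hin : z ∈ interior (sq8 a)
      · exact Or.inl ⟨hin, hw⟩
      · exact Or.inr ⟨hz, hin⟩
    calc (16:ℝ≥0∞) ≤ volume (sq8 a ∩ W) := h16
      _ ≤ volume (interior (sq8 a) ∩ W) + volume (sq8 a \ interior (sq8 a)) :=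
          le_trans (measure_mono hsplit) (measure_union_le _ _)
      _ = volume (interior (sq8 a) ∩ W) := by rw [volSqFrontier, add_zero]
  -- step 2: upper bound on volume of W
  have hWvol : volume W ≤ 16 * k := by
    calc volume W ≤ ∑ p ∈ C, volume (interior (refSq b p)) := measure_biUnion_finset_le C _
      _ = ∑ p ∈ C, (16:ℝ≥0∞) := by
          exact Finset.sum_congr rfl fun p _ => volRefInt b p
      _ = 16 * k := by
          rw [Finset.sum_const, nsmul_eq_mul, mul_comm,
            show C.card = k from by
              rw [← hcard]; exact (Set.ncard_eq_toFinset_card _ hfin).symm]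
  -- step 3: summation over s
  have hsum : (16:ℝ≥0∞) * s.card ≤ volume W := by
    have hdisj' : (↑s : Set (ℝ × ℝ)).PairwiseDisjoint
        (fun a => interior (sq8 a) ∩ W) := by
      intro a ha a' ha' hne
      have := hdisj a ha a' ha' hne
      rw [Function.onFun, Set.disjoint_iff_inter_eq_empty]
      rw [show (interior (sq8 a) ∩ W) ∩ (interior (sq8 a') ∩ W)
        = (interior (sq8 a) ∩ interior (sq8 a')) ∩ W by ext z; simp; tauto, this]
      simp
    have hmeas : ∀ a ∈ s, MeasurableSet (interior (sq8 a) ∩ W) := fun a _ =>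
      (measurableSet_Ioo.prod measurableSet_Ioo |>.congr
        (by rw [sq8, interior_prod_eq, interior_Icc, interior_Icc])).inter hWmeas
    calc (16:ℝ≥0∞) * s.card = ∑ a ∈ s, (16:ℝ≥0∞) := by
          rw [Finset.sum_const, nsmul_eq_mul, mul_comm]
      _ ≤ ∑ a ∈ s, volume (interior (sq8 a) ∩ W) :=
          Finset.sum_le_sum fun a ha => key a ha
      _ = volume (⋃ a ∈ s, interior (sq8 a) ∩ W) :=
          (measure_biUnion_finset hdisj' hmeas).symm
      _ ≤ volume W := measure_mono (by simp [Set.iUnion_subset_iff])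
  have : (16:ℝ≥0∞) * s.card ≤ 16 * k := le_trans hsum hWvol
  have hle : (s.card : ℝ≥0∞) ≤ (k : ℝ≥0∞) :=
    (ENNReal.mul_le_mul_iff_right (by norm_num) (by norm_num)).1 this
  exact_mod_cast hle
end

section
/- Let P ⊆ ℝ² have reference centers with exactly k of them (k finite). Let c₁, …, c_k : [0,1] → ℝ² be continuous maps such that for every t ∈ [0,1] the axis-aligned squares Q_i(t) = c_i(t) + [0,8]² (i = 1, …, k) form a perfect configuration in P. Then for every i there exists a single reference center S of P such that S ⊆ Q_i(t) for all t ∈ [0,1]; that is, in any continuous reconfiguration between perfect configurations, each square contains the same reference center the whole time. -/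
open MeasureTheory

lemma mem_sq8_iff (a z : ℝ × ℝ) :
    z ∈ sq8 a ↔ a.1 ≤ z.1 ∧ z.1 ≤ a.1 + 8 ∧ a.2 ≤ z.2 ∧ z.2 ≤ a.2 + 8 := by
  simp only [sq8, Set.mem_prod, Set.mem_Icc]; tauto

lemma mem_refSq_iff (b : ℤ → ℝ) (p : ℤ × ℤ) (z : ℝ × ℝ) :
    z ∈ refSq b p ↔
      8 * (p.1 : ℝ) + b p.2 ≤ z.1 ∧ z.1 ≤ 8 * (p.1 : ℝ) + b p.2 + 4 ∧
      8 * (p.2 : ℝ) ≤ z.2 ∧ z.2 ≤ 8 * (p.2 : ℝ) + 4 := by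
  simp only [refSq, Set.mem_prod, Set.mem_Icc]; tauto

lemma mem_interior_sq8_iff (a z : ℝ × ℝ) :
    z ∈ interior (sq8 a) ↔ a.1 < z.1 ∧ z.1 < a.1 + 8 ∧ a.2 < z.2 ∧ z.2 < a.2 + 8 := by
  rw [sq8, interior_prod_eq, interior_Icc, interior_Icc]
  simp [Set.mem_prod, Set.mem_Ioo, and_assoc]

lemma mem_interior_refSq_iff (b : ℤ → ℝ) (p : ℤ × ℤ) (z : ℝ × ℝ) :
    z ∈ interior (refSq b p) ↔
      8 * (p.1 : ℝ) + b p.2 < z.1 ∧ z.1 < 8 * (p.1 : ℝ) + b p.2 + 4 ∧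
      8 * (p.2 : ℝ) < z.2 ∧ z.2 < 8 * (p.2 : ℝ) + 4 := by
  rw [refSq, interior_prod_eq, interior_Icc, interior_Icc]
  simp [Set.mem_prod, Set.mem_Ioo, and_assoc]

lemma refSq_subset_sq8_iff (b : ℤ → ℝ) (p : ℤ × ℤ) (a : ℝ × ℝ) :
    refSq b p ⊆ sq8 a ↔
      a.1 ≤ 8 * (p.1 : ℝ) + b p.2 ∧ 8 * (p.1 : ℝ) + b p.2 + 4 ≤ a.1 + 8 ∧
      a.2 ≤ 8 * (p.2 : ℝ) ∧ 8 * (p.2 : ℝ) + 4 ≤ a.2 + 8 := by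
  constructor
  · intro h
    have h1 := h (a := (8 * (p.1 : ℝ) + b p.2, 8 * (p.2 : ℝ)))
      (by rw [mem_refSq_iff]; norm_num)
    have h2 := h (a := (8 * (p.1 : ℝ) + b p.2 + 4, 8 * (p.2 : ℝ) + 4))
      (by rw [mem_refSq_iff]; norm_num)
    rw [mem_sq8_iff] at h1 h2
    exact ⟨h1.1, h2.2.1, h1.2.2.1, h2.2.2.2⟩
  · rintro ⟨h1, h2, h3, h4⟩
    rw [refSq, sq8]
    exact Set.prod_mono (Set.Icc_subset_Icc h1 (by linarith))
      (Set.Icc_subset_Icc h3 (by linarith))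

/-- a point in the interior of `refSq p` and in `sq8 a`, given the corner of
`refSq p` lies in the half-open version of `sq8 a`. -/
lemma aux_pt (b : ℤ → ℝ) (p : ℤ × ℤ) (a : ℝ × ℝ)
    (h1 : a.1 ≤ 8 * (p.1 : ℝ) + b p.2) (h2 : 8 * (p.1 : ℝ) + b p.2 < a.1 + 8)
    (h3 : a.2 ≤ 8 * (p.2 : ℝ)) (h4 : 8 * (p.2 : ℝ) < a.2 + 8) :
    (interior (refSq b p) ∩ sq8 a).Nonempty := by
  set L := 8 * (p.1 : ℝ) + b p.2 with hL
  set B := 8 * (p.2 : ℝ) with hB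
  refine ⟨((L + min (L + 4) (a.1 + 8)) / 2, (B + min (B + 4) (a.2 + 8)) / 2), ?_, ?_⟩
  · rw [mem_interior_refSq_iff]
    have m1 := min_le_left (L + 4) (a.1 + 8)
    have m2 : L < min (L + 4) (a.1 + 8) := lt_min (by linarith) h2
    have m3 := min_le_left (B + 4) (a.2 + 8)
    have m4 : B < min (B + 4) (a.2 + 8) := lt_min (by linarith) h4
    refine ⟨by linarith, by linarith, by linarith, by linarith⟩
  · rw [mem_sq8_iff]
    have m1 := min_le_right (L + 4) (a.1 + 8)
    have m2 : L < min (L + 4) (a.1 + 8) := lt_min (by linarith) h2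
    have m3 := min_le_right (B + 4) (a.2 + 8)
    have m4 : B < min (B + 4) (a.2 + 8) := lt_min (by linarith) h4
    exact ⟨by linarith, by linarith, by linarith, by linarith⟩

/-- two 8×8 squares whose half-open versions share a point have overlapping
interiors. -/
lemma aux_overlap (u v z : ℝ × ℝ)
    (hu1 : u.1 ≤ z.1) (hu2 : z.1 < u.1 + 8) (hu3 : u.2 ≤ z.2) (hu4 : z.2 < u.2 + 8)
    (hv1 : v.1 ≤ z.1) (hv2 : z.1 < v.1 + 8) (hv3 : v.2 ≤ z.2) (hv4 : z.2 < v.2 + 8) :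
    (interior (sq8 u) ∩ interior (sq8 v)).Nonempty := by
  refine ⟨((max u.1 v.1 + min (u.1 + 8) (v.1 + 8)) / 2,
           (max u.2 v.2 + min (u.2 + 8) (v.2 + 8)) / 2), ?_, ?_⟩ <;>
  · rw [mem_interior_sq8_iff]
    have a1 := le_max_left u.1 v.1
    have a2 := le_max_right u.1 v.1
    have a3 := min_le_left (u.1 + 8) (v.1 + 8)
    have a4 := min_le_right (u.1 + 8) (v.1 + 8)
    have a5 : max u.1 v.1 < min (u.1 + 8) (v.1 + 8) :=
      lt_of_le_of_lt (max_le hu1 hv1) (lt_min hu2 hv2)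
    have b1 := le_max_left u.2 v.2
    have b2 := le_max_right u.2 v.2
    have b3 := min_le_left (u.2 + 8) (v.2 + 8)
    have b4 := min_le_right (u.2 + 8) (v.2 + 8)
    have b5 : max u.2 v.2 < min (u.2 + 8) (v.2 + 8) :=
      lt_of_le_of_lt (max_le hu3 hv3) (lt_min hu4 hv4)
    exact ⟨by linarith, by linarith, by linarith, by linarith⟩

lemma aux_ceil (t : ℝ) : t ≤ 8 * (⌈t / 8⌉ : ℝ) ∧ 8 * (⌈t / 8⌉ : ℝ) < t + 8 := by
  have h1 := Int.le_ceil (t / 8)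
  have h2 := Int.ceil_lt_add_one (t / 8)
  constructor <;> nlinarith

lemma aux_closure (a : ℝ × ℝ) : closure (interior (sq8 a)) = sq8 a := by
  rw [sq8, interior_prod_eq, interior_Icc, interior_Icc, closure_prod_eq,
    closure_Ioo (by linarith : a.1 ≠ a.1 + 8), closure_Ioo (by linarith : a.2 ≠ a.2 + 8)]

/-- Extremal lemma: if the (lexicographically minimal in (y,x)) center's corner lies
in the half-open square, the whole reference square is contained in the square. -/
lemma aux_extremal (b : ℤ → ℝ) (C : Finset (ℤ × ℤ)) (a : ℝ × ℝ)
    (hQ : ∀ p : ℤ × ℤ, (interior (refSq b p) ∩ sq8 a).Nonempty → p ∈ C)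
    (X Y : ℤ)
    (hminY : ∀ q ∈ C, Y ≤ q.2)
    (hminX : ∀ q ∈ C, q.2 = Y → X ≤ q.1)
    (h1 : a.1 ≤ 8 * (X : ℝ) + b Y) (h2 : 8 * (X : ℝ) + b Y < a.1 + 8)
    (h3 : a.2 ≤ 8 * (Y : ℝ)) (h4 : 8 * (Y : ℝ) < a.2 + 8) :
    refSq b (X, Y) ⊆ sq8 a := by
  rw [refSq_subset_sq8_iff]
  have hvert : 8 * (Y : ℝ) + 4 ≤ a.2 + 8 := by
    by_contra hcon
    push_neg at hcon
    -- a.2 < 8Y - 4 : the square pokes into row Y - 1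
    have ha2 : a.2 < 8 * (Y : ℝ) - 4 := by linarith
    set x' : ℤ := ⌈(a.1 - b (Y - 1)) / 8⌉ with hx'
    have hc := aux_ceil (a.1 - b (Y - 1))
    set ξ : ℝ := 8 * (x' : ℝ) + b (Y - 1) with hξ
    have hξ1 : a.1 ≤ ξ := by rw [hξ]; linarith [hc.1]
    have hξ2 : ξ < a.1 + 8 := by rw [hξ]; linarith [hc.2]
    have hmem : ((x', Y - 1) : ℤ × ℤ) ∈ C := by
      apply hQ
      refine ⟨((ξ + min (ξ + 4) (a.1 + 8)) / 2,
               (max a.2 (8 * (Y : ℝ) - 8) + (8 * (Y : ℝ) - 4)) / 2), ?_, ?_⟩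
      · rw [mem_interior_refSq_iff]
        have m1 := min_le_left (ξ + 4) (a.1 + 8)
        have m2 : ξ < min (ξ + 4) (a.1 + 8) := lt_min (by linarith) hξ2
        have n1 := le_max_left a.2 (8 * (Y : ℝ) - 8)
        have n2 := le_max_right a.2 (8 * (Y : ℝ) - 8)
        have n3 : max a.2 (8 * (Y : ℝ) - 8) < 8 * (Y : ℝ) - 4 :=
          max_lt ha2 (by linarith)
        push_cast
        refine ⟨by linarith, by linarith, by linarith, by linarith⟩
      · rw [mem_sq8_iff]
        have m1 := min_le_right (ξ + 4) (a.1 + 8)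
        have m2 : ξ < min (ξ + 4) (a.1 + 8) := lt_min (by linarith) hξ2
        have n1 := le_max_left a.2 (8 * (Y : ℝ) - 8)
        have n3 : max a.2 (8 * (Y : ℝ) - 8) < 8 * (Y : ℝ) - 4 :=
          max_lt ha2 (by linarith)
        exact ⟨by linarith, by linarith, by linarith, by linarith⟩
    have := hminY _ hmem
    simp only at this
    omega
  have hhor : 8 * (X : ℝ) + b Y + 4 ≤ a.1 + 8 := by
    by_contra hcon
    push_neg at hcon
    have ha1 : a.1 < 8 * (X : ℝ) + b Y - 4 := by linarith
    set L : ℝ := 8 * (X : ℝ) + b Y with hLdef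
    have hmem : ((X - 1, Y) : ℤ × ℤ) ∈ C := by
      apply hQ
      refine ⟨((max a.1 (L - 8) + (L - 4)) / 2,
               (8 * (Y : ℝ) + min (8 * (Y : ℝ) + 4) (a.2 + 8)) / 2), ?_, ?_⟩
      · rw [mem_interior_refSq_iff]
        have n1 := le_max_left a.1 (L - 8)
        have n2 := le_max_right a.1 (L - 8)
        have n3 : max a.1 (L - 8) < L - 4 := max_lt ha1 (by linarith)
        have m1 := min_le_left (8 * (Y : ℝ) + 4) (a.2 + 8)
        have m2 : 8 * (Y : ℝ) < min (8 * (Y : ℝ) + 4) (a.2 + 8) :=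
          lt_min (by linarith) h4
        push_cast
        refine ⟨by linarith, by linarith, by linarith, by linarith⟩
      · rw [mem_sq8_iff]
        have n1 := le_max_left a.1 (L - 8)
        have n3 : max a.1 (L - 8) < L - 4 := max_lt ha1 (by linarith)
        have m1 := min_le_right (8 * (Y : ℝ) + 4) (a.2 + 8)
        have m2 : 8 * (Y : ℝ) < min (8 * (Y : ℝ) + 4) (a.2 + 8) :=
          lt_min (by linarith) h4
        exact ⟨by linarith, by linarith, by linarith, by linarith⟩
    have hy : ((X - 1, Y) : ℤ × ℤ).2 = Y := rfl
    have := hminX _ hmem hy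
    simp only at this
    omega
  exact ⟨h1, hhor, h3, hvert⟩

lemma aux_core (b : ℤ → ℝ) :
    ∀ (k : ℕ) (C : Finset (ℤ × ℤ)), C.card = k → ∀ (c : Fin k → ℝ × ℝ),
      (∀ i j, i ≠ j → interior (sq8 (c i)) ∩ interior (sq8 (c j)) = ∅) →
      (∀ (j : Fin k) (p : ℤ × ℤ), (interior (refSq b p) ∩ sq8 (c j)).Nonempty → p ∈ C) →
      ∀ j, ∃ p ∈ C, refSq b p ⊆ sq8 (c j) := by
  intro k
  induction k with
  | zero => intro C hC c _ _ j; exact j.elim0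
  | succ k ih =>
    intro C hC c hdisj hH
    have hCne : C.Nonempty := Finset.card_pos.mp (by omega)
    -- minimal center in lexicographic (y, x) order
    set Y : ℤ := (C.image Prod.snd).min' (hCne.image _) with hYdef
    have hYle : ∀ q ∈ C, Y ≤ q.2 := fun q hq =>
      Finset.min'_le _ _ (Finset.mem_image_of_mem _ hq)
    obtain ⟨q0, hq0, hq0Y⟩ : ∃ q ∈ C, q.2 = Y := by
      have := (C.image Prod.snd).min'_mem (hCne.image _)
      rw [Finset.mem_image] at this
      obtain ⟨q, hq, h⟩ := this
      exact ⟨q, hq, h⟩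
    set D : Finset (ℤ × ℤ) := C.filter (fun q => q.2 = Y) with hDdef
    have hDne : D.Nonempty := ⟨q0, Finset.mem_filter.mpr ⟨hq0, hq0Y⟩⟩
    set X : ℤ := (D.image Prod.fst).min' (hDne.image _) with hXdef
    have hXle : ∀ q ∈ C, q.2 = Y → X ≤ q.1 := fun q hq hqY =>
      Finset.min'_le _ _ (Finset.mem_image_of_mem _ (Finset.mem_filter.mpr ⟨hq, hqY⟩))
    have hpstar : ((X, Y) : ℤ × ℤ) ∈ C := by
      have := (D.image Prod.fst).min'_mem (hDne.image _)
      rw [Finset.mem_image] at this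
      obtain ⟨q, hq, h⟩ := this
      rw [hDdef, Finset.mem_filter] at hq
      have hqe : q = (X, Y) := Prod.ext h hq.2
      exact hqe ▸ hq.1
    -- corner markers
    set yj : Fin (k + 1) → ℤ := fun j => ⌈(c j).2 / 8⌉ with hyj
    set xj : Fin (k + 1) → ℤ := fun j => ⌈((c j).1 - b (yj j)) / 8⌉ with hxj
    set Pm : Fin (k + 1) → ℤ × ℤ := fun j => (xj j, yj j) with hPm
    have hmark : ∀ j, (c j).1 ≤ 8 * ((xj j : ℤ) : ℝ) + b (yj j) ∧
        8 * ((xj j : ℤ) : ℝ) + b (yj j) < (c j).1 + 8 ∧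
        (c j).2 ≤ 8 * ((yj j : ℤ) : ℝ) ∧ 8 * ((yj j : ℤ) : ℝ) < (c j).2 + 8 := by
      intro j
      have hcy := aux_ceil ((c j).2)
      have hcx := aux_ceil ((c j).1 - b (yj j))
      exact ⟨by linarith [hcx.1], by linarith [hcx.2], hcy.1, hcy.2⟩
    have hPC : ∀ j, Pm j ∈ C := by
      intro j
      obtain ⟨m1, m2, m3, m4⟩ := hmark j
      exact hH j (Pm j) (aux_pt b (Pm j) (c j) m1 m2 m3 m4)
    have hInj : Function.Injective Pm := by
      intro i j hij
      by_contra hne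
      have hmi := hmark i
      have hmj := hmark j
      have hz := aux_overlap (c i) (c j)
        (8 * ((xj i : ℤ) : ℝ) + b (yj i), 8 * ((yj i : ℤ) : ℝ))
        hmi.1 hmi.2.1 hmi.2.2.1 hmi.2.2.2
        (by rw [show xj i = xj j from congrArg Prod.fst hij,
                show yj i = yj j from congrArg Prod.snd hij]; exact hmj.1)
        (by rw [show xj i = xj j from congrArg Prod.fst hij,
                show yj i = yj j from congrArg Prod.snd hij]; exact hmj.2.1)
        (by rw [show yj i = yj j from congrArg Prod.snd hij]; exact hmj.2.2.1)
        (by rw [show yj i = yj j from congrArg Prod.snd hij]; exact hmj.2.2.2)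
      rw [hdisj i j hne] at hz
      exact Set.not_nonempty_empty hz
    -- surjectivity onto C
    have hsurj : ∃ a : Fin (k + 1), Pm a = (X, Y) := by
      set g : Fin (k + 1) → {q // q ∈ C} := fun j => ⟨Pm j, hPC j⟩ with hg
      have hginj : Function.Injective g := fun i j hij =>
        hInj (congrArg Subtype.val hij)
      have hbij : Function.Bijective g := by
        rw [Fintype.bijective_iff_injective_and_card]
        refine ⟨hginj, ?_⟩
        rw [Fintype.card_coe, hC, Fintype.card_fin]
      obtain ⟨a, ha⟩ := hbij.2 ⟨(X, Y), hpstar⟩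
      exact ⟨a, congrArg Subtype.val ha⟩
    obtain ⟨a, haP⟩ := hsurj
    have haX : xj a = X := congrArg Prod.fst haP
    have haY : yj a = Y := congrArg Prod.snd haP
    have hma := hmark a
    rw [haX, haY] at hma
    have hcontain : refSq b (X, Y) ⊆ sq8 (c a) :=
      aux_extremal b C (c a) (fun p hp => hH a p hp) X Y hYle hXle
        hma.1 hma.2.1 hma.2.2.1 hma.2.2.2
    -- induction
    set C' : Finset (ℤ × ℤ) := C.erase (X, Y) with hC'def
    have hC' : C'.card = k := by
      rw [hC'def, Finset.card_erase_of_mem hpstar, hC]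
      omega
    set c' : Fin k → ℝ × ℝ := fun i => c (a.succAbove i) with hc'
    have hdisj' : ∀ i j, i ≠ j → interior (sq8 (c' i)) ∩ interior (sq8 (c' j)) = ∅ :=
      fun i j hij => hdisj _ _ (fun h => hij (Fin.succAbove_right_injective h))
    have hH' : ∀ (j : Fin k) (p : ℤ × ℤ),
        (interior (refSq b p) ∩ sq8 (c' j)).Nonempty → p ∈ C' := by
      intro j p hp
      have hpC := hH _ p hp
      rw [hC'def, Finset.mem_erase]
      refine ⟨?_, hpC⟩
      rintro rfl
      obtain ⟨z, hz1, hz2⟩ := hp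
      have hz3 : z ∈ interior (sq8 (c a)) := interior_mono hcontain hz1
      have hcl : z ∈ closure (interior (sq8 (c (a.succAbove j)))) := by
        rw [aux_closure]; exact hz2
      have hne := mem_closure_iff.mp hcl _ isOpen_interior hz3
      rw [hdisj a (a.succAbove j) (Fin.succAbove_ne a j).symm] at hne
      exact Set.not_nonempty_empty hne
    intro j
    by_cases hj : j = a
    · exact ⟨(X, Y), hpstar, hj ▸ hcontain⟩
    · obtain ⟨i, hi⟩ := Fin.exists_succAbove_eq hj
      obtain ⟨p, hpC', hsub⟩ := ih C' hC' c' hdisj' hH' i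
      exact ⟨p, Finset.erase_subset _ _ hpC', by rw [← hi]; exact hsub⟩

lemma aux_unique (b : ℤ → ℝ) (p q : ℤ × ℤ) (a : ℝ × ℝ)
    (hp : refSq b p ⊆ sq8 a) (hq : refSq b q ⊆ sq8 a) : p = q := by
  rw [refSq_subset_sq8_iff] at hp hq
  obtain ⟨p1, p2, p3, p4⟩ := hp
  obtain ⟨q1, q2, q3, q4⟩ := hq
  have hy : p.2 = q.2 := by
    have h1 : (8 * p.2 : ℤ) ≤ 8 * q.2 + 4 := by
      have : 8 * (p.2 : ℝ) ≤ 8 * (q.2 : ℝ) + 4 := by linarith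
      exact_mod_cast this
    have h2 : (8 * q.2 : ℤ) ≤ 8 * p.2 + 4 := by
      have : 8 * (q.2 : ℝ) ≤ 8 * (p.2 : ℝ) + 4 := by linarith
      exact_mod_cast this
    omega
  have hx : p.1 = q.1 := by
    rw [hy] at p1 p2
    have h1 : (8 * p.1 : ℤ) ≤ 8 * q.1 + 4 := by
      have : 8 * (p.1 : ℝ) ≤ 8 * (q.1 : ℝ) + 4 := by linarith
      exact_mod_cast this
    have h2 : (8 * q.1 : ℤ) ≤ 8 * p.1 + 4 := by
      have : 8 * (q.1 : ℝ) ≤ 8 * (p.1 : ℝ) + 4 := by linarith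
      exact_mod_cast this
    omega
  exact Prod.ext hx hy

theorem stmt_7 (b : ℤ → ℝ) (hb : ∀ y : ℤ, b y ∈ Set.Ico (0 : ℝ) 8) (P : Set (ℝ × ℝ))
    (hP : HasRefCenters b P) (k : ℕ)
    (hfin : (refCenters b P).Finite) (hcard : (refCenters b P).ncard = k)
    (c : Fin k → ℝ → ℝ × ℝ) (hcont : ∀ i, ContinuousOn (c i) (Set.Icc 0 1))
    (hconf : ∀ t ∈ Set.Icc (0 : ℝ) 1, IsConfig P (fun i => c i t)) :
    ∀ i : Fin k, ∃ p : ℤ × ℤ, p ∈ refCenters b P ∧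
      ∀ t ∈ Set.Icc (0 : ℝ) 1, refSq b p ⊆ sq8 (c i t) := by
  intro i
  set C : Finset (ℤ × ℤ) := hfin.toFinset with hCdef
  have hCk : C.card = k := by
    rw [hCdef, ← Set.ncard_eq_toFinset_card _ hfin, hcard]
  -- at every time, every square contains a reference center
  have hcore : ∀ t ∈ Set.Icc (0 : ℝ) 1, ∀ j : Fin k,
      ∃ p ∈ C, refSq b p ⊆ sq8 (c j t) := by
    intro t ht
    refine aux_core b k C hCk (fun j => c j t) (hconf t ht).2 ?_
    intro j p hne
    obtain ⟨z, hz1, hz2⟩ := hne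
    have hzP : z ∈ P := (hconf t ht).1 j hz2
    rcases hP p with h | h
    · exact (Set.Finite.mem_toFinset hfin).mpr h
    · exact absurd (Set.mem_inter hz1 hzP) (h ▸ Set.notMem_empty z)
  -- topology on the interval
  set T : Set ℝ := Set.Icc 0 1 with hT
  haveI : PreconnectedSpace T := Subtype.preconnectedSpace isPreconnected_Icc
  have hfc : Continuous (T.restrict (c i)) := (hcont i).restrict
  have hclosed : ∀ p : ℤ × ℤ, IsClosed {t : T | refSq b p ⊆ sq8 (c i t.1)} := by
    intro p
    have heq : {t : T | refSq b p ⊆ sq8 (c i t.1)} =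
        T.restrict (c i) ⁻¹' {a : ℝ × ℝ |
          a.1 ≤ 8 * (p.1 : ℝ) + b p.2 ∧ 8 * (p.1 : ℝ) + b p.2 + 4 ≤ a.1 + 8 ∧
          a.2 ≤ 8 * (p.2 : ℝ) ∧ 8 * (p.2 : ℝ) + 4 ≤ a.2 + 8} := by
      ext t
      simp only [Set.mem_setOf_eq, Set.mem_preimage, Set.restrict_apply]
      exact refSq_subset_sq8_iff b p (c i t.1)
    rw [heq]
    refine (IsClosed.preimage hfc ?_)
    refine IsClosed.inter (isClosed_le continuous_fst continuous_const) ?_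
    refine IsClosed.inter (isClosed_le continuous_const (continuous_fst.add continuous_const)) ?_
    exact IsClosed.inter (isClosed_le continuous_snd continuous_const)
      (isClosed_le continuous_const (continuous_snd.add continuous_const))
  have h0 : (0 : ℝ) ∈ T := by rw [hT]; constructor <;> norm_num
  obtain ⟨p₀, hp₀C, hp₀⟩ := hcore 0 h0 i
  set U : Set T := {t : T | refSq b p₀ ⊆ sq8 (c i t.1)} with hU
  have hUc : Uᶜ = ⋃ q ∈ C.erase p₀, {t : T | refSq b q ⊆ sq8 (c i t.1)} := by
    ext t
    simp only [Set.mem_compl_iff, hU, Set.mem_setOf_eq, Set.mem_iUnion, Finset.mem_erase]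
    constructor
    · intro hnot
      obtain ⟨q, hqC, hqsub⟩ := hcore t.1 t.2 i
      refine ⟨q, ⟨⟨?_, hqC⟩, hqsub⟩⟩
      rintro rfl
      exact hnot hqsub
    · rintro ⟨q, ⟨⟨hqne, hqC⟩, hqsub⟩⟩ hcon
      exact hqne (aux_unique b q p₀ (c i t.1) hqsub hcon)
  have hUclopen : IsClopen U := by
    constructor
    · exact hclosed p₀
    · rw [← isClosed_compl_iff, hUc]
      exact Set.Finite.isClosed_biUnion (Finset.finite_toSet _) (fun q _ => hclosed q)
  have hUne : U.Nonempty := ⟨⟨0, h0⟩, hp₀⟩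
  have hUuniv : U = Set.univ := hUclopen.eq_univ hUne
  refine ⟨p₀, (Set.Finite.mem_toFinset hfin).mp hp₀C, ?_⟩
  intro t ht
  have : (⟨t, ht⟩ : T) ∈ U := by rw [hUuniv]; trivial
  exact this
end

section
/- Given an NCL structure and a feasible orientation o, the assignment α(o) satisfies the monotone formula Φ_G. -/
open Finset

variable {V E : Type*}

/-- `e` is incident to `v` (as tail or head in the reference orientation). -/
def Incident (t h : E → V) (v : V) (e : E) : Prop :=
  t e = v ∨ h e = v

/-- The head of edge `e` under orientation `o` (`o e = true` means `e` keeps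
its reference direction). -/
def headUnder (t h : E → V) (o : E → Bool) (e : E) : V :=
  if o e then h e else t e

/-- The structural axioms of an NCL instance: no self-loops, and every vertex is
incident to exactly three edges, which are either all blue, or one blue and two red. -/
def NCLAxioms (t h : E → V) (blue : E → Bool) : Prop :=
  (∀ e, t e ≠ h e) ∧
    ∀ v : V, ∃ e₁ e₂ e₃ : E, e₁ ≠ e₂ ∧ e₁ ≠ e₃ ∧ e₂ ≠ e₃ ∧
      Incident t h v e₁ ∧ Incident t h v e₂ ∧ Incident t h v e₃ ∧
      (∀ e, Incident t h v e → e = e₁ ∨ e = e₂ ∨ e = e₃) ∧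
      ((blue e₁ = true ∧ blue e₂ = true ∧ blue e₃ = true) ∨
        (blue e₁ = true ∧ blue e₂ = false ∧ blue e₃ = false))

/-- An orientation is feasible if every vertex has weighted in-degree at least two,
where blue edges count with multiplicity `2` and red edges with multiplicity `1`. -/
def Feasible [Fintype E] [DecidableEq V] (t h : E → V) (blue : E → Bool)
    (o : E → Bool) : Prop :=
  ∀ v : V, 2 ≤ ∑ e ∈ Finset.univ.filter (fun e => headUnder t h o e = v),
    (if blue e then 2 else 1)

/-- The side of vertex `v` on edge `e`: `true` if `v` is the head, `false` otherwise. -/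
def side (t h : E → V) [DecidableEq V] (v : V) (e : E) : Bool :=
  decide (h e = v)

/-- The monotone formula `Φ_G` on assignments `σ : E × Bool → Bool`. -/
def PhiG (t h : E → V) [DecidableEq V] (blue : E → Bool)
    (σ : E × Bool → Bool) : Prop :=
  (∀ e : E, σ (e, true) = false ∨ σ (e, false) = false) ∧
  (∀ v : V, (∀ e, Incident t h v e → blue e = true) →
    ∃ e, Incident t h v e ∧ σ (e, side t h v e) = true) ∧
  (∀ v : V, ∀ bl r : E, Incident t h v bl → blue bl = true →
    Incident t h v r → blue r = false →
    (σ (bl, side t h v bl) = true ∨ σ (r, side t h v r) = true))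

/-- The assignment `α(o)` associated to an orientation `o`:
`α(o)(e, true) = o e` and `α(o)(e, false) = ¬ o e`. -/
def alpha (o : E → Bool) : E × Bool → Bool :=
  fun p => if p.2 then o p.1 else !o p.1

/-- Two satisfying assignments of `Φ` are connected in `G(Φ)`: there is a finite
sequence of assignments satisfying `Φ` from the first to the second in which
consecutive assignments differ in the value of exactly one variable. -/
def ConnectedIn {X : Type*} (Φ : (X → Bool) → Prop) (a b : X → Bool) : Prop :=
  ∃ (n : ℕ) (f : ℕ → X → Bool), f 0 = a ∧ f n = b ∧ (∀ i ≤ n, Φ (f i)) ∧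
    ∀ i < n, ∃! x : X, f i x ≠ f (i + 1) x

/-- Two feasible orientations are NCL-reachable from one another: there is a finite
sequence of feasible orientations from the first to the second in which consecutive
orientations differ on exactly one edge. -/
def NCLReachable [Fintype E] [DecidableEq V] (t h : E → V) (blue : E → Bool)
    (o o' : E → Bool) : Prop :=
  ∃ (n : ℕ) (f : ℕ → E → Bool), f 0 = o ∧ f n = o' ∧
    (∀ i ≤ n, Feasible t h blue (f i)) ∧
    ∀ i < n, ∃! e : E, f i e ≠ f (i + 1) e


lemma alpha_side_iff_aux (t h : E → V) [DecidableEq V] (o : E → Bool) {v : V} {e : E}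
    (hne : t e ≠ h e) (hinc : Incident t h v e) :
    alpha o (e, side t h v e) = true ↔ headUnder t h o e = v := by
  rcases hinc with he | he
  · have hsv : h e ≠ v := fun hc => hne (he.trans hc.symm)
    have hs : side t h v e = false := by simp [side, hsv]
    cases hob : o e <;> simp [alpha, hs, hob, headUnder, he, hsv]
  · have hs : side t h v e = true := by simp [side, he]
    have htv : t e ≠ v := fun hc => hne (hc.trans he.symm)
    cases hob : o e <;> simp [alpha, hs, hob, headUnder, he, htv]

theorem stmt_11 [Fintype E] [DecidableEq V] (t h : E → V) (blue : E → Bool)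
    (hNCL : NCLAxioms t h blue) (o : E → Bool) (ho : Feasible t h blue o) :
    PhiG t h blue (alpha o) := by
  obtain ⟨hloop, hdeg⟩ := hNCL
  refine ⟨?_, ?_, ?_⟩
  · intro e
    cases hob : o e <;> simp [alpha, hob]
  · intro v _
    have h2 := ho v
    have hne : (Finset.univ.filter (fun e => headUnder t h o e = v)).Nonempty := by
      by_contra hc
      rw [Finset.not_nonempty_iff_eq_empty] at hc
      rw [hc] at h2
      simp at h2
    obtain ⟨e, he⟩ := hne
    simp only [Finset.mem_filter] at he
    have hhead : headUnder t h o e = v := he.2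
    have hinc : Incident t h v e := by
      unfold headUnder at hhead
      cases hob : o e <;> rw [hob] at hhead <;> simp at hhead
      · exact Or.inl hhead
      · exact Or.inr hhead
    exact ⟨e, hinc, (alpha_side_iff_aux t h o (hloop e) hinc).mpr hhead⟩
  · intro v bl r hbl hblblue hr hrred
    by_contra hcon
    push_neg at hcon
    obtain ⟨hc1, hc2⟩ := hcon
    have hblv : headUnder t h o bl ≠ v := fun hh =>
      hc1 ((alpha_side_iff_aux t h o (hloop bl) hbl).mpr hh)
    have hrv : headUnder t h o r ≠ v := fun hh =>
      hc2 ((alpha_side_iff_aux t h o (hloop r) hr).mpr hh)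
    obtain ⟨e₁, e₂, e₃, h12, h13, h23, hi1, hi2, hi3, hcomp, hcol⟩ := hdeg v
    rcases hcol with ⟨hb1, hb2, hb3⟩ | ⟨hb1, hb2, hb3⟩
    · rcases hcomp r hr with rfl | rfl | rfl <;> simp_all
    · have hble : bl = e₁ := by
        rcases hcomp bl hbl with rfl | rfl | rfl
        · rfl
        · rw [hblblue] at hb2; exact absurd hb2 (by simp)
        · rw [hblblue] at hb3; exact absurd hb3 (by simp)
      have hrcase : r = e₂ ∨ r = e₃ := by
        rcases hcomp r hr with rfl | rfl | rfl
        · rw [hrred] at hb1; exact absurd hb1 (by simp)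
        · exact Or.inl rfl
        · exact Or.inr rfl
      -- the third edge
      obtain ⟨e', he'red, hsub⟩ :
          ∃ e' : E, blue e' = false ∧
            (Finset.univ.filter (fun e => headUnder t h o e = v)) ⊆ {e'} := by
        rcases hrcase with rfl | rfl
        · refine ⟨e₃, hb3, ?_⟩
          intro e he
          simp only [Finset.mem_filter] at he
          have hinc : Incident t h v e := by
            have hhead := he.2
            unfold headUnder at hhead
            cases hob : o e <;> rw [hob] at hhead <;> simp at hhead
            · exact Or.inl hhead
            · exact Or.inr hhead
          rcases hcomp e hinc with rfl | rfl | rfl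
          · exact absurd he.2 (hble ▸ hblv)
          · exact absurd he.2 hrv
          · simp
        · refine ⟨e₂, hb2, ?_⟩
          intro e he
          simp only [Finset.mem_filter] at he
          have hinc : Incident t h v e := by
            have hhead := he.2
            unfold headUnder at hhead
            cases hob : o e <;> rw [hob] at hhead <;> simp at hhead
            · exact Or.inl hhead
            · exact Or.inr hhead
          rcases hcomp e hinc with rfl | rfl | rfl
          · exact absurd he.2 (hble ▸ hblv)
          · simp
          · exact absurd he.2 hrv
      have h2 := ho v
      have hle : ∑ e ∈ Finset.univ.filter (fun e => headUnder t h o e = v),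
          (if blue e then 2 else 1) ≤ ∑ e ∈ ({e'} : Finset E), (if blue e then 2 else 1) :=
        Finset.sum_le_sum_of_subset hsub
      rw [Finset.sum_singleton, he'red] at hle
      simp at hle
      omega
end

section
/- Given an NCL structure and an assignment σ : E × Bool → Bool satisfying the monotone formula Φ_G, the orientation o_σ defined by o_σ(e) := ¬σ(e, false) (i.e., e is reversed exactly when σ(e, false) = true) is feasible. -/
open Finset

variable {V E : Type*}

theorem stmt_12 [Fintype E] [DecidableEq V] (t h : E → V) (blue : E → Bool)
    (hNCL : NCLAxioms t h blue) (σ : E × Bool → Bool) (hσ : PhiG t h blue σ) :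
    Feasible t h blue (fun e => !σ (e, false)) := by
  classical
  intro v
  obtain ⟨hloop, hdeg⟩ := hNCL
  obtain ⟨e₁, e₂, e₃, h12, h13, h23, hi1, hi2, hi3, hall, hcol⟩ := hdeg v
  obtain ⟨hI, hII, hIII⟩ := hσ
  have key : ∀ e, Incident t h v e → σ (e, side t h v e) = true →
      headUnder t h (fun e => !σ (e, false)) e = v := by
    intro e hinc hs
    unfold headUnder side at *
    by_cases hhe : h e = v
    · have hs' : σ (e, true) = true := by
        rw [show (decide (h e = v)) = true by simp [hhe]] at hs; exact hs
      rcases hI e with h1 | h1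
      · rw [h1] at hs'; simp at hs'
      · simp [h1, hhe]
    · have hte : t e = v := by rcases hinc with h' | h' <;> tauto
      have hs' : σ (e, false) = true := by
        rw [show (decide (h e = v)) = false by simp [hhe]] at hs; exact hs
      simp [hs', hte]
  have mem_filter_of : ∀ e, Incident t h v e → σ (e, side t h v e) = true →
      e ∈ Finset.univ.filter (fun e => headUnder t h (fun e => !σ (e, false)) e = v) := by
    intro e hinc hs
    simp [Finset.mem_filter, key e hinc hs]
  have nonneg : ∀ i ∈ Finset.univ.filter
      (fun e => headUnder t h (fun e => !σ (e, false)) e = v),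
      (0:ℕ) ≤ (if blue i then 2 else 1) := fun i _ => Nat.zero_le _
  rcases hcol with ⟨hb1, hb2, hb3⟩ | ⟨hb1, hb2, hb3⟩
  · have hallb : ∀ e, Incident t h v e → blue e = true := by
      intro e he; rcases hall e he with rfl | rfl | rfl <;> assumption
    obtain ⟨e, hinc, hs⟩ := hII v hallb
    have hb : blue e = true := hallb e hinc
    calc (2:ℕ) = (if blue e then 2 else 1) := by simp [hb]
      _ ≤ _ := Finset.single_le_sum nonneg (mem_filter_of e hinc hs)
  · rcases hIII v e₁ e₂ hi1 hb1 hi2 hb2 with hs | hs2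
    · calc (2:ℕ) = (if blue e₁ then 2 else 1) := by simp [hb1]
        _ ≤ _ := Finset.single_le_sum nonneg (mem_filter_of e₁ hi1 hs)
    · rcases hIII v e₁ e₃ hi1 hb1 hi3 hb3 with hs | hs3
      · calc (2:ℕ) = (if blue e₁ then 2 else 1) := by simp [hb1]
          _ ≤ _ := Finset.single_le_sum nonneg (mem_filter_of e₁ hi1 hs)
      · have hsub : ({e₂, e₃} : Finset E) ⊆
            Finset.univ.filter (fun e => headUnder t h (fun e => !σ (e, false)) e = v) := by
          intro x hx
          rcases Finset.mem_insert.mp hx with rfl | hx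
          · exact mem_filter_of _ hi2 hs2
          · rw [Finset.mem_singleton] at hx; subst hx; exact mem_filter_of _ hi3 hs3
        calc (2:ℕ) = ∑ e ∈ ({e₂, e₃} : Finset E), (if blue e then 2 else 1) := by
              rw [Finset.sum_pair h23]; simp [hb2, hb3]
          _ ≤ _ := Finset.sum_le_sum_of_subset hsub
end

section
/- Given an NCL structure and two feasible orientations o, o' that differ on exactly one edge e, the assignments α(o) and α(o') are connected in G(Φ_G); in fact, the assignment that agrees with α(o) on all variables except that it assigns false to both variables (e, true) and (e, false) also satisfies Φ_G, and the sequence α(o), this intermediate assignment, α(o') changes exactly one variable at each step. -/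
open Finset

variable {V E : Type*}

instance (t h : E → V) [DecidableEq V] (v : V) (e : E) : Decidable (Incident t h v e) :=
  inferInstanceAs (Decidable (_ ∨ _))

lemma alpha_true_iff (o : E → Bool) (e : E) (b : Bool) :
    alpha o (e, b) = true ↔ b = o e := by
  cases b <;> cases hoe : o e <;> simp [alpha, hoe]

lemma headUnder_incident (t h : E → V) (o : E → Bool) {e : E} {v : V}
    (hv : headUnder t h o e = v) : Incident t h v e := by
  unfold headUnder at hv
  unfold Incident
  split at hv <;> simp [hv]

lemma alpha_side [DecidableEq V] (t h : E → V) (o : E → Bool) (hne : ∀ e, t e ≠ h e)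
    (v : V) (e : E) (hinc : Incident t h v e) :
    (alpha o (e, side t h v e) = true ↔ headUnder t h o e = v) := by
  by_cases hh : h e = v
  · cases hoe : o e <;> simp [alpha, side, headUnder, hh, hoe]
    intro hte; exact hne e (hte.trans hh.symm)
  · have hte : t e = v := hinc.resolve_right hh
    cases hoe : o e <;> simp [alpha, side, headUnder, hh, hoe, hte]

lemma key_lemma [Fintype E] [DecidableEq E] [DecidableEq V] (t h : E → V)
    (blue : E → Bool) (v : V)
    (e₁ e₂ e₃ : E) (h12 : e₁ ≠ e₂) (h13 : e₁ ≠ e₃) (h23 : e₂ ≠ e₃)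
    (hcomp : ∀ e, Incident t h v e → e = e₁ ∨ e = e₂ ∨ e = e₃)
    (P : E → Prop) [DecidablePred P]
    (hPinc : ∀ e', P e' → Incident t h v e')
    (hsum : 2 ≤ ∑ e' ∈ Finset.univ.filter P, (if blue e' then 2 else 1)) :
    (P e₁ ∨ P e₂ ∨ P e₃) ∧
      (blue e₂ = false → blue e₃ = false → ¬ P e₁ → P e₂ ∧ P e₃) := by
  constructor
  · by_contra hcon
    push_neg at hcon
    have hempty : Finset.univ.filter P = ∅ := by
      ext x
      simp only [mem_filter, mem_univ, true_and, Finset.notMem_empty, iff_false]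
      intro hPx
      rcases hcomp x (hPinc x hPx) with rfl | rfl | rfl <;> tauto
    rw [hempty] at hsum
    simp at hsum
  · intro hb2 hb3 hnP1
    have hsub : Finset.univ.filter P ⊆ ({e₂, e₃} : Finset E) := by
      intro x hx
      simp only [mem_filter, mem_univ, true_and] at hx
      rcases hcomp x (hPinc x hx) with rfl | rfl | rfl
      · exact absurd hx hnP1
      · simp
      · simp
    have hsum1 : (∑ e' ∈ Finset.univ.filter P, (if blue e' then 2 else 1)) =
        (Finset.univ.filter P).card := by
      rw [Finset.card_eq_sum_ones]
      refine Finset.sum_congr rfl ?_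
      intro x hx
      have hx2 := hsub hx
      simp only [mem_insert, mem_singleton] at hx2
      rcases hx2 with rfl | rfl
      · simp [hb2]
      · simp [hb3]
    rw [hsum1] at hsum
    have hcard2 : ({e₂, e₃} : Finset E).card = 2 := by
      rw [card_insert_of_notMem (by simp [h23]), card_singleton]
    have heq : Finset.univ.filter P = ({e₂, e₃} : Finset E) :=
      Finset.eq_of_subset_of_card_le hsub (by rw [hcard2]; exact hsum)
    constructor
    · have : e₂ ∈ Finset.univ.filter P := by rw [heq]; simp
      simpa using this
    · have : e₃ ∈ Finset.univ.filter P := by rw [heq]; simp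
      simpa using this

lemma phi_general [Fintype E] [DecidableEq E] [DecidableEq V] (t h : E → V)
    (blue : E → Bool) (hNCL : NCLAxioms t h blue) (σ : E × Bool → Bool)
    (h1 : ∀ e', σ (e', true) = false ∨ σ (e', false) = false)
    (hsum : ∀ v : V, 2 ≤ ∑ e' ∈ Finset.univ.filter
        (fun e' => Incident t h v e' ∧ σ (e', side t h v e') = true),
      (if blue e' then 2 else 1)) :
    PhiG t h blue σ := by
  refine ⟨h1, ?_, ?_⟩
  · intro v _
    obtain ⟨e₁, e₂, e₃, h12, h13, h23, hi1, hi2, hi3, hcomp, hcol⟩ := hNCL.2 v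
    have hk := (key_lemma t h blue v e₁ e₂ e₃ h12 h13 h23 hcomp
      (fun e' => Incident t h v e' ∧ σ (e', side t h v e') = true)
      (fun e' he' => he'.1) (hsum v)).1
    rcases hk with hP | hP | hP
    · exact ⟨e₁, hP.1, hP.2⟩
    · exact ⟨e₂, hP.1, hP.2⟩
    · exact ⟨e₃, hP.1, hP.2⟩
  · intro v bl r hibl hbl hir hr
    obtain ⟨e₁, e₂, e₃, h12, h13, h23, hi1, hi2, hi3, hcomp, hcol⟩ := hNCL.2 v
    rcases hcol with ⟨b1, b2, b3⟩ | ⟨b1, b2, b3⟩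
    · rcases hcomp r hir with rfl | rfl | rfl <;> simp_all
    · have hble : bl = e₁ := by
        rcases hcomp bl hibl with rfl | rfl | rfl <;> simp_all
      have hk := (key_lemma t h blue v e₁ e₂ e₃ h12 h13 h23 hcomp
        (fun e' => Incident t h v e' ∧ σ (e', side t h v e') = true)
        (fun e' he' => he'.1) (hsum v)).2 b2 b3
      by_cases hP : Incident t h v e₁ ∧ σ (e₁, side t h v e₁) = true
      · left; rw [hble]; exact hP.2
      · have hk2 := hk hP
        rcases hcomp r hir with rfl | rfl | rfl
        · rw [b1] at hr; exact absurd hr (by simp)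
        · right; exact hk2.1.2
        · right; exact hk2.2.2

lemma filter_alpha [Fintype E] [DecidableEq E] [DecidableEq V] (t h : E → V)
    (hne : ∀ e, t e ≠ h e) (o : E → Bool) (v : V) :
    Finset.univ.filter
        (fun e' => Incident t h v e' ∧ alpha o (e', side t h v e') = true)
      = Finset.univ.filter (fun e' => headUnder t h o e' = v) := by
  ext x
  simp only [mem_filter, mem_univ, true_and]
  constructor
  · rintro ⟨hinc, hσ⟩
    exact (alpha_side t h o hne v x hinc).1 hσ
  · intro hh
    have hinc := headUnder_incident t h o hh
    exact ⟨hinc, (alpha_side t h o hne v x hinc).2 hh⟩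

lemma phi_alpha [Fintype E] [DecidableEq E] [DecidableEq V] (t h : E → V)
    (blue : E → Bool) (hNCL : NCLAxioms t h blue) (o : E → Bool)
    (ho : Feasible t h blue o) : PhiG t h blue (alpha o) := by
  refine phi_general t h blue hNCL (alpha o) ?_ ?_
  · intro e'; cases hoe : o e' <;> simp [alpha, hoe]
  · intro v
    rw [filter_alpha t h hNCL.1 o v]
    exact ho v

theorem stmt_13 [Fintype E] [DecidableEq E] [DecidableEq V] (t h : E → V) (blue : E → Bool)
    (hNCL : NCLAxioms t h blue) (o o' : E → Bool)
    (ho : Feasible t h blue o) (ho' : Feasible t h blue o')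
    (e : E) (he : o e ≠ o' e) (hagree : ∀ e', e' ≠ e → o e' = o' e') :
    PhiG t h blue (fun p => if p.1 = e then false else alpha o p) ∧
    (∃! p : E × Bool, alpha o p ≠ (fun p : E × Bool => if p.1 = e then false else alpha o p) p) ∧
    (∃! p : E × Bool, (fun p : E × Bool => if p.1 = e then false else alpha o p) p ≠ alpha o' p) ∧
    ConnectedIn (PhiG t h blue) (alpha o) (alpha o') := by
  have hne := hNCL.1
  set σmid : E × Bool → Bool := fun p => if p.1 = e then false else alpha o p with hσmid
  -- the key in-degree lemma for the middle assignment
  have hB : ∀ v : V, 2 ≤ ∑ e' ∈ Finset.univ.filter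
      (fun e' => e' ≠ e ∧ headUnder t h o e' = v), (if blue e' then 2 else 1) := by
    intro v
    have ho'e : o' e = !o e := by
      cases hoe : o e <;> cases hoe' : o' e <;> simp_all
    by_cases hv : headUnder t h o e = v
    · have hset : Finset.univ.filter (fun e' => headUnder t h o' e' = v)
          = Finset.univ.filter (fun e' => e' ≠ e ∧ headUnder t h o e' = v) := by
        ext x
        simp only [mem_filter, mem_univ, true_and]
        by_cases hx : x = e
        · subst hx
          have hnv : headUnder t h o' x ≠ v := by
            intro hc
            apply hne x
            unfold headUnder at hv hc
            rw [ho'e] at hc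
            cases hox : o x <;> rw [hox] at hv hc <;> simp at hv hc <;> rw [hv, hc]
          simp [hnv]
        · have heq2 : headUnder t h o' x = headUnder t h o x := by
            unfold headUnder; rw [← hagree x hx]
          simp [heq2, hx]
      rw [← hset]; exact ho' v
    · have hset : Finset.univ.filter (fun e' => headUnder t h o e' = v)
          = Finset.univ.filter (fun e' => e' ≠ e ∧ headUnder t h o e' = v) := by
        ext x
        simp only [mem_filter, mem_univ, true_and]
        constructor
        · intro hx; exact ⟨fun hxe => hv (hxe ▸ hx), hx⟩
        · exact And.right
      rw [← hset]; exact ho v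
  -- PhiG for the middle assignment
  have hphimid : PhiG t h blue σmid := by
    refine phi_general t h blue hNCL σmid ?_ ?_
    · intro e'
      by_cases hee : e' = e
      · left; simp [hσmid, hee]
      · cases hoe : o e' <;> simp [hσmid, hee, alpha, hoe]
    · intro v
      have hset : Finset.univ.filter
          (fun e' => Incident t h v e' ∧ σmid (e', side t h v e') = true)
          = Finset.univ.filter (fun e' => e' ≠ e ∧ headUnder t h o e' = v) := by
        ext x
        simp only [mem_filter, mem_univ, true_and]
        by_cases hx : x = e
        · subst hx
          simp [hσmid]
        · have hmx : σmid (x, side t h v x) = alpha o (x, side t h v x) := by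
            simp [hσmid, hx]
          rw [hmx]
          constructor
          · rintro ⟨hinc, hσ⟩
            exact ⟨hx, (alpha_side t h o hne v x hinc).1 hσ⟩
          · rintro ⟨-, hh⟩
            have hinc := headUnder_incident t h o hh
            exact ⟨hinc, (alpha_side t h o hne v x hinc).2 hh⟩
      rw [hset]; exact hB v
  -- first exactly-one-change claim
  have hu1 : ∃! p : E × Bool, alpha o p ≠ σmid p := by
    refine ⟨(e, o e), ?_, ?_⟩
    · have h1 : alpha o (e, o e) = true := (alpha_true_iff o e (o e)).2 rfl
      have h2 : σmid (e, o e) = false := by simp [hσmid]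
      show alpha o (e, o e) ≠ σmid (e, o e)
      rw [h1, h2]; simp
    · rintro ⟨e', b⟩ hp
      by_cases hee : e' = e
      · subst hee
        have h2 : σmid (e', b) = false := by simp [hσmid]
        rw [h2] at hp
        have : alpha o (e', b) = true := by
          cases hval : alpha o (e', b)
          · exact absurd hval hp
          · rfl
        have hb : b = o e' := (alpha_true_iff o e' b).1 this
        rw [hb]
      · have h2 : σmid (e', b) = alpha o (e', b) := by simp [hσmid, hee]
        rw [h2] at hp
        exact absurd rfl hp
  -- second exactly-one-change claim
  have hu2 : ∃! p : E × Bool, σmid p ≠ alpha o' p := by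
    refine ⟨(e, o' e), ?_, ?_⟩
    · have h1 : alpha o' (e, o' e) = true := (alpha_true_iff o' e (o' e)).2 rfl
      have h2 : σmid (e, o' e) = false := by simp [hσmid]
      show σmid (e, o' e) ≠ alpha o' (e, o' e)
      rw [h1, h2]; simp
    · rintro ⟨e', b⟩ hp
      by_cases hee : e' = e
      · subst hee
        have h2 : σmid (e', b) = false := by simp [hσmid]
        rw [h2] at hp
        have : alpha o' (e', b) = true := by
          cases hval : alpha o' (e', b)
          · exact absurd hval.symm hp
          · rfl
        have hb : b = o' e' := (alpha_true_iff o' e' b).1 this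
        rw [hb]
      · have h2 : σmid (e', b) = alpha o (e', b) := by simp [hσmid, hee]
        have h3 : alpha o (e', b) = alpha o' (e', b) := by
          simp [alpha, hagree e' hee]
        rw [h2, h3] at hp
        exact absurd rfl hp
  refine ⟨hphimid, hu1, hu2, ?_⟩
  refine ⟨2, fun i => if i = 0 then alpha o else if i = 1 then σmid else alpha o',
    by simp, by simp, ?_, ?_⟩
  · intro i hi
    interval_cases i
    · simpa using phi_alpha t h blue hNCL o ho
    · simpa using hphimid
    · simpa using phi_alpha t h blue hNCL o' ho'
  · intro i hi
    interval_cases i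
    · simpa using hu1
    · simpa using hu2
end

section
/- Given an NCL structure and two feasible orientations o, o', if the assignments α(o) and α(o') are connected in G(Φ_G), then o and o' are NCL-reachable from one another. -/
open Finset

variable {V E : Type*}

/-- `p` is compatible with `σ`: every true literal of `σ` is realized by `p`. -/
def Compat (p : E → Bool) (σ : E × Bool → Bool) : Prop :=
  ∀ e b, σ (e, b) = true → p e = b

lemma compat_alpha (o : E → Bool) : Compat o (alpha o) := by
  intro e b hb
  cases b <;> simp [alpha] at hb <;> simp [hb]

lemma eq_of_compat_alpha {q o' : E → Bool} (hc : Compat q (alpha o')) : q = o' := by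
  funext e
  apply hc e (o' e)
  cases hb : o' e <;> simp [alpha, hb]

lemma head_eq_of_compat [DecidableEq V] (t h : E → V) (p : E → Bool) {v : V} {e : E}
    (hinc : Incident t h v e) (hpe : p e = side t h v e) :
    headUnder t h p e = v := by
  by_cases hv : h e = v
  · have : p e = true := by rw [hpe]; simp [side, hv]
    simp [headUnder, this, hv]
  · have : p e = false := by rw [hpe]; simp [side, hv]
    have ht : t e = v := by rcases hinc with h1 | h1; exact h1; exact absurd h1 hv
    simp [headUnder, this, ht]

lemma feasible_of_compat [Fintype E] [DecidableEq V] (t h : E → V) (blue : E → Bool)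
    (hNCL : NCLAxioms t h blue) {σ : E × Bool → Bool} {p : E → Bool}
    (hΦ : PhiG t h blue σ) (hc : Compat p σ) : Feasible t h blue p := by
  classical
  intro v
  obtain ⟨e₁, e₂, e₃, h12, h13, h23, hi1, hi2, hi3, hcomp, hcol⟩ := hNCL.2 v
  have hmem : ∀ e, Incident t h v e → σ (e, side t h v e) = true →
      e ∈ Finset.univ.filter (fun e => headUnder t h p e = v) := by
    intro e hinc hσ
    simp only [Finset.mem_filter, Finset.mem_univ, true_and]
    exact head_eq_of_compat t h p hinc (hc _ _ hσ)
  have hsingle : ∀ e, Incident t h v e → σ (e, side t h v e) = true → blue e = true →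
      2 ≤ ∑ e ∈ Finset.univ.filter (fun e => headUnder t h p e = v),
        (if blue e then 2 else 1) := by
    intro e hinc hσ hb
    calc (2 : ℕ) = if blue e then 2 else 1 := by simp [hb]
    _ ≤ _ := Finset.single_le_sum (f := fun e => if blue e then (2:ℕ) else 1)
        (fun i _ => by positivity) (hmem e hinc hσ)
  rcases hcol with ⟨hb1, hb2, hb3⟩ | ⟨hb1, hb2, hb3⟩
  · -- all blue
    obtain ⟨e, hinc, hσ⟩ := hΦ.2.1 v (by
      intro e he
      rcases hcomp e he with rfl | rfl | rfl <;> assumption)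
    have hb : blue e = true := by
      rcases hcomp e hinc with rfl | rfl | rfl <;> assumption
    exact hsingle e hinc hσ hb
  · -- one blue, two red
    rcases hΦ.2.2 v e₁ e₂ hi1 hb1 hi2 hb2 with hσ1 | hσ2
    · exact hsingle e₁ hi1 hσ1 hb1
    rcases hΦ.2.2 v e₁ e₃ hi1 hb1 hi3 hb3 with hσ1 | hσ3
    · exact hsingle e₁ hi1 hσ1 hb1
    have hsub : {e₂, e₃} ⊆ Finset.univ.filter (fun e => headUnder t h p e = v) := by
      intro e he
      rcases Finset.mem_insert.1 he with rfl | he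
      · exact hmem e hi2 hσ2
      · rw [Finset.mem_singleton] at he; subst he; exact hmem e hi3 hσ3
    calc (2 : ℕ) = ∑ e ∈ ({e₂, e₃} : Finset E), (if blue e then 2 else 1) := by
          rw [Finset.sum_pair h23]; simp [hb2, hb3]
    _ ≤ _ := Finset.sum_le_sum_of_subset hsub

lemma reach_refl [Fintype E] [DecidableEq V] (t h : E → V) (blue : E → Bool)
    {p : E → Bool} (hp : Feasible t h blue p) : NCLReachable t h blue p p := by
  refine ⟨0, fun _ => p, rfl, rfl, fun i _ => hp, fun i hi => absurd hi (by omega)⟩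

lemma reach_trans [Fintype E] [DecidableEq V] (t h : E → V) (blue : E → Bool)
    {p q r : E → Bool} (h1 : NCLReachable t h blue p q) (h2 : NCLReachable t h blue q r) :
    NCLReachable t h blue p r := by
  obtain ⟨n, f, hf0, hfn, hff, hfd⟩ := h1
  obtain ⟨m, g, hg0, hgm, hgf, hgd⟩ := h2
  refine ⟨n + m, fun i => if i < n then f i else g (i - n), ?_, ?_, ?_, ?_⟩
  · by_cases hn : 0 < n
    · simp [hn, hf0]
    · have : n = 0 := by omega
      subst this; simpa [hg0, ← hfn] using hf0 ▸ rfl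
  · have : ¬ (n + m < n) := by omega
    simp [this, hgm]
  · intro i hi
    by_cases hin : i < n
    · simp only [hin, if_pos]; exact hff i (by omega)
    · simp only [hin, if_neg, if_false]; exact hgf (i - n) (by omega)
  · intro i hi
    by_cases hin : i + 1 < n
    · have h' : i < n := by omega
      simpa [hin, h'] using hfd i h'
    · by_cases hin' : i < n
      · have : i + 1 = n := by omega
        have hgeq : g (i + 1 - n) = f (i + 1) := by
          rw [this]; simp [hg0, hfn]
        have hgeq' : g 0 = f (i + 1) := by rw [hg0, this, hfn]
        simpa [hin, hin', hgeq, hgeq'] using hfd i hin'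
      · have e1 : i - n + 1 = i + 1 - n := by omega
        have := hgd (i - n) (by omega)
        rw [e1] at this
        simpa [hin, hin'] using this

lemma reach_step [Fintype E] [DecidableEq V] (t h : E → V) (blue : E → Bool)
    {p q : E → Bool} (hp : Feasible t h blue p) (hq : Feasible t h blue q)
    (e0 : E) (hd : ∀ e, e ≠ e0 → q e = p e) : NCLReachable t h blue p q := by
  by_cases hpq : p = q
  · subst hpq; exact reach_refl t h blue hp
  · refine ⟨1, fun i => if i = 0 then p else q, by simp, by simp, ?_, ?_⟩
    · intro i hi
      interval_cases i <;> simp [hp, hq]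
    · intro i hi
      have : i = 0 := by omega
      subst this
      have hne : p e0 ≠ q e0 := by
        intro hcontra
        apply hpq
        funext e
        by_cases he : e = e0
        · subst he; exact hcontra
        · exact (hd e he).symm
      refine ⟨e0, by simpa using fun hc => hne hc, ?_⟩
      intro e he
      simp only [show (0:ℕ) ≠ 0 ↔ False from by simp, if_pos rfl] at he
      by_contra hee
      exact he (by simp [hd e hee])

lemma step_compat [DecidableEq V] (t h : E → V) (blue : E → Bool)
    {σ0 σ1 : E × Bool → Bool} (hΦ1 : PhiG t h blue σ1)
    (hdiff : ∃! x, σ0 x ≠ σ1 x) {p : E → Bool} (hc : Compat p σ0) :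
    ∃ q : E → Bool, Compat q σ1 ∧ ∃ e0, ∀ e, e ≠ e0 → q e = p e := by
  classical
  set q : E → Bool := fun e =>
    if σ1 (e, true) = true then true else if σ1 (e, false) = true then false else p e with hqdef
  obtain ⟨x0, hx0, hux⟩ := hdiff
  refine ⟨q, ?_, x0.1, ?_⟩
  · intro e b hb
    cases b
    · have h1 : σ1 (e, true) = false := by
        rcases hΦ1.1 e with h' | h'
        · exact h'
        · rw [h'] at hb; exact absurd hb (by simp)
      simp [hqdef, h1, hb]
    · simp [hqdef, hb]
  · intro e he
    have hsame : ∀ b, σ1 (e, b) = σ0 (e, b) := by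
      intro b
      by_contra hne
      have := hux (e, b) (fun hcc => hne hcc.symm)
      exact he (congrArg Prod.fst this)
    simp only [hqdef]
    by_cases h1 : σ1 (e, true) = true
    · rw [if_pos h1]
      exact (hc e true ((hsame true) ▸ h1)).symm
    · rw [if_neg h1]
      by_cases h2 : σ1 (e, false) = true
      · rw [if_pos h2]
        exact (hc e false ((hsame false) ▸ h2)).symm
      · rw [if_neg h2]

lemma key_lemma_s15 [Fintype E] [DecidableEq V] (t h : E → V) (blue : E → Bool)
    (hNCL : NCLAxioms t h blue) :
    ∀ (n : ℕ) (f : ℕ → E × Bool → Bool), (∀ i ≤ n, PhiG t h blue (f i)) →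
      (∀ i < n, ∃! x, f i x ≠ f (i + 1) x) →
      ∀ p : E → Bool, Feasible t h blue p → Compat p (f 0) →
      ∃ q, Compat q (f n) ∧ NCLReachable t h blue p q := by
  intro n
  induction n with
  | zero => exact fun f _ _ p hp hc => ⟨p, hc, reach_refl t h blue hp⟩
  | succ n ih =>
    intro f hΦ hdiff p hp hc
    obtain ⟨q, hcq, e0, hd⟩ := step_compat t h blue (hΦ 1 (by omega)) (hdiff 0 (by omega)) hc
    have hq : Feasible t h blue q := feasible_of_compat t h blue hNCL (hΦ 1 (by omega)) hcq
    obtain ⟨r, hcr, hreach⟩ := ih (fun i => f (i + 1)) (fun i hi => hΦ (i + 1) (by omega))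
      (fun i hi => hdiff (i + 1) (by omega)) q hq hcq
    exact ⟨r, hcr, reach_trans t h blue (reach_step t h blue hp hq e0 hd) hreach⟩

theorem stmt_15 [Fintype E] [DecidableEq V] (t h : E → V) (blue : E → Bool)
    (hNCL : NCLAxioms t h blue) (o o' : E → Bool)
    (ho : Feasible t h blue o) (ho' : Feasible t h blue o')
    (hconn : ConnectedIn (PhiG t h blue) (alpha o) (alpha o')) :
    NCLReachable t h blue o o' := by
  obtain ⟨n, f, hf0, hfn, hΦ, hdiff⟩ := hconn
  obtain ⟨q, hcq, hreach⟩ := key_lemma_s15 t h blue hNCL n f hΦ hdiff o ho (hf0 ▸ compat_alpha o)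
  rw [hfn] at hcq
  rwa [eq_of_compat_alpha hcq] at hreach
end

section
/- Given an NCL structure and two feasible orientations o, o': o and o' are NCL-reachable from one another if and only if the assignments α(o) and α(o') are connected in G(Φ_G). (This is the correctness of the reduction underlying the PSPACE-hardness of reconfiguration of Monotone-Planar-3-SAT.) -/
open Finset

variable {V E : Type*}

section Chains

variable {X : Type*} {P : (X → Bool) → Prop}

lemma chain_refl {a : X → Bool} (ha : P a) : ConnectedIn P a a :=
  ⟨0, fun _ => a, rfl, rfl, fun _ _ => ha, fun i hi => absurd hi (Nat.not_lt_zero i)⟩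

lemma chain_single {a b : X → Bool} (ha : P a) (hb : P b)
    (hd : ∃! x, a x ≠ b x) : ConnectedIn P a b := by
  refine ⟨1, fun i => if i = 0 then a else b, by simp, by simp, ?_, ?_⟩
  · intro i hi
    rcases Nat.le_one_iff_eq_zero_or_eq_one.mp hi with rfl | rfl
    · simpa using ha
    · simpa using hb
  · intro i hi
    have hiz : i = 0 := by omega
    subst hiz
    simpa using hd

lemma chain_trans {a b c : X → Bool} (h1 : ConnectedIn P a b) (h2 : ConnectedIn P b c) :
    ConnectedIn P a c := by
  obtain ⟨n, f, hf0, hfn, hfP, hfd⟩ := h1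
  obtain ⟨m, g, hg0, hgm, hgP, hgd⟩ := h2
  refine ⟨n + m, fun i => if i ≤ n then f i else g (i - n), by simp [hf0], ?_, ?_, ?_⟩
  · by_cases hm : n + m ≤ n
    · have hm0 : m = 0 := by omega
      subst hm0
      have hbc : b = c := by rw [← hg0, hgm]
      simpa [hbc] using hfn
    · simp only [hm, if_neg, not_false_iff]
      rw [show n + m - n = m by omega, hgm]
  · intro i hi
    by_cases hin : i ≤ n
    · simpa [hin] using hfP i hin
    · simpa [hin] using hgP (i - n) (by omega)
  · intro i hi
    by_cases h1' : i + 1 ≤ n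
    · have h0 : i ≤ n := by omega
      simpa [h0, h1'] using hfd i (by omega)
    · by_cases h0 : i ≤ n
      · have hieq : i = n := by omega
        subst hieq
        have hm : 0 < m := by omega
        have hb : f i = g 0 := by rw [hfn, hg0]
        simpa [h0, h1', hb, Nat.add_sub_cancel_left] using hgd 0 hm
      · have harith : i - n + 1 = i + 1 - n := by omega
        simpa [h0, h1', harith] using hgd (i - n) (by omega)

lemma diff_symm {a b : X → Bool} (hd : ∃! x, a x ≠ b x) : ∃! x, b x ≠ a x := by
  obtain ⟨x, hx, hu⟩ := hd
  exact ⟨x, hx.symm, fun y hy => hu y hy.symm⟩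

end Chains

section NCL

variable [DecidableEq V]

lemma head_of_lit {t h : E → V} {o : E → Bool} {v : V} {e : E}
    (hinc : Incident t h v e) (hlit : alpha o (e, side t h v e) = true) :
    headUnder t h o e = v := by
  unfold Incident at hinc
  unfold alpha side headUnder at *
  by_cases hv : h e = v <;> by_cases ho : o e <;> simp_all

lemma lit_of_head {t h : E → V} {o : E → Bool} {v : V} {e : E}
    (hne : t e ≠ h e) (hd : headUnder t h o e = v) :
    Incident t h v e ∧ alpha o (e, side t h v e) = true := by
  unfold Incident alpha side headUnder at *
  by_cases ho : o e <;> by_cases hv : h e = v <;> simp_all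

lemma head_incident {t h : E → V} {o : E → Bool} {v : V} {e : E}
    (hd : headUnder t h o e = v) : Incident t h v e := by
  unfold headUnder at hd
  unfold Incident
  by_cases ho : o e <;> simp_all

lemma feas_phi [Fintype E] {t h : E → V} {blue : E → Bool}
    (hNCL : NCLAxioms t h blue) {o : E → Bool} (ho : Feasible t h blue o) :
    PhiG t h blue (alpha o) := by
  obtain ⟨hne, hvert⟩ := hNCL
  refine ⟨?_, ?_, ?_⟩
  · intro e
    by_cases hoe : o e <;> simp [alpha, hoe]
  · intro v _
    have hnonempty : (Finset.univ.filter fun e => headUnder t h o e = v).Nonempty := by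
      by_contra hc
      rw [Finset.not_nonempty_iff_eq_empty] at hc
      have h2 := ho v
      rw [hc] at h2
      simp at h2
    obtain ⟨e, he⟩ := hnonempty
    rw [Finset.mem_filter] at he
    obtain ⟨hi, hl⟩ := lit_of_head (hne e) he.2
    exact ⟨e, hi, hl⟩
  · intro v bl r hibl hbbl hir hbr
    by_contra hcon
    push_neg at hcon
    obtain ⟨hl1, hl2⟩ := hcon
    have hblh : headUnder t h o bl ≠ v := fun hd => hl1 ((lit_of_head (hne bl) hd).2)
    have hrh : headUnder t h o r ≠ v := fun hd => hl2 ((lit_of_head (hne r) hd).2)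
    obtain ⟨e₁, e₂, e₃, h12, h13, h23, hi1, hi2, hi3, hcover, hcolor⟩ := hvert v
    rcases hcolor with ⟨b1, b2, b3⟩ | ⟨b1, b2, b3⟩
    · rcases hcover r hir with rfl | rfl | rfl <;> simp_all
    · have hsub : ∀ r', blue r' = false → (∀ e, headUnder t h o e = v → e = r') → False := by
        intro r' hb' hcov'
        have hss : (Finset.univ.filter fun e => headUnder t h o e = v) ⊆ {r'} := by
          intro e hemem
          rw [Finset.mem_filter] at hemem
          rw [Finset.mem_singleton]
          exact hcov' e hemem.2
        have hs2 := Finset.sum_le_sum_of_subset (f := fun e => if blue e then (2:ℕ) else 1) hss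
        rw [Finset.sum_singleton, hb'] at hs2
        have h2 := ho v
        simp at hs2
        omega
      have hblE : bl = e₁ := by rcases hcover bl hibl with rfl | rfl | rfl <;> simp_all
      subst hblE
      rcases hcover r hir with rfl | rfl | rfl
      · simp_all
      · refine hsub e₃ b3 ?_
        intro e hdv
        rcases hcover e (head_incident hdv) with rfl | rfl | rfl
        · exact absurd hdv hblh
        · exact absurd hdv hrh
        · rfl
      · refine hsub e₂ b2 ?_
        intro e hdv
        rcases hcover e (head_incident hdv) with rfl | rfl | rfl
        · exact absurd hdv hblh
        · rfl
        · exact absurd hdv hrh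

lemma phi_feas [Fintype E] {t h : E → V} {blue : E → Bool}
    (hNCL : NCLAxioms t h blue) {σ : E × Bool → Bool} (hσ : PhiG t h blue σ) :
    Feasible t h blue (fun e => !σ (e, false)) := by
  classical
  obtain ⟨hne, hvert⟩ := hNCL
  obtain ⟨hc1, hc2, hc3⟩ := hσ
  set o : E → Bool := fun e => !σ (e, false) with ho_def
  have hkey : ∀ v e, Incident t h v e → σ (e, side t h v e) = true →
      headUnder t h o e = v := by
    intro v e hinc hlit
    apply head_of_lit hinc
    cases hs : side t h v e with
    | true =>
      rw [hs] at hlit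
      rcases hc1 e with hcf | hcf
      · rw [hlit] at hcf; simp at hcf
      · simp [alpha, ho_def, hcf]
    | false =>
      rw [hs] at hlit
      simp [alpha, ho_def, hlit]
  intro v
  obtain ⟨e₁, e₂, e₃, h12, h13, h23, hi1, hi2, hi3, hcover, hcolor⟩ := hvert v
  have hblue2 : ∀ e, Incident t h v e → blue e = true → σ (e, side t h v e) = true →
      2 ≤ ∑ e ∈ Finset.univ.filter (fun e => headUnder t h o e = v),
        (if blue e then 2 else 1) := by
    intro e hei hbe hel
    have hmem : e ∈ Finset.univ.filter (fun e => headUnder t h o e = v) := by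
      simp [Finset.mem_filter, hkey v e hei hel]
    have hle := Finset.single_le_sum (f := fun e => if blue e then (2:ℕ) else 1)
      (fun i _ => Nat.zero_le _) hmem
    simpa [hbe] using hle
  rcases hcolor with ⟨b1, b2, b3⟩ | ⟨b1, b2, b3⟩
  · have hall : ∀ e, Incident t h v e → blue e = true := by
      intro e hi
      rcases hcover e hi with rfl | rfl | rfl <;> assumption
    obtain ⟨e, hei, hel⟩ := hc2 v hall
    exact hblue2 e hei (hall e hei) hel
  · rcases hc3 v e₁ e₂ hi1 b1 hi2 b2 with h1 | h2
    · exact hblue2 e₁ hi1 b1 h1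
    · rcases hc3 v e₁ e₃ hi1 b1 hi3 b3 with h1 | h3
      · exact hblue2 e₁ hi1 b1 h1
      · have hss : ({e₂, e₃} : Finset E) ⊆
            Finset.univ.filter (fun e => headUnder t h o e = v) := by
          intro e he
          rcases Finset.mem_insert.mp he with rfl | he
          · simp [Finset.mem_filter, hkey v e hi2 h2]
          · rw [Finset.mem_singleton] at he
            subst he
            simp [Finset.mem_filter, hkey v e hi3 h3]
        have hsum := Finset.sum_le_sum_of_subset
          (f := fun e => if blue e then (2:ℕ) else 1) hss
        rw [Finset.sum_pair h23, b2, b3] at hsum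
        simpa using hsum

lemma mid_phi [Fintype E] [DecidableEq E] {t h : E → V} {blue : E → Bool}
    (hNCL : NCLAxioms t h blue) {o o' : E → Bool} (ho : Feasible t h blue o)
    (ho' : Feasible t h blue o') (e0 : E) (hne0 : o e0 ≠ o' e0)
    (hag : ∀ e, e ≠ e0 → o e = o' e) :
    PhiG t h blue (fun p => if p.1 = e0 then false else alpha o p) := by
  have hp := feas_phi hNCL ho
  have hp' := feas_phi hNCL ho'
  have hagα : ∀ p : E × Bool, p.1 ≠ e0 → alpha o p = alpha o' p := by
    intro p hp0
    simp [alpha, hag p.1 hp0]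
  have hor : ∀ b : Bool, alpha o (e0, b) = false ∨ alpha o' (e0, b) = false := by
    intro b
    have hno : o' e0 = !o e0 := by revert hne0; cases hoe : o e0 <;> cases hoe' : o' e0 <;> simp
    cases b <;> cases hoe : o e0 <;> simp [alpha, hno, hoe]
  refine ⟨?_, ?_, ?_⟩
  · intro e
    by_cases he : e = e0
    · subst he; left; simp
    · simpa [he] using hp.1 e
  · intro v hall
    rcases hor (side t h v e0) with hf | hf
    · obtain ⟨e, hei, hel⟩ := hp.2.1 v hall
      have hee0 : e ≠ e0 := by
        rintro rfl
        rw [hf] at hel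
        simp at hel
      exact ⟨e, hei, by simpa [hee0] using hel⟩
    · obtain ⟨e, hei, hel⟩ := hp'.2.1 v hall
      have hee0 : e ≠ e0 := by
        rintro rfl
        rw [hf] at hel
        simp at hel
      have hcongr := hagα (e, side t h v e) hee0
      exact ⟨e, hei, by simpa [hee0, hcongr] using hel⟩
  · intro v bl r hibl hbbl hir hbr
    rcases hor (side t h v e0) with hf | hf
    · rcases hp.2.2 v bl r hibl hbbl hir hbr with h1 | h1
      · left
        have hbe : bl ≠ e0 := by rintro rfl; rw [hf] at h1; simp at h1
        simpa [hbe] using h1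
      · right
        have hre : r ≠ e0 := by rintro rfl; rw [hf] at h1; simp at h1
        simpa [hre] using h1
    · rcases hp'.2.2 v bl r hibl hbbl hir hbr with h1 | h1
      · left
        have hbe : bl ≠ e0 := by rintro rfl; rw [hf] at h1; simp at h1
        have hcongr := hagα (bl, side t h v bl) hbe
        simpa [hbe, hcongr] using h1
      · right
        have hre : r ≠ e0 := by rintro rfl; rw [hf] at h1; simp at h1
        have hcongr := hagα (r, side t h v r) hre
        simpa [hre, hcongr] using h1

lemma diff_mid [DecidableEq E] {o : E → Bool} (e0 : E) :
    ∃! x : E × Bool,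
      alpha o x ≠ (fun p : E × Bool => if p.1 = e0 then false else alpha o p) x := by
  refine ⟨(e0, o e0), ?_, ?_⟩
  · cases hfe : o e0 <;> simp [alpha, hfe]
  · rintro ⟨e, b⟩ hdiff
    by_cases hee : e = e0
    · subst hee
      cases b <;> cases hfe : o e <;> simp_all [alpha]
    · simp [alpha, hee] at hdiff

end NCL

theorem stmt_16 [Fintype E] [DecidableEq V] (t h : E → V) (blue : E → Bool)
    (hNCL : NCLAxioms t h blue) (o o' : E → Bool)
    (ho : Feasible t h blue o) (ho' : Feasible t h blue o') :
    NCLReachable t h blue o o' ↔ ConnectedIn (PhiG t h blue) (alpha o) (alpha o') := by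
  classical
  constructor
  · rintro ⟨n, f, hf0, hfn, hfP, hfd⟩
    have key : ∀ i, i ≤ n → ConnectedIn (PhiG t h blue) (alpha o) (alpha (f i)) := by
      intro i
      induction i with
      | zero =>
        intro _
        rw [hf0]
        exact chain_refl (feas_phi hNCL ho)
      | succ i ih =>
        intro hin
        have hi : i < n := hin
        refine chain_trans (ih hi.le) ?_
        obtain ⟨e0, he0, hu⟩ := hfd i hi
        have hag : ∀ e, e ≠ e0 → f i e = f (i + 1) e := by
          intro e hee
          by_contra hc
          exact hee (hu e hc)
        set σmid : E × Bool → Bool := fun p => if p.1 = e0 then false else alpha (f i) p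
          with hσdef
        have hmidphi : PhiG t h blue σmid :=
          mid_phi hNCL (hfP i hi.le) (hfP (i + 1) hin) e0 he0 hag
        have hσalt : σmid = fun p => if p.1 = e0 then false else alpha (f (i + 1)) p := by
          funext p
          by_cases hp : p.1 = e0
          · simp [hσdef, hp]
          · simp [hσdef, hp, alpha, hag p.1 hp]
        have hstep1 : ConnectedIn (PhiG t h blue) (alpha (f i)) σmid :=
          chain_single (feas_phi hNCL (hfP i hi.le)) hmidphi (by rw [hσdef]; exact diff_mid e0)
        have hstep2 : ConnectedIn (PhiG t h blue) σmid (alpha (f (i + 1))) :=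
          chain_single hmidphi (feas_phi hNCL (hfP (i + 1) hin))
            (by rw [hσalt]; exact diff_symm (diff_mid e0))
        exact chain_trans hstep1 hstep2
    have hres := key n le_rfl
    rw [hfn] at hres
    exact hres
  · rintro ⟨n, f, hf0, hfn, hfP, hfd⟩
    have key : ∀ i, i ≤ n →
        NCLReachable t h blue o (fun e => !f i (e, false)) := by
      intro i
      induction i with
      | zero =>
        intro _
        have hrw : (fun e => !f 0 (e, false)) = o := by
          funext e
          rw [hf0]
          simp [alpha]
        rw [hrw]
        exact chain_refl ho
      | succ i ih =>
        intro hin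
        have hi : i < n := hin
        obtain ⟨⟨e0, b0⟩, hx, hu⟩ := hfd i hi
        cases b0 with
        | true =>
          have heq : (fun e => !f (i + 1) (e, false)) = fun e => !f i (e, false) := by
            funext e
            have hsame : f i (e, false) = f (i + 1) (e, false) := by
              by_contra hc
              have := hu (e, false) hc
              simp at this
            rw [hsame]
          rw [heq]
          exact ih hi.le
        | false =>
          refine chain_trans (ih hi.le)
            (chain_single (phi_feas hNCL (hfP i hi.le)) (phi_feas hNCL (hfP (i + 1) hin)) ?_)
          refine ⟨e0, ?_, ?_⟩
          · intro hc
            exact hx (Bool.not_inj hc)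
          · intro e hdiff
            have hsame : f i (e, false) ≠ f (i + 1) (e, false) := by
              intro hc
              exact hdiff (congrArg (fun b => !b) hc)
            have := hu (e, false) hsame
            simpa using this
    have hres := key n le_rfl
    have hrw : (fun e => !f n (e, false)) = o' := by
      funext e
      rw [hfn]
      simp [alpha]
    rw [hrw] at hres
    exact hres
end
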